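/- arXiv:2306.13517 — 13 statements merged into one kernel-verified Lean document; each statement's English description precedes it below -/
import Mathlib

section
/- Let m and d be positive integers with d ≥ 2, and let K be a convex body in ℝ^d. Then the m-fold illumination number of K satisfies I^m(K) ≥ 2m + (d − 1). -/
open scoped Classical RealInnerProductSpace

noncomputable section

/-- The direction `u` illuminates the boundary point `p` with respect to `K`:
there is `l > 0` with `p + l • u` in the interior of `K`. -/
def Illuminates {d : ℕ} (K : Set (EuclideanSpace ℝ (Fin d)))
    (u p : EuclideanSpace ℝ (Fin d)) : Prop :=
  ∃ l : ℝ, 0 < l ∧ p + l • u ∈ interior K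

/-- A multiset `U` of unit directions `m`-fold illuminates `K`:
each boundary point is illuminated by at least `m` elements of `U`
(counted with multiplicity). -/
def MFoldIlluminates {d : ℕ} (m : ℕ) (K : Set (EuclideanSpace ℝ (Fin d)))
    (U : Multiset (EuclideanSpace ℝ (Fin d))) : Prop :=
  (∀ u ∈ U, ‖u‖ = 1) ∧
    ∀ p ∈ frontier K, m ≤ Multiset.countP (fun u => Illuminates K u p) U

/-- The `m`-fold illumination number of `K`: the smallest total multiplicity of a
multiset of unit directions that `m`-fold illuminates `K`. -/
def illumNum {d : ℕ} (m : ℕ) (K : Set (EuclideanSpace ℝ (Fin d))) : ℕ :=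
  sInf {n | ∃ U : Multiset (EuclideanSpace ℝ (Fin d)),
    MFoldIlluminates m K U ∧ Multiset.card U = n}

/-- countP is monotone in the predicate. -/
lemma my_countP_mono {α : Type*} (s : Multiset α) (P Q : α → Prop)
    (h : ∀ a ∈ s, P a → Q a) : Multiset.countP P s ≤ Multiset.countP Q s := by
  induction s using Multiset.induction_on with
  | empty => simp
  | cons a t ih =>
    simp only [Multiset.countP_cons]
    have ht := ih (fun a ha => h a (Multiset.mem_cons_of_mem ha))
    have hb : (if P a then 1 else 0) ≤ (if Q a then 1 else 0) := by
      have := h a (Multiset.mem_cons_self a t)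
      split_ifs with h1 h2 <;> simp_all
    omega

/-- Three pairwise exclusive predicates count at most the cardinality. -/
lemma my_countP_three_le {α : Type*} (s : Multiset α) (P Q R : α → Prop)
    (h : ∀ a, ¬(P a ∧ Q a) ∧ ¬(P a ∧ R a) ∧ ¬(Q a ∧ R a)) :
    Multiset.countP P s + Multiset.countP Q s + Multiset.countP R s ≤ Multiset.card s := by
  induction s using Multiset.induction_on with
  | empty => simp
  | cons a t ih =>
    simp only [Multiset.countP_cons, Multiset.card_cons]
    have hb : (if P a then 1 else 0) + (if Q a then 1 else 0) + (if R a then 1 else 0) ≤ 1 := by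
      obtain ⟨hPQ, hPR, hQR⟩ := h a
      split_ifs <;> simp_all
    omega

/-- Existence of a sub-multiset of any cardinality up to the total. -/
lemma my_exists_sub {α : Type*} (s : Multiset α) (k : ℕ) (hk : k ≤ Multiset.card s) :
    ∃ t ≤ s, Multiset.card t = k := by
  obtain ⟨l, rfl⟩ : ∃ l : List α, (l : Multiset α) = s := ⟨s.toList, s.coe_toList⟩
  refine ⟨((l.take k : List α) : Multiset α), ?_, ?_⟩
  · exact Multiset.coe_le.2 (l.take_sublist k).subperm
  · simpa using le_trans hk (by simp)

/-- Existence of a nonzero vector orthogonal to a small multiset of vectors. -/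
lemma my_exists_orthogonal {d : ℕ} (T : Multiset (EuclideanSpace ℝ (Fin d)))
    (hT : Multiset.card T < d) :
    ∃ f : EuclideanSpace ℝ (Fin d), f ≠ 0 ∧ ∀ u ∈ T, ⟪f, u⟫ = 0 := by
  set W : Submodule ℝ (EuclideanSpace ℝ (Fin d)) :=
    Submodule.span ℝ (T.toFinset : Set (EuclideanSpace ℝ (Fin d))) with hW
  have hrank : Module.finrank ℝ W < d := by
    have h1 := finrank_span_finset_le_card (R := ℝ) T.toFinset
    have h2 : T.toFinset.card ≤ Multiset.card T := Multiset.toFinset_card_le T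
    have : Module.finrank ℝ W ≤ T.toFinset.card := h1
    omega
  have hWne : W ≠ ⊤ := by
    intro h
    rw [h] at hrank
    have : Module.finrank ℝ (⊤ : Submodule ℝ (EuclideanSpace ℝ (Fin d))) = d := by
      rw [finrank_top]; exact finrank_euclideanSpace_fin
    omega
  have hbot : Wᗮ ≠ ⊥ := by
    intro h
    exact hWne (Submodule.orthogonal_eq_bot_iff.1 h)
  obtain ⟨f, hfW, hf0⟩ := Submodule.exists_mem_ne_zero_of_ne_bot hbot
  refine ⟨f, hf0, fun u hu => ?_⟩
  have huW : u ∈ W := Submodule.subset_span (by simpa using hu)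
  have := (Submodule.mem_orthogonal W f).1 hfW u huW
  rwa [real_inner_comm] at this

/-- At a maximum point of a linear functional, all illuminating directions
have negative inner product with the functional. -/
lemma my_count_neg_ge {d : ℕ} {K : Set (EuclideanSpace ℝ (Fin d))}
    (hKc : IsCompact K) (hKne : K.Nonempty) {m : ℕ}
    {U : Multiset (EuclideanSpace ℝ (Fin d))} (hU : MFoldIlluminates m K U)
    (f : EuclideanSpace ℝ (Fin d)) (hf : f ≠ 0) :
    m ≤ Multiset.countP (fun u => ⟪f, u⟫ < 0) U := by
  have hcont : Continuous fun q : EuclideanSpace ℝ (Fin d) => ⟪f, q⟫ :=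
    continuous_const.inner continuous_id
  obtain ⟨p, hpK, hmax⟩ := hKc.exists_isMaxOn hKne hcont.continuousOn
  -- every interior point has strictly smaller functional value
  have hstrict : ∀ q ∈ interior K, ⟪f, q⟫ < ⟪f, p⟫ := by
    intro q hq
    obtain ⟨ε, hε, hball⟩ := Metric.isOpen_iff.1 isOpen_interior q hq
    set c : ℝ := ε / (2 * ‖f‖) with hc
    have hfpos : 0 < ‖f‖ := norm_pos_iff.2 hf
    have hcpos : 0 < c := by positivity
    have hq' : q + c • f ∈ K := by
      apply interior_subset
      apply hball
      rw [Metric.mem_ball, dist_eq_norm]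
      have : q + c • f - q = c • f := by abel
      rw [this, norm_smul, Real.norm_eq_abs, abs_of_pos hcpos]
      rw [hc]
      rw [div_mul_eq_mul_div]
      rw [div_lt_iff₀ (by positivity)]
      nlinarith
    have hle : ⟪f, q + c • f⟫ ≤ ⟪f, p⟫ := hmax hq'
    rw [inner_add_right, real_inner_smul_right, real_inner_self_eq_norm_sq] at hle
    have hpos : 0 < c * ‖f‖ ^ 2 := by positivity
    linarith
  have hpfront : p ∈ frontier K := by
    rw [hKc.isClosed.frontier_eq]
    refine ⟨hpK, fun hpint => ?_⟩
    exact absurd (hstrict p hpint) (lt_irrefl _)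
  have hcount := hU.2 p hpfront
  refine le_trans hcount (my_countP_mono _ _ _ ?_)
  rintro u _ ⟨l, hl, hmem⟩
  have := hstrict _ hmem
  rw [inner_add_right, real_inner_smul_right] at this
  nlinarith

/-- The set {q | u illuminates q} is open. -/
lemma my_illuminates_open {d : ℕ} (K : Set (EuclideanSpace ℝ (Fin d)))
    (u : EuclideanSpace ℝ (Fin d)) : IsOpen {q | Illuminates K u q} := by
  rw [isOpen_iff_forall_mem_open]
  rintro q ⟨l, hl, hmem⟩
  refine ⟨(fun q' => q' + l • u) ⁻¹' interior K, ?_, ?_, hmem⟩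
  · intro q' hq'
    exact ⟨l, hl, hq'⟩
  · exact isOpen_interior.preimage (continuous_id.add continuous_const)

/-- Construction: some multiset m-fold illuminates a convex body. -/
lemma my_exists_mfold {d m : ℕ} (hd : 1 ≤ d) (K : Set (EuclideanSpace ℝ (Fin d)))
    (hKc : IsCompact K) (hKint : (interior K).Nonempty) :
    ∃ U : Multiset (EuclideanSpace ℝ (Fin d)), MFoldIlluminates m K U := by
  obtain ⟨x₀, hx₀⟩ := hKint
  have : NeZero d := ⟨by omega⟩
  set e : EuclideanSpace ℝ (Fin d) := EuclideanSpace.single ⟨0, by omega⟩ (1 : ℝ) with he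
  set u : EuclideanSpace ℝ (Fin d) → EuclideanSpace ℝ (Fin d) :=
    fun p => if x₀ = p then e else ‖x₀ - p‖⁻¹ • (x₀ - p) with hu
  have hunit : ∀ p, ‖u p‖ = 1 := by
    intro p
    by_cases h : x₀ = p
    · have hup : u p = e := by simp [hu, h]
      rw [hup, he]
      simp
    · have hup : u p = ‖x₀ - p‖⁻¹ • (x₀ - p) := by simp [hu, h]
      have hne : x₀ - p ≠ 0 := sub_ne_zero.2 h
      rw [hup, norm_smul, norm_inv, norm_norm, inv_mul_cancel₀ (norm_ne_zero_iff.2 hne)]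
  have hfc : IsCompact (frontier K) :=
    hKc.of_isClosed_subset isClosed_frontier
      (by rw [hKc.isClosed.frontier_eq]; exact Set.diff_subset)
  have hcover : frontier K ⊆ ⋃ i : EuclideanSpace ℝ (Fin d), {q | Illuminates K (u i) q} := by
    intro q hq
    have hqint : q ∉ interior K := by
      rw [hKc.isClosed.frontier_eq] at hq; exact hq.2
    have hne : x₀ ≠ q := fun h => hqint (h ▸ hx₀)
    have hne' : x₀ - q ≠ 0 := sub_ne_zero.2 hne
    refine Set.mem_iUnion.2 ⟨q, ⟨‖x₀ - q‖, norm_pos_iff.2 hne', ?_⟩⟩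
    have : u q = ‖x₀ - q‖⁻¹ • (x₀ - q) := by simp [hu, hne]
    rw [this, smul_smul, mul_inv_cancel₀ (norm_ne_zero_iff.2 hne'), one_smul]
    have : q + (x₀ - q) = x₀ := by abel
    rw [this]; exact hx₀
  obtain ⟨t, ht⟩ := hfc.elim_finite_subcover _
    (fun i => my_illuminates_open K (u i)) hcover
  refine ⟨m • t.val.map u, ?_, ?_⟩
  · intro v hv
    rw [Multiset.mem_nsmul] at hv
    · obtain ⟨i, _, rfl⟩ := Multiset.mem_map.1 hv.2
      exact hunit i
  · intro p hp
    rw [Multiset.countP_nsmul]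
    have h1 : 0 < Multiset.countP (fun v => Illuminates K v p) (t.val.map u) := by
      rw [Multiset.countP_pos]
      obtain ⟨i, hit, hilli⟩ := Set.mem_iUnion₂.1 (ht hp)
      exact ⟨u i, Multiset.mem_map.2 ⟨i, hit, rfl⟩, hilli⟩
    calc m = m * 1 := (mul_one m).symm
    _ ≤ m * Multiset.countP (fun v => Illuminates K v p) (t.val.map u) :=
        Nat.mul_le_mul_left m h1

/-- Theorem 1 (lower bound): for any convex body `K` in `ℝ^d` (`d ≥ 2`) and
positive integer `m`, `I^m(K) ≥ 2m + (d - 1)`. -/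
theorem mfold_illumination_lower_bound (m d : ℕ) (hm : 1 ≤ m) (hd : 2 ≤ d)
    (K : Set (EuclideanSpace ℝ (Fin d)))
    (hKc : IsCompact K) (hKconv : Convex ℝ K) (hKint : (interior K).Nonempty) :
    2 * m + (d - 1) ≤ illumNum m K := by
  have hKne : K.Nonempty := hKint.mono interior_subset
  obtain ⟨U₀, hU₀⟩ := my_exists_mfold (by omega) K hKc hKint
  have hSne : {n | ∃ U : Multiset (EuclideanSpace ℝ (Fin d)),
      MFoldIlluminates m K U ∧ Multiset.card U = n}.Nonempty :=
    ⟨Multiset.card U₀, U₀, hU₀, rfl⟩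
  obtain ⟨U, hU, hcard⟩ := Nat.sInf_mem hSne
  rw [illumNum, ← hcard]
  -- lower-bound the cardinality of U
  set k : ℕ := min (Multiset.card U) (d - 1) with hk
  obtain ⟨T, hTU, hTcard⟩ := my_exists_sub U k (min_le_left _ _)
  obtain ⟨f, hf0, hforth⟩ := my_exists_orthogonal T (by omega)
  have h1 : m ≤ Multiset.countP (fun v => ⟪f, v⟫ < 0) U :=
    my_count_neg_ge hKc hKne hU f hf0
  have h2' : m ≤ Multiset.countP (fun v => ⟪-f, v⟫ < 0) U :=
    my_count_neg_ge hKc hKne hU (-f) (neg_ne_zero.2 hf0)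
  have h2 : m ≤ Multiset.countP (fun v => 0 < ⟪f, v⟫) U := by
    refine le_trans h2' (le_of_eq (Multiset.countP_congr rfl ?_))
    intro v _
    simp only [inner_neg_left, eq_iff_iff]
    constructor <;> intro h <;> linarith
  have h3 : k ≤ Multiset.countP (fun v => ⟪f, v⟫ = 0) U := by
    calc k = Multiset.card T := hTcard.symm
    _ = Multiset.countP (fun v => ⟪f, v⟫ = 0) T :=
        (Multiset.countP_eq_card.2 hforth).symm
    _ ≤ Multiset.countP (fun v => ⟪f, v⟫ = 0) U := Multiset.countP_le_of_le _ hTU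
  have h4 := my_countP_three_le U (fun v => ⟪f, v⟫ < 0) (fun v => 0 < ⟪f, v⟫)
    (fun v => ⟪f, v⟫ = 0) (by intro a; refine ⟨?_, ?_, ?_⟩ <;> rintro ⟨ha, hb⟩ <;> linarith)
  omega

end
end

section
/- Let m be a positive integer and let K be a convex body in ℝ^2 whose boundary is smooth, i.e., K has a unique supporting line at each of its boundary points. Then the m-fold illumination number of K satisfies I^m(K) = 2m + 1. -/
open scoped Classical RealInnerProductSpace

noncomputable section

/-!
For the lower bound, pick `u₁ ∈ U` and a nonzero `v ⊥ u₁`. The directions illuminating the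
point of `K` where `⟪·, v⟫` is maximal satisfy `⟪u, v⟫ < 0`, those illuminating the point
where it is minimal satisfy `⟪u, v⟫ > 0`, and `u₁` satisfies neither; so `|U| ≥ m + m + 1`,
in every dimension `d ≥ 2`.

For the upper bound, separating `K` from the ray `p + ℝ≥0 • u` shows that at a boundary point
with a unique outer unit normal `n`, every `u` with `⟪u, n⟫ < 0` illuminates `p`. The vertices
of a regular `(2m+1)`-gon then suffice: every open half-plane through the origin contains `m`
of them, because an open arc of length `π` contains `m` consecutive multiples of `2π / (2m+1)`.
-/

namespace Multiset

variable {α : Type*} {p q : α → Prop} [DecidablePred p] [DecidablePred q] {s : Multiset α}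

theorem countP_mono_left (h : ∀ a ∈ s, p a → q a) : countP p s ≤ countP q s := by
  induction s using Quotient.inductionOn with
  | h l => simpa using List.countP_mono_left (l := l) (p := (p ·)) (q := (q ·)) (by simpa using h)

theorem countP_add_countP_lt_card (hpq : ∀ a ∈ s, p a → ¬q a) {a : α} (ha : a ∈ s)
    (hpa : ¬p a) (hqa : ¬q a) : countP p s + countP q s < card s := by
  have hq : countP q s = countP q (s.filter fun x => ¬p x) := by
    rw [countP_filter]
    exact countP_congr rfl fun x hx =>
      propext ⟨fun hqx => ⟨hqx, fun hpx => hpq x hx hpx hqx⟩, And.left⟩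
  have hrest : 0 < countP (fun x => ¬q x) (s.filter fun x => ¬p x) :=
    countP_pos_of_mem (mem_filter.2 ⟨ha, hpa⟩) hqa
  rw [card_eq_countP_add_countP p s, countP_eq_card_filter (fun x => ¬p x),
    card_eq_countP_add_countP q, hq]
  omega

end Multiset

section InnerProductSpace

variable {E : Type*} [NormedAddCommGroup E] [InnerProductSpace ℝ E]

def IsOuterUnitNormal (K : Set E) (p n : E) : Prop :=
  ‖n‖ = 1 ∧ ∀ x ∈ K, ⟪x, n⟫ ≤ ⟪p, n⟫

theorem inner_lt_of_mem_interior {K : Set E} {v x : E} {c : ℝ} (hv : v ≠ 0)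
    (hK : ∀ y ∈ K, ⟪y, v⟫ ≤ c) (hx : x ∈ interior K) : ⟪x, v⟫ < c := by
  have hf : innerSL ℝ v ≠ 0 := fun h => hv (by simpa using congr_arg (‖·‖) h)
  have himage : innerSL ℝ v '' interior K ⊆ interior (Set.Iic c) :=
    interior_maximal
      (by rintro _ ⟨y, hy, rfl⟩; simpa [real_inner_comm] using hK y (interior_subset hy))
      ((innerSL ℝ v).isOpenMap_of_ne_zero hf _ isOpen_interior)
  rw [interior_Iic] at himage
  simpa [real_inner_comm] using himage ⟨x, hx, rfl⟩

theorem IsCompact.exists_mem_frontier_forall_inner_le {K : Set E} (hKc : IsCompact K)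
    (hKne : K.Nonempty) {v : E} (hv : v ≠ 0) :
    ∃ p ∈ frontier K, ∀ x ∈ K, ⟪x, v⟫ ≤ ⟪p, v⟫ := by
  have hcont : Continuous fun x : E => ⟪x, v⟫ := continuous_id.inner continuous_const
  obtain ⟨p, hpK, hmax⟩ := hKc.exists_isMaxOn hKne hcont.continuousOn
  exact ⟨p, ⟨subset_closure hpK, fun hp => (inner_lt_of_mem_interior hv hmax hp).false⟩,
    hmax⟩

theorem exists_ne_zero_inner_eq_zero [FiniteDimensional ℝ E] (hE : 2 ≤ Module.finrank ℝ E)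
    (u : E) : ∃ v ≠ (0 : E), ⟪u, v⟫ = 0 := by
  have hspan : Module.finrank ℝ (ℝ ∙ u) ≤ 1 :=
    (finrank_span_le_card ({u} : Set E)).trans (by simp)
  have hperp : 1 ≤ Module.finrank ℝ (ℝ ∙ u)ᗮ := by
    have := (ℝ ∙ u).finrank_add_finrank_orthogonal
    omega
  obtain ⟨v, hv, hv0⟩ :=
    Submodule.exists_mem_ne_zero_of_ne_bot (Submodule.one_le_finrank_iff.1 hperp)
  exact ⟨v, hv0,
    Submodule.inner_right_of_mem_orthogonal (Submodule.mem_span_singleton_self u) hv⟩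

theorem exists_isOuterUnitNormal_inner_nonneg [CompleteSpace E] {K : Set E} (hK : Convex ℝ K)
    (hKint : (interior K).Nonempty) {p u : E} (hp : p ∈ K)
    (hray : ∀ t : ℝ, 0 ≤ t → p + t • u ∉ interior K) :
    ∃ n, IsOuterUnitNormal K p n ∧ 0 ≤ ⟪u, n⟫ := by
  set ray := {x | ∃ t : ℝ, 0 ≤ t ∧ p + t • u = x}
  have hray_convex : Convex ℝ ray := by
    rintro _ ⟨s, hs, rfl⟩ _ ⟨t, ht, rfl⟩ a b ha hb hab
    exact ⟨a * s + b * t, by positivity, by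
      linear_combination (norm := module) hab.symm • p⟩
  have hdisj : Disjoint (interior K) ray :=
    Set.disjoint_left.2 fun x hx ⟨t, ht, hxt⟩ => hray t ht (hxt ▸ hx)
  obtain ⟨f, c, hf0, hfK, hfray⟩ := geometric_hahn_banach_of_nonempty_interior hK hray_convex
    hdisj hKint ⟨p, 0, le_rfl, by simp⟩
  set w := (InnerProductSpace.toDual ℝ E).symm f
  have hw : ∀ x, ⟪x, w⟫ = f x := fun x => by
    rw [real_inner_comm]; exact InnerProductSpace.toDual_symm_apply
  have hw0 : w ≠ 0 := by simpa [w] using hf0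
  have hcp : c ≤ f p := by simpa using hfray p ⟨0, le_rfl, by simp⟩
  have hcu : c ≤ f p + f u := by simpa using hfray (p + (1 : ℝ) • u) ⟨1, zero_le_one, rfl⟩
  refine ⟨‖w‖⁻¹ • w, ⟨norm_smul_inv_norm hw0, fun x hx => ?_⟩, ?_⟩
  · simp only [inner_smul_right, hw]
    exact mul_le_mul_of_nonneg_left ((hfK x hx).trans hcp) (by positivity)
  · simp only [inner_smul_right, hw]
    exact mul_nonneg (by positivity) (by linarith [hfK p hp])

end InnerProductSpace

theorem Illuminates.inner_neg {d : ℕ} {K : Set (EuclideanSpace ℝ (Fin d))}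
    {u p v : EuclideanSpace ℝ (Fin d)} (h : Illuminates K u p) (hv : v ≠ 0)
    (hsupp : ∀ x ∈ K, ⟪x, v⟫ ≤ ⟪p, v⟫) : ⟪u, v⟫ < 0 := by
  obtain ⟨l, hl, hmem⟩ := h
  have := inner_lt_of_mem_interior hv hsupp hmem
  rw [inner_add_left, real_inner_smul_left] at this
  exact neg_of_mul_neg_right (by linarith) hl.le

theorem illuminates_of_inner_neg {d : ℕ} {K : Set (EuclideanSpace ℝ (Fin d))}
    (hKc : IsClosed K) (hKconv : Convex ℝ K) (hKint : (interior K).Nonempty)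
    {p n u : EuclideanSpace ℝ (Fin d)} (hp : p ∈ frontier K)
    (hn : ∀ w, IsOuterUnitNormal K p w → w = n) (hu : ⟪u, n⟫ < 0) : Illuminates K u p := by
  by_contra hnot
  have hray : ∀ t : ℝ, 0 ≤ t → p + t • u ∉ interior K := by
    intro t ht hmem
    rcases ht.eq_or_lt with rfl | ht
    · exact hp.2 (by simpa using hmem)
    · exact hnot ⟨t, ht, hmem⟩
  obtain ⟨w, hw, huw⟩ :=
    exists_isOuterUnitNormal_inner_nonneg hKconv hKint (hKc.frontier_subset hp) hray
  rw [hn w hw] at huw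
  linarith

theorem MFoldIlluminates.le_countP_inner_neg {d m : ℕ} {K : Set (EuclideanSpace ℝ (Fin d))}
    {U : Multiset (EuclideanSpace ℝ (Fin d))} (hU : MFoldIlluminates m K U) (hKc : IsCompact K)
    (hKne : K.Nonempty) {v : EuclideanSpace ℝ (Fin d)} (hv : v ≠ 0) :
    m ≤ U.countP fun u => ⟪u, v⟫ < 0 := by
  obtain ⟨p, hp, hsupp⟩ := hKc.exists_mem_frontier_forall_inner_le hKne hv
  exact (hU.2 p hp).trans (Multiset.countP_mono_left fun u _ hu => hu.inner_neg hv hsupp)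

theorem MFoldIlluminates.two_mul_add_one_le_card {d m : ℕ} {K : Set (EuclideanSpace ℝ (Fin d))}
    {U : Multiset (EuclideanSpace ℝ (Fin d))} (hU : MFoldIlluminates m K U) (hd : 2 ≤ d)
    (hm : 1 ≤ m) (hKc : IsCompact K) (hKne : K.Nonempty) : 2 * m + 1 ≤ Multiset.card U := by
  have hdim : 2 ≤ Module.finrank ℝ (EuclideanSpace ℝ (Fin d)) := by
    rwa [finrank_euclideanSpace_fin]
  obtain ⟨u₁, hu₁⟩ : ∃ u₁, u₁ ∈ U := by
    obtain ⟨v, hv, -⟩ := exists_ne_zero_inner_eq_zero hdim 0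
    have := hU.le_countP_inner_neg hKc hKne hv
    exact Multiset.exists_mem_of_ne_zero (by rintro rfl; simp at this; omega)
  obtain ⟨v, hv, hu₁v⟩ := exists_ne_zero_inner_eq_zero hdim u₁
  -- The two supporting lines parallel to `u₁` need disjoint sets of illuminating directions,
  -- and `u₁` belongs to neither.
  have hneg := hU.le_countP_inner_neg hKc hKne hv
  have hpos := hU.le_countP_inner_neg hKc hKne (neg_ne_zero.2 hv)
  have hlt := Multiset.countP_add_countP_lt_card (p := fun u => ⟪u, v⟫ < 0)
    (q := fun u => ⟪u, -v⟫ < 0) (fun u _ h h' => by rw [inner_neg_right] at h'; linarith) hu₁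
    (by simp [hu₁v]) (by simp [hu₁v])
  omega

def planeDir (θ : ℝ) : EuclideanSpace ℝ (Fin 2) := !₂[Real.cos θ, Real.sin θ]

theorem norm_planeDir (θ : ℝ) : ‖planeDir θ‖ = 1 := by
  simp [planeDir, EuclideanSpace.norm_eq, Fin.sum_univ_two]

theorem inner_planeDir (θ φ : ℝ) : ⟪planeDir θ, planeDir φ⟫ = Real.cos (θ - φ) := by
  simp [planeDir, PiLp.inner_apply, Fin.sum_univ_two, Real.cos_sub]
  ring

theorem exists_nonneg_eq_planeDir {n : EuclideanSpace ℝ (Fin 2)} (hn : ‖n‖ = 1) :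
    ∃ φ, 0 ≤ φ ∧ n = planeDir φ := by
  set z : ℂ := ⟨n 0, n 1⟩
  have hz : ‖z‖ = 1 := by
    rw [← hn, EuclideanSpace.norm_eq, Complex.norm_def, Complex.normSq_apply]
    simp [z, Fin.sum_univ_two, sq]
  refine ⟨Complex.arg z + 2 * Real.pi, by linarith [Complex.neg_pi_lt_arg z, Real.pi_pos], ?_⟩
  have hz0 : z ≠ 0 := by intro h; simp [h] at hz
  ext i
  fin_cases i
  · simp [planeDir, Complex.cos_arg hz0, hz, z]
  · simp [planeDir, Complex.sin_arg, hz, z]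

theorem Nat.le_count_of_periodic {P : ℕ → Prop} [DecidablePred P] {N m a : ℕ}
    (hP : Function.Periodic P N) (hmN : m ≤ N) (ha : ∀ j ∈ Finset.Ico a (a + m), P j) :
    m ≤ Nat.count P N := by
  rw [← Nat.filter_Ico_card_eq_of_periodic a N P hP]
  calc m = ((Finset.Ico a (a + m)).filter P).card := by
        rw [Finset.filter_true_of_mem ha, Nat.card_Ico, Nat.add_sub_cancel_left]
    _ ≤ ((Finset.Ico a (a + N)).filter P).card :=
        Finset.card_le_card <|
          Finset.filter_subset_filter _ (Finset.Ico_subset_Ico_right (by omega))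

open Real in
theorem le_count_cos_neg (m : ℕ) {φ : ℝ} (hφ : 0 ≤ φ) :
    m ≤ Nat.count (fun k : ℕ => cos (2 * π * k / (2 * m + 1) - φ) < 0) (2 * m + 1) := by
  have hN : (0 : ℝ) < 2 * m + 1 := by positivity
  have hperiodic : Function.Periodic (fun k : ℕ => cos (2 * π * k / (2 * m + 1) - φ) < 0)
      (2 * m + 1) := fun k => by
    have : 2 * π * ↑(k + (2 * m + 1)) / (2 * m + 1) - φ =
        2 * π * k / (2 * m + 1) - φ + 2 * π := by
      push_cast; field_simp; ring
    simp only [this, cos_add_two_pi]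
  -- The directions with index in `(y, y + m]` lie in the open arc `(φ + π / 2, φ + 3π / 2)`.
  set y := (φ + π / 2) * (2 * m + 1) / (2 * π)
  refine Nat.le_count_of_periodic (a := ⌊y⌋₊ + 1) hperiodic (by omega) fun j hj => ?_
  rw [Finset.mem_Ico] at hj
  have hy : 0 ≤ y := by positivity
  have hlow : y < j := (Nat.lt_floor_add_one y).trans_le (by exact_mod_cast hj.1)
  have hhigh : (j : ℝ) ≤ y + m := by
    have := Nat.floor_le hy
    have : (j : ℝ) + 1 ≤ ⌊y⌋₊ + 1 + m := by exact_mod_cast hj.2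
    linarith
  apply cos_neg_of_pi_div_two_lt_of_lt
  · rw [lt_sub_iff_add_lt, lt_div_iff₀ hN]
    rw [div_lt_iff₀ (by positivity)] at hlow
    linarith
  · rw [sub_lt_iff_lt_add, div_lt_iff₀ hN]
    have := mul_le_mul_of_nonneg_left hhigh (by positivity : (0 : ℝ) ≤ 2 * π)
    rw [show 2 * π * (y + m) = (φ + π / 2) * (2 * m + 1) + 2 * π * m by
      simp only [y]; field_simp] at this
    nlinarith [pi_pos]

open Real in
def polygonDirs (N : ℕ) : Multiset (EuclideanSpace ℝ (Fin 2)) :=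
  (Multiset.range N).map fun k : ℕ => planeDir (2 * π * k / N)

theorem card_polygonDirs (N : ℕ) : Multiset.card (polygonDirs N) = N := by
  simp [polygonDirs]

theorem le_countP_polygonDirs_inner_neg (m : ℕ) {n : EuclideanSpace ℝ (Fin 2)}
    (hn : ‖n‖ = 1) :
    m ≤ (polygonDirs (2 * m + 1)).countP fun u => ⟪u, n⟫ < 0 := by
  obtain ⟨φ, hφ, rfl⟩ := exists_nonneg_eq_planeDir hn
  convert le_count_cos_neg m hφ using 1
  rw [Nat.count_eq_card_filter_range, polygonDirs, Multiset.countP_map]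
  exact congrArg Multiset.card <| Multiset.filter_congr fun k _ => by
    rw [inner_planeDir]; push_cast; rfl

theorem mfoldIlluminates_polygonDirs (m : ℕ) {K : Set (EuclideanSpace ℝ (Fin 2))}
    (hKc : IsClosed K) (hKconv : Convex ℝ K) (hKint : (interior K).Nonempty)
    (hsmooth : ∀ p ∈ frontier K, ∃! n, IsOuterUnitNormal K p n) :
    MFoldIlluminates m K (polygonDirs (2 * m + 1)) := by
  refine ⟨by simp [polygonDirs, norm_planeDir], fun p hp => ?_⟩
  obtain ⟨n, hn, huniq⟩ := hsmooth p hp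
  exact (le_countP_polygonDirs_inner_neg m hn.1).trans <| Multiset.countP_mono_left
    fun u _ hu => illuminates_of_inner_neg hKc hKconv hKint hp huniq hu

/-- Theorem 2: for a smooth planar convex body `K` (unique supporting line at
each boundary point), `I^m(K) = 2m + 1`. -/
theorem mfold_illumination_smooth_planar (m : ℕ) (hm : 1 ≤ m)
    (K : Set (EuclideanSpace ℝ (Fin 2)))
    (hKc : IsCompact K) (hKconv : Convex ℝ K) (hKint : (interior K).Nonempty)
    (hsmooth : ∀ p ∈ frontier K,
      ∃! u : EuclideanSpace ℝ (Fin 2), ‖u‖ = 1 ∧ ∀ x ∈ K, ⟪x, u⟫ ≤ ⟪p, u⟫) :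
    illumNum m K = 2 * m + 1 := by
  refine IsLeast.csInf_eq ⟨⟨polygonDirs (2 * m + 1),
    mfoldIlluminates_polygonDirs m hKc.isClosed hKconv hKint hsmooth, card_polygonDirs _⟩, ?_⟩
  rintro _ ⟨U, hU, rfl⟩
  exact hU.two_mul_add_one_le_card le_rfl hm hKc (hKint.mono interior_subset)
end
end

section
/- For any positive integers m and d with d ≥ 3, the m-fold illumination number of the closed Euclidean unit ball B^d in ℝ^d satisfies I^m(B^d) ≤ (d − 1)m + 1 + ⌈m/2⌉. -/
open scoped Classical RealInnerProductSpace

noncomputable section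

namespace IllumAux

open Real Finset Metric

lemma countP_le_of_imp {α : Type*} (s : Multiset α) (p q : α → Prop)
    [DecidablePred p] [DecidablePred q] (h : ∀ a ∈ s, p a → q a) :
    s.countP p ≤ s.countP q := by
  induction s using Multiset.induction with
  | empty => simp
  | cons a s ih =>
    simp only [Multiset.countP_cons]
    have h1 := ih (fun b hb => h b (Multiset.mem_cons_of_mem hb))
    have h2 := h a (Multiset.mem_cons_self _ _)
    split_ifs with hpa hqa hqa
    · omega
    · exact absurd (h2 hpa) hqa
    · omega
    · omega

lemma cos_lt_of_arc {u z : ℝ} (h1 : Real.arccos u < z) (h2 : z < 2 * π - Real.arccos u) :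
    Real.cos z < u := by
  have hπ : (0:ℝ) < π := Real.pi_pos
  have hu : -1 ≤ u := by
    by_contra h
    push_neg at h
    rw [Real.arccos_eq_pi.mpr h.le] at h1 h2
    linarith
  have hA0 : 0 ≤ Real.arccos u := Real.arccos_nonneg u
  have hAp : Real.arccos u ≤ π := Real.arccos_le_pi u
  have hcA : Real.cos (Real.arccos u) ≤ u := by
    rcases le_or_gt u 1 with h | h
    · exact (Real.cos_arccos hu h).le
    · exact (Real.cos_le_one _).trans h.le
  rcases le_or_gt z π with hz | hz
  · have := Real.strictAntiOn_cos ⟨hA0, hAp⟩ ⟨by linarith, hz⟩ h1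
    linarith
  · have h3 : Real.arccos u < 2 * π - z := by linarith
    have : Real.cos (2 * π - z) < Real.cos (Real.arccos u) :=
      Real.strictAntiOn_cos ⟨hA0, hAp⟩ ⟨by linarith, by linarith⟩ h3
    rw [Real.cos_two_pi_sub] at this
    linarith

lemma circle_count (k : ℕ) (hk : 0 < k) (off φ u : ℝ) :
    (⌈(k:ℝ) * (φ + 2 * π - Real.arccos u) / (2 * π) - off⌉
      - ⌊(k:ℝ) * (φ + Real.arccos u) / (2 * π) - off⌋ - 1).toNat
    ≤ ((Finset.range k).filter
        (fun i : ℕ => Real.cos (2 * π * ((i:ℝ) + off) / (k:ℝ) - φ) < u)).card := by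
  have hπ : (0:ℝ) < π := Real.pi_pos
  have hkR : (0:ℝ) < (k:ℝ) := by exact_mod_cast hk
  set A := Real.arccos u with hA
  set a : ℝ := (k:ℝ) * (φ + A) / (2 * π) - off with ha
  set b : ℝ := (k:ℝ) * (φ + 2 * π - A) / (2 * π) - off with hb
  have hA0 : 0 ≤ A := Real.arccos_nonneg u
  have hAp : A ≤ π := Real.arccos_le_pi u
  have hba' : b - a = (k:ℝ) * (2 * π - 2 * A) / (2 * π) := by rw [ha, hb]; ring
  have hba : b - a ≤ (k:ℝ) := by
    rw [hba']
    rw [div_le_iff₀ (by positivity)]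
    nlinarith
  rw [← Int.card_Ioo]
  apply Finset.card_le_card_of_injOn (fun x => (x % (k:ℤ)).toNat)
  · intro x hx
    rw [Finset.mem_coe, Finset.mem_Ioo] at hx
    have hax : a < (x:ℝ) := by
      have := hx.1
      rwa [Int.floor_lt] at this
    have hxb : (x:ℝ) < b := Int.lt_ceil.mp hx.2
    have hkz : (0:ℤ) < (k:ℤ) := by exact_mod_cast hk
    have hmod0 : 0 ≤ x % (k:ℤ) := Int.emod_nonneg x (by exact_mod_cast hk.ne')
    have hmodk : x % (k:ℤ) < (k:ℤ) := Int.emod_lt_of_pos x hkz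
    rw [Finset.mem_coe, Finset.mem_filter, Finset.mem_range]
    refine ⟨by show (x % (k:ℤ)).toNat < k; omega, ?_⟩
    set n : ℤ := x / (k:ℤ) with hn
    have hxe : (((x % (k:ℤ)).toNat : ℕ) : ℝ) = (x:ℝ) - (n:ℝ) * (k:ℝ) := by
      have h1 : ((x % (k:ℤ)).toNat : ℤ) = x - n * (k:ℤ) := by
        rw [Int.toNat_of_nonneg hmod0, hn, Int.emod_def]; ring
      exact_mod_cast congrArg (Int.cast : ℤ → ℝ) h1
    have hangle : 2 * π * ((((x % (k:ℤ)).toNat : ℕ) : ℝ) + off) / (k:ℝ) - φ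
        = (2 * π * ((x:ℝ) + off) / (k:ℝ) - φ) - (n:ℝ) * (2 * π) := by
      rw [hxe]
      field_simp
      ring
    rw [hangle, Real.cos_sub_int_mul_two_pi]
    apply cos_lt_of_arc
    · have h1 : (k:ℝ) * (φ + A) / (2 * π) < (x:ℝ) + off := by
        rw [ha] at hax; linarith
      have h2 : (k:ℝ) * (φ + A) < 2 * π * ((x:ℝ) + off) := by
        rw [div_lt_iff₀ (by positivity)] at h1; linarith
      have h3 : φ + A < 2 * π * ((x:ℝ) + off) / (k:ℝ) := by
        rw [lt_div_iff₀ hkR]; nlinarith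
      rw [← hA]; linarith
    · have h1 : (x:ℝ) + off < (k:ℝ) * (φ + 2 * π - A) / (2 * π) := by
        rw [hb] at hxb; linarith
      have h2 : 2 * π * ((x:ℝ) + off) < (k:ℝ) * (φ + 2 * π - A) := by
        rw [← lt_div_iff₀' (by positivity : (0:ℝ) < 2 * π)]; linarith
      have h3 : 2 * π * ((x:ℝ) + off) / (k:ℝ) < φ + 2 * π - A := by
        rw [div_lt_iff₀ hkR]; nlinarith
      rw [← hA]; linarith
  · intro x hx y hy hxy
    simp only [Finset.mem_coe, Finset.mem_Ioo] at hx hy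
    have hkz : (0:ℤ) < (k:ℤ) := by exact_mod_cast hk
    have hx0 : 0 ≤ x % (k:ℤ) := Int.emod_nonneg x (by exact_mod_cast hk.ne')
    have hy0 : 0 ≤ y % (k:ℤ) := Int.emod_nonneg y (by exact_mod_cast hk.ne')
    have hmod : x % (k:ℤ) = y % (k:ℤ) := by
      have := congrArg (Int.ofNat) hxy
      simpa [Int.toNat_of_nonneg hx0, Int.toNat_of_nonneg hy0] using this
    have hdvd : (k:ℤ) ∣ y - x := Int.ModEq.dvd hmod
    have hceil : ((⌈b⌉ - ⌊a⌋ - 2 : ℤ) : ℝ) < (k:ℝ) := by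
      have hc : (⌈b⌉ : ℝ) < b + 1 := Int.ceil_lt_add_one b
      have hf : a - 1 < (⌊a⌋ : ℝ) := Int.sub_one_lt_floor a
      push_cast
      linarith
    have hceil' : (⌈b⌉ - ⌊a⌋ - 2 : ℤ) < (k:ℤ) := by exact_mod_cast hceil
    have habs : |y - x| ≤ ⌈b⌉ - ⌊a⌋ - 2 := by
      rw [abs_le]
      omega
    by_contra hne
    have hyx : y - x ≠ 0 := fun h => hne (by omega)
    have := Int.le_of_dvd (abs_pos.mpr hyx) ((dvd_abs _ _).mpr hdvd)
    omega

lemma two_intervals (k : ℕ) (a₁ b₁ a₂ b₂ : ℝ)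
    (hsum : (b₁ - a₁) + (b₂ - a₂) = (k:ℝ))
    (hpar : (a₁ + b₁) - (a₂ + b₂) = 1/2) :
    (k:ℤ) - 1 ≤ (⌈b₁⌉ - ⌊a₁⌋ - 1) + (⌈b₂⌉ - ⌊a₂⌋ - 1) := by
  by_contra h
  push_neg at h
  have h' : (⌈b₁⌉ + ⌈b₂⌉ - ⌊a₁⌋ - ⌊a₂⌋ : ℤ) ≤ (k:ℤ) := by omega
  have hR : ((⌈b₁⌉:ℝ) + (⌈b₂⌉:ℝ) - (⌊a₁⌋:ℝ) - (⌊a₂⌋:ℝ)) ≤ (k:ℝ) := by exact_mod_cast h'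
  have c1 := Int.le_ceil b₁
  have c2 := Int.le_ceil b₂
  have f1 := Int.floor_le a₁
  have f2 := Int.floor_le a₂
  have e1 : (⌈b₁⌉:ℝ) = b₁ := by linarith
  have e2 : (⌈b₂⌉:ℝ) = b₂ := by linarith
  have e3 : (⌊a₁⌋:ℝ) = a₁ := by linarith
  have e4 : (⌊a₂⌋:ℝ) = a₂ := by linarith
  have : ((2 * (⌊a₁⌋ + ⌈b₁⌉ - ⌊a₂⌋ - ⌈b₂⌉) : ℤ) : ℝ) = 1 := by
    push_cast
    rw [e1, e2, e3, e4]
    linarith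
  have : (2 * (⌊a₁⌋ + ⌈b₁⌉ - ⌊a₂⌋ - ⌈b₂⌉) : ℤ) = 1 := by exact_mod_cast this
  omega

def j0 (e : ℕ) : Fin (e+3) := ⟨0, by omega⟩
def j1 (e : ℕ) : Fin (e+3) := ⟨1, by omega⟩
def j2 (e : ℕ) : Fin (e+3) := ⟨2, by omega⟩
def tailF (e : ℕ) : Finset (Fin (e+3)) := Finset.univ.filter (fun j => ¬((j:ℕ) < 3))

lemma head_eq (e : ℕ) :
    Finset.univ.filter (fun j : Fin (e+3) => (j:ℕ) < 3) = {j0 e, j1 e, j2 e} := by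
  ext j
  simp only [Finset.mem_filter, Finset.mem_univ, true_and, Finset.mem_insert,
    Finset.mem_singleton, j0, j1, j2, Fin.ext_iff]
  omega

lemma sum_split (e : ℕ) (G : Fin (e+3) → ℝ) :
    ∑ j, G j = G (j0 e) + G (j1 e) + G (j2 e) + ∑ j ∈ tailF e, G j := by
  have h01 : j0 e ≠ j1 e := by simp [j0, j1, Fin.ext_iff]
  have h02 : j0 e ≠ j2 e := by simp [j0, j2, Fin.ext_iff]
  have h12 : j1 e ≠ j2 e := by simp [j1, j2, Fin.ext_iff]
  rw [← Finset.sum_filter_add_sum_filter_not Finset.univ (fun j : Fin (e+3) => (j:ℕ) < 3) G]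
  rw [head_eq e]
  rw [Finset.sum_insert (by simp [h01, h02]), Finset.sum_insert (by simp [h12]),
    Finset.sum_singleton]
  rw [show (Finset.univ.filter (fun j : Fin (e+3) => ¬((j:ℕ) < 3))) = tailF e from rfl]
  ring

lemma tail_card (e : ℕ) : (tailF e).card = e := by
  have h3 := Finset.card_filter_add_card_filter_not
    (s := (Finset.univ : Finset (Fin (e+3)))) (p := fun j : Fin (e+3) => (j:ℕ) < 3)
  have h01 : j0 e ≠ j1 e := by simp [j0, j1, Fin.ext_iff]
  have h02 : j0 e ≠ j2 e := by simp [j0, j2, Fin.ext_iff]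
  have h12 : j1 e ≠ j2 e := by simp [j1, j2, Fin.ext_iff]
  have h2 : (Finset.univ.filter (fun j : Fin (e+3) => (j:ℕ) < 3)).card = 3 := by
    rw [head_eq e, Finset.card_insert_of_notMem (by simp [h01, h02]),
      Finset.card_insert_of_notMem (by simp [h12]), Finset.card_singleton]
  rw [Finset.card_univ, Fintype.card_fin] at h3
  have : (tailF e).card = (Finset.univ.filter (fun j : Fin (e+3) => ¬((j:ℕ) < 3))).card := rfl
  omega

lemma illum_of_inner_neg {n : ℕ} {u p : EuclideanSpace ℝ (Fin n)} (hu : ‖u‖ = 1) (hp : ‖p‖ = 1)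
    (h : ⟪u, p⟫ < 0) : Illuminates (Metric.closedBall 0 1) u p := by
  refine ⟨-⟪u, p⟫, by linarith, ?_⟩
  rw [interior_closedBall (0 : EuclideanSpace ℝ (Fin n)) one_ne_zero, Metric.mem_ball,
    dist_zero_right]
  have hsq : ‖p + (-⟪u, p⟫) • u‖ ^ 2 = 1 - ⟪u, p⟫ ^ 2 := by
    rw [norm_add_sq_real, norm_smul, real_inner_smul_right, real_inner_comm p u]
    rw [hp, hu]
    simp [Real.norm_eq_abs]
    ring
  nlinarith [norm_nonneg (p + (-⟪u, p⟫) • u), sq_nonneg ⟪u, p⟫, mul_pos (neg_pos.mpr h) (neg_pos.mpr h)]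

def gam (e : ℕ) : ℝ := Real.sqrt (1/((e:ℝ)+1))
def al : ℝ := Real.sqrt (1/2)

lemma gam_pos (e : ℕ) : 0 < gam e := Real.sqrt_pos.mpr (by positivity)
lemma al_pos : 0 < al := Real.sqrt_pos.mpr (by norm_num)
lemma gam_sq (e : ℕ) : gam e ^ 2 = 1/((e:ℝ)+1) := Real.sq_sqrt (by positivity)
lemma al_sq : al ^ 2 = 1/2 := Real.sq_sqrt (by norm_num)

def bv (e : ℕ) (x y z : ℝ) : EuclideanSpace ℝ (Fin (e+3)) := WithLp.toLp 2 fun (j : Fin (e+3)) =>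
  if (j:ℕ) = 0 then gam e * (al * x) else if (j:ℕ) = 1 then gam e * (al * y)
  else if (j:ℕ) = 2 then gam e * (al * z) else gam e

lemma bv_j0 (e : ℕ) (x y z : ℝ) : bv e x y z (j0 e) = gam e * (al * x) := by
  simp [bv, j0]

lemma bv_j1 (e : ℕ) (x y z : ℝ) : bv e x y z (j1 e) = gam e * (al * y) := by
  simp [bv, j1]

lemma bv_j2 (e : ℕ) (x y z : ℝ) : bv e x y z (j2 e) = gam e * (al * z) := by
  simp [bv, j2]

lemma bv_tail (e : ℕ) (x y z : ℝ) {j : Fin (e+3)} (hj : j ∈ tailF e) :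
    bv e x y z j = gam e := by
  have hj3 : ¬((j:ℕ) < 3) := by simpa [tailF] using hj
  simp only [bv, PiLp.toLp_apply]
  rw [if_neg (by omega), if_neg (by omega), if_neg (by omega)]

lemma norm_bv (e : ℕ) (x y z : ℝ) (hxy : x^2 + y^2 = 1) (hz : z^2 = 1) :
    ‖bv e x y z‖ = 1 := by
  rw [EuclideanSpace.norm_eq]
  have key : ∑ j, ‖bv e x y z j‖^2 = 1 := by
    rw [sum_split e (fun j => ‖bv e x y z j‖^2)]
    rw [Finset.sum_congr rfl (fun j hj => by rw [bv_tail e x y z hj] :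
      ∀ j ∈ tailF e, ‖bv e x y z j‖^2 = ‖gam e‖^2)]
    rw [Finset.sum_const, tail_card, bv_j0, bv_j1, bv_j2]
    simp only [Real.norm_eq_abs, sq_abs, nsmul_eq_mul]
    have expand : (gam e*(al*x))^2 + (gam e*(al*y))^2 + (gam e*(al*z))^2 + (e:ℝ)*gam e^2
        = gam e^2 * (al^2*((x^2+y^2) + z^2) + (e:ℝ)) := by ring
    rw [expand, hxy, hz, gam_sq, al_sq]
    have : ((e:ℝ)+1) ≠ 0 := by positivity
    field_simp
    ring
  rw [key, Real.sqrt_one]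

lemma inner_bv (e : ℕ) (x y z : ℝ) (p : EuclideanSpace ℝ (Fin (e+3))) :
    ⟪bv e x y z, p⟫ = gam e * (al * (x * p (j0 e) + y * p (j1 e) + z * p (j2 e))
      + ∑ j ∈ tailF e, p j) := by
  have h0 : ⟪bv e x y z, p⟫ = ∑ j, bv e x y z j * p j := by
    simp only [PiLp.inner_apply, RCLike.inner_apply, conj_trivial]
    exact Finset.sum_congr rfl (fun _ _ => mul_comm _ _)
  rw [h0, sum_split e (fun j => bv e x y z j * p j)]
  rw [Finset.sum_congr rfl (fun j hj => by rw [bv_tail e x y z hj] :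
    ∀ j ∈ tailF e, bv e x y z j * p j = gam e * p j)]
  rw [← Finset.mul_sum, bv_j0, bv_j1, bv_j2]
  ring

lemma inner_nv (e : ℕ) (j : Fin (e+3)) (p : EuclideanSpace ℝ (Fin (e+3))) :
    ⟪EuclideanSpace.single j (-1:ℝ), p⟫ = -(p j) := by
  rw [EuclideanSpace.inner_single_left]
  simp

lemma one_le_ceil_half (m : ℕ) (hm : 1 ≤ m) : 1 ≤ ⌈(m:ℚ)/2⌉₊ := by
  refine Nat.one_le_iff_ne_zero.mpr (Nat.pos_iff_ne_zero.mp (Nat.ceil_pos.mpr ?_))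
  have : (1:ℚ) ≤ (m:ℚ) := by exact_mod_cast hm
  positivity

end IllumAux

open IllumAux in
/-- Theorem 3: `I^m(B^d) ≤ (d - 1)m + 1 + ⌈m/2⌉` for `d ≥ 3`. -/
theorem mfold_illumination_ball_upper_bound (m d : ℕ) (hm : 1 ≤ m) (hd : 3 ≤ d) :
    illumNum m (Metric.closedBall (0 : EuclideanSpace ℝ (Fin d)) 1) ≤
      (d - 1) * m + 1 + ⌈(m : ℚ) / 2⌉₊ := by
  classical
  obtain ⟨e, rfl⟩ : ∃ e, d = e + 3 := ⟨d - 3, by omega⟩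
  have hπ : (0:ℝ) < Real.pi := Real.pi_pos
  set π := Real.pi with hπdef
  set k : ℕ := m + 1 with hkdef
  have hk : 0 < k := by omega
  have hkR : (0:ℝ) < (k:ℝ) := by exact_mod_cast hk
  have hγ : 0 < gam e := gam_pos e
  have hα : 0 < al := al_pos
  set topv : ℕ → EuclideanSpace ℝ (Fin (e+3)) := fun i =>
    bv e (Real.cos (2 * π * ((i:ℝ) + 0) / (k:ℝ))) (Real.sin (2 * π * ((i:ℝ) + 0) / (k:ℝ))) 1
    with htopv
  set botv : ℕ → EuclideanSpace ℝ (Fin (e+3)) := fun i =>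
    bv e (Real.cos (2 * π * ((i:ℝ) + 1/4) / (k:ℝ))) (Real.sin (2 * π * ((i:ℝ) + 1/4) / (k:ℝ)))
      (-1) with hbotv
  set nv : Fin (e+3) → EuclideanSpace ℝ (Fin (e+3)) :=
    fun j => EuclideanSpace.single j (-1:ℝ) with hnv
  set U : Multiset (EuclideanSpace ℝ (Fin (e+3))) :=
    (Multiset.replicate (⌈(m:ℚ)/2⌉₊ - 1) (nv (j0 e))
      + m • ((tailF e).val.map nv))
      + ((Multiset.range k).map topv + (Multiset.range k).map botv) with hU
  have hCeil : 1 ≤ ⌈(m:ℚ)/2⌉₊ := one_le_ceil_half m hm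
  -- all vectors are unit vectors
  have hunit : ∀ u ∈ U, ‖u‖ = 1 := by
    intro u hu
    rw [hU] at hu
    simp only [Multiset.mem_add] at hu
    rcases hu with (hu | hu) | (hu | hu)
    · rw [Multiset.eq_of_mem_replicate hu, hnv]
      simp [EuclideanSpace.norm_single]
    · have hu' : u ∈ (tailF e).val.map nv := ((Multiset.mem_nsmul).mp hu).2
      obtain ⟨j, _, rfl⟩ := Multiset.mem_map.mp hu'
      rw [hnv]
      simp [EuclideanSpace.norm_single]
    · obtain ⟨i, _, rfl⟩ := Multiset.mem_map.mp hu
      rw [htopv]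
      exact norm_bv e _ _ _ (Real.cos_sq_add_sin_sq _) (by norm_num)
    · obtain ⟨i, _, rfl⟩ := Multiset.mem_map.mp hu
      rw [hbotv]
      exact norm_bv e _ _ _ (Real.cos_sq_add_sin_sq _) (by norm_num)
  -- cardinality
  have hcard : Multiset.card U = (e + 3 - 1) * m + 1 + ⌈(m:ℚ)/2⌉₊ := by
    rw [hU]
    simp only [Multiset.card_add, Multiset.card_replicate, Multiset.card_nsmul,
      Multiset.card_map, Multiset.card_range]
    have ht : Multiset.card (tailF e).val = e := tail_card e
    have h32 : (e + 3 - 1) * m = m * e + 2 * m := by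
      have h33 : e + 3 - 1 = e + 2 := rfl
      rw [h33]; ring
    rw [ht, hkdef, h32]
    omega
  apply Nat.sInf_le
  refine ⟨U, ⟨hunit, ?_⟩, hcard⟩
  intro p hp
  rw [frontier_closedBall (0 : EuclideanSpace ℝ (Fin (e+3))) one_ne_zero,
    mem_sphere_zero_iff_norm] at hp
  -- main counting argument
  have main : m ≤ Multiset.countP (fun u => ⟪u, p⟫ < 0) U := by
    set G : EuclideanSpace ℝ (Fin (e+3)) → Prop := fun u => ⟪u, p⟫ < 0 with hG
    show m ≤ Multiset.countP G U
    have hallcase : ∀ M : Multiset (EuclideanSpace ℝ (Fin (e+3))), M ≤ U →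
        (∀ u ∈ M, G u) → m ≤ Multiset.card M → m ≤ Multiset.countP G U := by
      intro M hle hall hm'
      have h1 : Multiset.countP G M = Multiset.card M := Multiset.countP_eq_card.mpr hall
      have h2 := Multiset.countP_le_of_le (p := G) hle
      omega
    have hleTop : (Multiset.range k).map topv ≤ U := by
      rw [hU]
      exact le_trans (Multiset.le_add_right _ _) (Multiset.le_add_left _ _)
    have hleBot : (Multiset.range k).map botv ≤ U := by
      rw [hU]
      exact le_trans (Multiset.le_add_left _ _) (Multiset.le_add_left _ _)
    have hleBase : (Multiset.range k).map topv + (Multiset.range k).map botv ≤ U := by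
      rw [hU]
      exact Multiset.le_add_left _ _
    by_cases hA : ∃ j ∈ tailF e, 0 < p j
    · -- some tail coordinate is positive : use the m copies of -e_j
      obtain ⟨j, hjt, hpj⟩ := hA
      have h1 : 0 < Multiset.countP G ((tailF e).val.map nv) := by
        rw [Multiset.countP_pos]
        refine ⟨nv j, Multiset.mem_map_of_mem _ hjt, ?_⟩
        rw [hG, hnv]
        simp only []
        rw [inner_nv]
        linarith
      have h2 : Multiset.countP G (m • ((tailF e).val.map nv))
          = m * Multiset.countP G ((tailF e).val.map nv) := Multiset.countP_nsmul _ _ _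
      have h3 : m • ((tailF e).val.map nv) ≤ U := by
        rw [hU]
        exact le_trans (Multiset.le_add_left _ _) (Multiset.le_add_right _ _)
      have h4 := Multiset.countP_le_of_le (p := G) h3
      have h5 : m ≤ m * Multiset.countP G ((tailF e).val.map nv) := by
        calc m = m * 1 := (mul_one m).symm
          _ ≤ _ := Nat.mul_le_mul_left m h1
      omega
    · -- all tail coordinates nonpositive
      push_neg at hA
      have hW : ∑ j ∈ tailF e, p j ≤ 0 := Finset.sum_nonpos hA
      by_cases hq : p (j0 e) = 0 ∧ p (j1 e) = 0
      · rcases lt_trichotomy (p (j2 e)) 0 with hs | hs | hs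
        · -- s < 0 : all top vectors work
          refine hallcase _ hleTop ?_ (by rw [Multiset.card_map, Multiset.card_range]; omega)
          intro u hu
          obtain ⟨i, _, rfl⟩ := Multiset.mem_map.mp hu
          rw [hG, htopv]
          simp only []
          rw [inner_bv]
          rw [hq.1, hq.2]
          have h6 : al * (p (j2 e)) < 0 := mul_neg_of_pos_of_neg hα hs
          have h7 : al * (Real.cos (2 * π * ((i:ℝ) + 0) / (k:ℝ)) * 0
              + Real.sin (2 * π * ((i:ℝ) + 0) / (k:ℝ)) * 0 + 1 * p (j2 e))
              + ∑ j ∈ tailF e, p j < 0 := by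
            ring_nf
            ring_nf at h6
            linarith
          exact mul_neg_of_pos_of_neg hγ h7
        · -- s = 0 : tail sum is strictly negative, all top vectors work
          have hpne : p ≠ 0 := by
            intro h0
            rw [h0] at hp
            simp at hp
          obtain ⟨j, hj⟩ : ∃ j, p j ≠ 0 := by
            by_contra hc
            push_neg at hc
            exact hpne (PiLp.ext hc)
          have hjt : j ∈ tailF e := by
            simp only [tailF, Finset.mem_filter, Finset.mem_univ, true_and]
            intro hj3
            interval_cases h : (j:ℕ)
            · exact hj (by rw [show j = j0 e from Fin.ext h]; exact hq.1)
            · exact hj (by rw [show j = j1 e from Fin.ext h]; exact hq.2)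
            · exact hj (by rw [show j = j2 e from Fin.ext h]; exact hs)
          have hW' : ∑ j ∈ tailF e, p j < 0 := by
            have := Finset.sum_lt_sum (f := p) (g := fun _ => (0:ℝ)) hA
              ⟨j, hjt, lt_of_le_of_ne (hA j hjt) hj⟩
            simpa using this
          refine hallcase _ hleTop ?_ (by rw [Multiset.card_map, Multiset.card_range]; omega)
          intro u hu
          obtain ⟨i, _, rfl⟩ := Multiset.mem_map.mp hu
          rw [hG, htopv]
          simp only []
          rw [inner_bv]
          rw [hq.1, hq.2, hs]
          have h7 : al * (Real.cos (2 * π * ((i:ℝ) + 0) / (k:ℝ)) * 0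
              + Real.sin (2 * π * ((i:ℝ) + 0) / (k:ℝ)) * 0 + 1 * 0)
              + ∑ j ∈ tailF e, p j < 0 := by
            ring_nf
            ring_nf at hW'
            linarith
          exact mul_neg_of_pos_of_neg hγ h7
        · -- s > 0 : all bottom vectors work
          refine hallcase _ hleBot ?_ (by rw [Multiset.card_map, Multiset.card_range]; omega)
          intro u hu
          obtain ⟨i, _, rfl⟩ := Multiset.mem_map.mp hu
          rw [hG, hbotv]
          simp only []
          rw [inner_bv]
          rw [hq.1, hq.2]
          have h6 : al * (-(p (j2 e))) < 0 := mul_neg_of_pos_of_neg hα (by linarith)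
          have h7 : al * (Real.cos (2 * π * ((i:ℝ) + 1/4) / (k:ℝ)) * 0
              + Real.sin (2 * π * ((i:ℝ) + 1/4) / (k:ℝ)) * 0 + (-1) * p (j2 e))
              + ∑ j ∈ tailF e, p j < 0 := by
            ring_nf
            ring_nf at h6
            linarith
          exact mul_neg_of_pos_of_neg hγ h7
      · -- main case : the planar part of p is nonzero
        have hzne : (⟨p (j0 e), p (j1 e)⟩ : ℂ) ≠ 0 := by
          intro h0
          apply hq
          constructor
          · have := congrArg Complex.re h0
            simpa using this
          · have := congrArg Complex.im h0
            simpa using this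
        set r : ℝ := ‖(⟨p (j0 e), p (j1 e)⟩ : ℂ)‖ with hrdef
        have hr : 0 < r := norm_pos_iff.mpr hzne
        set φ : ℝ := Complex.arg ⟨p (j0 e), p (j1 e)⟩ with hφdef
        have hcos : r * Real.cos φ = p (j0 e) := Complex.norm_mul_cos_arg _
        have hsin : r * Real.sin φ = p (j1 e) := Complex.norm_mul_sin_arg _
        set u₁ : ℝ := -(p (j2 e)) / r with hu₁
        have hru₁ : r * u₁ = -(p (j2 e)) := by
          rw [hu₁]
          field_simp
        -- pointwise implications
        have htopi : ∀ i : ℕ, Real.cos (2 * π * ((i:ℝ) + 0) / (k:ℝ) - φ) < u₁ →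
            G (topv i) := by
          intro i hc
          rw [hG, htopv]
          simp only []
          rw [inner_bv]
          set θ := 2 * π * ((i:ℝ) + 0) / (k:ℝ) with hθ
          have hrc : Real.cos θ * p (j0 e) + Real.sin θ * p (j1 e)
              = r * Real.cos (θ - φ) := by
            rw [Real.cos_sub, ← hcos, ← hsin]
            ring
          have h1 : r * Real.cos (θ - φ) < r * u₁ := mul_lt_mul_of_pos_left hc hr
          have hT : Real.cos θ * p (j0 e) + Real.sin θ * p (j1 e) + 1 * p (j2 e) < 0 := by
            rw [hrc]
            linarith
          have h5 : al * (Real.cos θ * p (j0 e) + Real.sin θ * p (j1 e) + 1 * p (j2 e))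
              + ∑ j ∈ tailF e, p j < 0 := by
            have := mul_neg_of_pos_of_neg hα hT
            linarith
          exact mul_neg_of_pos_of_neg hγ h5
        have hboti : ∀ i : ℕ, Real.cos (2 * π * ((i:ℝ) + 1/4) / (k:ℝ) - φ) < -u₁ →
            G (botv i) := by
          intro i hc
          rw [hG, hbotv]
          simp only []
          rw [inner_bv]
          set θ := 2 * π * ((i:ℝ) + 1/4) / (k:ℝ) with hθ
          have hrc : Real.cos θ * p (j0 e) + Real.sin θ * p (j1 e)
              = r * Real.cos (θ - φ) := by
            rw [Real.cos_sub, ← hcos, ← hsin]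
            ring
          have h1 : r * Real.cos (θ - φ) < r * (-u₁) := mul_lt_mul_of_pos_left hc hr
          have hT : Real.cos θ * p (j0 e) + Real.sin θ * p (j1 e) + (-1) * p (j2 e) < 0 := by
            rw [hrc]
            nlinarith
          have h5 : al * (Real.cos θ * p (j0 e) + Real.sin θ * p (j1 e) + (-1) * p (j2 e))
              + ∑ j ∈ tailF e, p j < 0 := by
            have := mul_neg_of_pos_of_neg hα hT
            linarith
          exact mul_neg_of_pos_of_neg hγ h5
        -- interval counting
        have c1 := circle_count k hk 0 φ u₁
        have c2 := circle_count k hk (1/4) φ (-u₁)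
        set n₁ : ℤ := ⌈(k:ℝ) * (φ + 2 * π - Real.arccos u₁) / (2 * π) - 0⌉
          - ⌊(k:ℝ) * (φ + Real.arccos u₁) / (2 * π) - 0⌋ - 1 with hn₁
        set n₂ : ℤ := ⌈(k:ℝ) * (φ + 2 * π - Real.arccos (-u₁)) / (2 * π) - 1/4⌉
          - ⌊(k:ℝ) * (φ + Real.arccos (-u₁)) / (2 * π) - 1/4⌋ - 1 with hn₂
        have hiv : (k:ℤ) - 1 ≤ n₁ + n₂ := by
          rw [hn₁, hn₂]
          apply two_intervals k
          · rw [Real.arccos_neg]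
            field_simp
            ring
          · rw [Real.arccos_neg]
            field_simp
            ring
        -- from filters to counts
        have d1 : ((Finset.range k).filter
            (fun i : ℕ => Real.cos (2 * π * ((i:ℝ) + 0) / (k:ℝ) - φ) < u₁)).card
            ≤ Multiset.countP G ((Multiset.range k).map topv) := by
          rw [Multiset.countP_map]
          have hsub : (Finset.range k).filter
              (fun i : ℕ => Real.cos (2 * π * ((i:ℝ) + 0) / (k:ℝ) - φ) < u₁)
              ⊆ (Finset.range k).filter (fun i : ℕ => G (topv i)) := by
            intro i hi
            rw [Finset.mem_filter] at hi ⊢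
            exact ⟨hi.1, htopi i hi.2⟩
          exact Finset.card_le_card hsub
        have d2 : ((Finset.range k).filter
            (fun i : ℕ => Real.cos (2 * π * ((i:ℝ) + 1/4) / (k:ℝ) - φ) < -u₁)).card
            ≤ Multiset.countP G ((Multiset.range k).map botv) := by
          rw [Multiset.countP_map]
          have hsub : (Finset.range k).filter
              (fun i : ℕ => Real.cos (2 * π * ((i:ℝ) + 1/4) / (k:ℝ) - φ) < -u₁)
              ⊆ (Finset.range k).filter (fun i : ℕ => G (botv i)) := by
            intro i hi
            rw [Finset.mem_filter] at hi ⊢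
            exact ⟨hi.1, hboti i hi.2⟩
          exact Finset.card_le_card hsub
        have e1 : n₁.toNat ≤ Multiset.countP G ((Multiset.range k).map topv) :=
          le_trans c1 d1
        have e2 : n₂.toNat ≤ Multiset.countP G ((Multiset.range k).map botv) :=
          le_trans c2 d2
        have hbase := Multiset.countP_le_of_le (p := G) hleBase
        rw [Multiset.countP_add] at hbase
        omega
  refine le_trans main (countP_le_of_imp U _ _ ?_)
  intro u hu hgood
  exact illum_of_inner_neg (hunit u hu) hp hgood
end
end

section
/- Let K be a convex body in ℝ^d and let v ∈ ℝ^d \ K. Then the open cap C(K, v) = {p ∈ ∂K : p = α·q + (1 − α)·v for some q ∈ int(K) and α ∈ (0, 1)} equals ∂K ∩ int(conv(K ∪ {v})). -/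
open scoped Classical RealInnerProductSpace

noncomputable section

/-- The open cap `C(K, v)`: boundary points of `K` of the form
`α • q + (1 - α) • v` with `q` interior to `K` and `α ∈ (0, 1)`. -/
def openCap {d : ℕ} (K : Set (EuclideanSpace ℝ (Fin d))) (v : EuclideanSpace ℝ (Fin d)) :
    Set (EuclideanSpace ℝ (Fin d)) :=
  {p | p ∈ frontier K ∧
    ∃ q ∈ interior K, ∃ α ∈ Set.Ioo (0 : ℝ) 1, p = α • q + (1 - α) • v}

/-- The ray emanating from `v` through `p`. -/
def rayThrough {d : ℕ} (v p : EuclideanSpace ℝ (Fin d)) : Set (EuclideanSpace ℝ (Fin d)) :=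
  {x | ∃ l : ℝ, 0 ≤ l ∧ x = v + l • (p - v)}

/-- The closed cap `C̄(K, v)`: the open cap together with the boundary points `p`
for which the ray from `v` through `p` misses the interior of `K`. -/
def closedCap {d : ℕ} (K : Set (EuclideanSpace ℝ (Fin d))) (v : EuclideanSpace ℝ (Fin d)) :
    Set (EuclideanSpace ℝ (Fin d)) :=
  openCap K v ∪ {p | p ∈ frontier K ∧ rayThrough v p ∩ interior K = ∅}


lemma subset_closure_interior_aux {d : ℕ} {K : Set (EuclideanSpace ℝ (Fin d))}
    (hK : Convex ℝ K) (hKint : (interior K).Nonempty) : K ⊆ closure (interior K) := by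
  obtain ⟨q, hq⟩ := hKint
  intro x hx
  have ht : Filter.Tendsto (fun n : ℕ => (1 / (n + 1) : ℝ)) Filter.atTop (nhds 0) :=
    tendsto_one_div_add_atTop_nhds_zero_nat
  have h : Filter.Tendsto (fun n : ℕ => x + (1 / (n + 1) : ℝ) • (q - x)) Filter.atTop (nhds x) := by
    have := (ht.smul_const (q - x)).const_add x
    simpa using this
  refine mem_closure_of_tendsto h (Filter.Eventually.of_forall fun n => ?_)
  refine hK.add_smul_sub_mem_interior hx hq ⟨by positivity, ?_⟩
  rw [div_le_one (by positivity)]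
  linarith [Nat.cast_nonneg (α := ℝ) n]

lemma interior_closure_subset_aux {d : ℕ} {T : Set (EuclideanSpace ℝ (Fin d))}
    (hT : Convex ℝ T) {x0 : EuclideanSpace ℝ (Fin d)} (hx0 : x0 ∈ interior T) :
    interior (closure T) ⊆ interior T := by
  intro y hy
  by_cases hxy : y = x0
  · exact hxy ▸ hx0
  have hne : (0 : ℝ) < ‖y - x0‖ := by
    rw [norm_pos_iff]; exact sub_ne_zero_of_ne hxy
  obtain ⟨ε, hε, hball⟩ := Metric.mem_nhds_iff.mp (mem_interior_iff_mem_nhds.mp hy)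
  set l : ℝ := ε / (2 * ‖y - x0‖) with hl
  have hlpos : 0 < l := by positivity
  set z := y + l • (y - x0) with hz
  have hzT : z ∈ closure T := by
    apply hball
    simp only [Metric.mem_ball, hz, dist_eq_norm]
    have h1 : y + l • (y - x0) - y = l • (y - x0) := by abel
    rw [h1, norm_smul, Real.norm_of_nonneg hlpos.le, hl]
    have h2 : ε / (2 * ‖y - x0‖) * ‖y - x0‖ = ε / 2 := by
      field_simp
    rw [h2]; linarith
  have h1l : (0 : ℝ) < 1 + l := by linarith
  have hcombo : y = (l / (1 + l)) • x0 + (1 / (1 + l)) • z := by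
    rw [hz]
    match_scalars <;> field_simp <;> ring
  rw [hcombo]
  exact hT.combo_interior_closure_mem_interior hx0 hzT (by positivity)
    (by positivity) (by field_simp; ring)

/-- Corollary 1: the open cap equals `∂K ∩ int (conv (K ∪ {v}))`. -/
theorem openCap_eq_frontier_inter_interior (d : ℕ) (K : Set (EuclideanSpace ℝ (Fin d)))
    (hKc : IsCompact K) (hKconv : Convex ℝ K) (hKint : (interior K).Nonempty)
    (v : EuclideanSpace ℝ (Fin d)) (hv : v ∉ K) :
    openCap K v = frontier K ∩ interior (convexHull ℝ (K ∪ {v})) := by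
  
  have hKclosed : IsClosed K := hKc.isClosed
  set S := convexHull ℝ (K ∪ {v}) with hS
  have hSconv : Convex ℝ S := convex_convexHull ℝ _
  have hKS : K ⊆ S := (Set.subset_union_left).trans (subset_convexHull ℝ _)
  have hvS : v ∈ S := subset_convexHull ℝ _ (Set.mem_union_right _ rfl)
  ext p
  constructor
  · rintro ⟨hpf, q, hq, α, ⟨hα0, hα1⟩, rfl⟩
    refine ⟨hpf, ?_⟩
    have hqS : q ∈ interior S := interior_mono hKS hq
    exact hSconv.combo_interior_self_mem_interior hqS hvS hα0 (by linarith) (by ring)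
  · rintro ⟨hpf, hpi⟩
    set T := convexHull ℝ (insert v (interior K)) with hT
    have hTconv : Convex ℝ T := convex_convexHull ℝ _
    have hIT : interior K ⊆ T := (Set.subset_insert _ _).trans (subset_convexHull ℝ _)
    have hITi : interior K ⊆ interior T := interior_maximal hIT isOpen_interior
    have hScT : S ⊆ closure T := by
      apply convexHull_min _ hTconv.closure
      rintro x (hx | hx)
      · exact closure_mono (fun y hy => hIT hy) (subset_closure_interior_aux hKconv hKint hx)
      · rw [Set.mem_singleton_iff] at hx
        exact subset_closure (hx ▸ subset_convexHull ℝ _ (Set.mem_insert _ _))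
    obtain ⟨q0, hq0⟩ := hKint
    have hpT : p ∈ T := by
      have hsub : interior S ⊆ interior T :=
        (interior_mono hScT).trans (interior_closure_subset_aux hTconv (hITi hq0))
      exact interior_subset (hsub hpi)
    rw [hT, convexHull_insert ⟨q0, hq0⟩, (hKconv.interior).convexHull_eq,
      convexJoin_singleton_left] at hpT
    obtain ⟨q, hq, hpseg⟩ := Set.mem_iUnion₂.mp hpT
    obtain ⟨a, b, ha, hb, hab, hpeq⟩ := hpseg
    have hpK : p ∈ K := by
      have := frontier_subset_closure hpf
      rwa [hKclosed.closure_eq] at this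
    have hbne : b ≠ 0 := by
      rintro rfl
      have ha1 : a = 1 := by linarith
      have hpv : p = v := by rw [← hpeq, ha1]; simp
      exact hv (hpv ▸ hpK)
    have hane : a ≠ 0 := by
      rintro rfl
      have hb1 : b = 1 := by linarith
      have hpq : p = q := by rw [← hpeq, hb1]; simp
      exact hpf.2 (hpq ▸ hq)
    refine ⟨hpf, q, hq, b, ⟨lt_of_le_of_ne hb (Ne.symm hbne), ?_⟩, ?_⟩
    · have ha' : 0 < a := lt_of_le_of_ne ha (Ne.symm hane)
      linarith
    · rw [← hpeq, show (1 - b : ℝ) = a from by linarith, add_comm]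
end
end

section
/- Let K be a convex body in ℝ^d, let v ∈ ℝ^d \ K, and let u ∈ S^{d-1} be a direction that illuminates the point v with respect to the convex body K̂(v) = conv(K ∪ {v}). Then (i) u illuminates every point of S(K, v) ∩ ∂K̂(v) with respect to K̂(v), and (ii) u illuminates every point of the open cap C(K, v) with respect to K. -/
open scoped Classical RealInnerProductSpace

noncomputable section

/-- Representation of points in `conv (K ∪ {v})` for convex nonempty `K`. -/
lemma mem_hull_rep {d : ℕ} {K : Set (EuclideanSpace ℝ (Fin d))}
    (hKconv : Convex ℝ K) (hne : K.Nonempty) {v x : EuclideanSpace ℝ (Fin d)}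
    (hx : x ∈ convexHull ℝ (K ∪ {v})) :
    ∃ a b : ℝ, 0 ≤ a ∧ 0 ≤ b ∧ a + b = 1 ∧ ∃ k ∈ K, x = a • v + b • k := by
  rw [Set.union_singleton, convexHull_insert hne, hKconv.convexHull_eq] at hx
  rw [mem_convexJoin] at hx
  obtain ⟨w, hw, k, hk, hseg⟩ := hx
  rw [Set.mem_singleton_iff] at hw
  subst hw
  obtain ⟨a, b, ha, hb, hab, hxe⟩ := hseg
  exact ⟨a, b, ha, hb, hab, k, hk, hxe.symm⟩


/-- Lemma 4: if `u` illuminates `v` with respect to `K̂(v) = conv (K ∪ {v})`, then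
(i) `u` illuminates every point of `S(K, v) ∩ ∂K̂(v)` with respect to `K̂(v)`, and
(ii) `u` illuminates every point of the open cap `C(K, v)` with respect to `K`. -/
theorem illuminate_cap (d : ℕ) (K : Set (EuclideanSpace ℝ (Fin d)))
    (hKc : IsCompact K) (hKconv : Convex ℝ K) (hKint : (interior K).Nonempty)
    (v : EuclideanSpace ℝ (Fin d)) (hv : v ∉ K)
    (u : EuclideanSpace ℝ (Fin d)) (hu : ‖u‖ = 1)
    (hillum : Illuminates (convexHull ℝ (K ∪ {v})) u v) :
    (∀ s ∈ (convexHull ℝ (K ∪ {v}) \ K) ∩ frontier (convexHull ℝ (K ∪ {v})),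
        Illuminates (convexHull ℝ (K ∪ {v})) u s) ∧
      (∀ p ∈ openCap K v, Illuminates K u p) := by
  obtain ⟨l, hl, hw⟩ := hillum
  have hne : K.Nonempty := hKint.mono interior_subset
  have hhconv : Convex ℝ (convexHull ℝ (K ∪ {v})) := convex_convexHull ℝ _
  have hKsub : K ⊆ convexHull ℝ (K ∪ {v}) := fun x hx =>
    subset_convexHull ℝ _ (Or.inl hx)
  constructor
  · rintro s ⟨⟨hsK, hsnK⟩, -⟩
    obtain ⟨a, b, ha, hb, hab, k, hk, hse⟩ := mem_hull_rep hKconv hne hsK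
    have hapos : 0 < a := by
      rcases ha.lt_or_eq with h | h
      · exact h
      · exfalso
        apply hsnK
        have hb1 : b = 1 := by linarith
        rw [hse, ← h, hb1, zero_smul, one_smul, zero_add]
        exact hk
    refine ⟨a * l, mul_pos hapos hl, ?_⟩
    have key : s + (a * l) • u = a • (v + l • u) + b • k := by
      rw [hse]; rw [mul_smul]
      module
    rw [key]
    exact hhconv.combo_interior_closure_mem_interior hw
      (subset_closure (hKsub hk)) hapos hb hab
  · rintro p ⟨hpf, q, hq, α, ⟨hα0, hα1⟩, hpe⟩
    have hpK : p ∈ K := by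
      have := frontier_subset_closure (s := K) hpf
      rwa [hKc.isClosed.closure_eq] at this
    obtain ⟨a, b, ha, hb, hab, k, hk, hwe⟩ :=
      mem_hull_rep hKconv hne (interior_subset hw)
    have hbpos : 0 < b := by
      rcases hb.lt_or_eq with h | h
      · exact h
      · exfalso
        have ha1 : a = 1 := by linarith
        have : l • u = 0 := by
          have h2 : v + l • u = v := by rw [hwe, ← h, ha1, zero_smul, one_smul, add_zero]
          have := congrArg (fun x => x - v) h2
          simpa using this
        have : ‖l • u‖ = 0 := by rw [this]; simp
        rw [norm_smul, hu, mul_one, Real.norm_eq_abs, abs_of_pos hl] at this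
        linarith
    -- e = 1 - b*α > 0
    have he : 0 < 1 - b * α := by nlinarith
    set e : ℝ := 1 - b * α with hedef
    set m : EuclideanSpace ℝ (Fin d) := (e⁻¹ * a) • p + (e⁻¹ * ((1 - α) * b)) • k with hmdef
    have hmK : m ∈ K := by
      apply hKconv hpK hk (mul_nonneg (inv_nonneg.2 he.le) ha)
        (mul_nonneg (inv_nonneg.2 he.le) (mul_nonneg (by linarith) hb))
      rw [← mul_add, inv_mul_eq_one₀ he.ne', hedef]
      ring_nf
      linarith
    refine ⟨(1 - α) * l, mul_pos (by linarith) hl, ?_⟩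
    have hem : e • m = a • p + ((1 - α) * b) • k := by
      rw [hmdef, smul_add, smul_smul, smul_smul,
        mul_inv_cancel_left₀ he.ne', mul_inv_cancel_left₀ he.ne']
    have key : p + ((1 - α) * l) • u = (b * α) • q + e • m := by
      have h : l • u = a • v + b • k - v := by rw [← hwe]; abel
      have hb1 : a = 1 - b := by linarith
      rw [hem, hpe, mul_smul, h, hb1]
      module
    rw [key]
    exact hKconv.combo_interior_closure_mem_interior hq
      (subset_closure hmK) (mul_pos hbpos hα0) he.le (by ring)
end
end

section
/- Let K be a convex body in ℝ^d, let v ∈ ℝ^d \ K, and let u ∈ S^{d-1} be a direction that illuminates the point v with respect to the convex body K̂(v) = conv(K ∪ {v}). Then for every point s in the spike S(K, v) = K̂(v) \ K, the direction u illuminates s with respect to K̂(s) = conv(K ∪ {s}). -/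
open scoped Classical RealInnerProductSpace

noncomputable section

/-- Lemma 5: if `u` illuminates `v` with respect to `K̂(v) = conv (K ∪ {v})`, then
for every `s` in the spike `S(K, v) = conv (K ∪ {v}) \\ K`, the direction `u`
illuminates `s` with respect to `K̂(s) = conv (K ∪ {s})`. -/
theorem illuminate_inside_spike (d : ℕ) (K : Set (EuclideanSpace ℝ (Fin d)))
    (hKc : IsCompact K) (hKconv : Convex ℝ K) (hKint : (interior K).Nonempty)
    (v : EuclideanSpace ℝ (Fin d)) (hv : v ∉ K)
    (u : EuclideanSpace ℝ (Fin d)) (hu : ‖u‖ = 1)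
    (hillum : Illuminates (convexHull ℝ (K ∪ {v})) u v) :
    ∀ s ∈ convexHull ℝ (K ∪ {v}) \ K, Illuminates (convexHull ℝ (K ∪ {s})) u s := by
  intro s hs
  obtain ⟨hsH, hsK⟩ := hs
  have hKne : K.Nonempty := hKint.mono interior_subset
  rw [Set.union_singleton, convexHull_insert hKne, mem_convexJoin] at hsH
  obtain ⟨x, hx, y, hy, hseg⟩ := hsH
  rw [Set.mem_singleton_iff] at hx
  rw [hx] at hseg
  rw [hKconv.convexHull_eq] at hy
  obtain ⟨a, b, ha0, hb0, hab, habs⟩ := hseg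
  have ha : 0 < a := by
    rcases ha0.lt_or_eq with h | h
    · exact h
    · exfalso
      apply hsK
      have hb1 : b = 1 := by linarith
      rw [← habs, ← h, hb1, zero_smul, one_smul, zero_add]
      exact hy
  obtain ⟨l, hl, hmem⟩ := hillum
  refine ⟨a * l, mul_pos ha hl, ?_⟩
  set e : EuclideanSpace ℝ (Fin d) ≃ₜ EuclideanSpace ℝ (Fin d) :=
    (Homeomorph.smulOfNeZero a ha.ne').trans (Homeomorph.addLeft (b • y)) with he
  have hefun : ∀ x, e x = b • y + a • x := fun x => rfl
  have himg : e '' (convexHull ℝ (K ∪ {v})) ⊆ convexHull ℝ (K ∪ {s}) := by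
    rw [Set.image_subset_iff]
    apply convexHull_min
    · rintro x (hx | hx)
      · have : b • y + a • x ∈ K := hKconv hy hx hb0 ha0 (by linarith)
        exact Set.mem_preimage.mpr (subset_convexHull ℝ _ (Or.inl this))
      · rw [Set.mem_singleton_iff] at hx
        have hev : e x = s := by rw [hefun, hx, ← habs]; module
        exact Set.mem_preimage.mpr (hev ▸ subset_convexHull ℝ _ (Or.inr rfl))
    · intro x hx y' hy' p q hp hq hpq
      have hkey : e (p • x + q • y') = p • e x + q • e y' := by
        simp only [hefun]
        rw [show p • (b • y + a • x) + q • (b • y + a • y') =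
            (p + q) • (b • y) + a • (p • x + q • y') from by module, hpq, one_smul]
      refine Set.mem_preimage.mpr ?_
      rw [hkey]
      exact convex_convexHull ℝ _ hx hy' hp hq hpq
  have hmem2 : s + (a * l) • u ∈ e '' interior (convexHull ℝ (K ∪ {v})) := by
    refine ⟨v + l • u, hmem, ?_⟩
    rw [hefun, ← habs]
    module
  rw [e.image_interior] at hmem2
  exact interior_mono himg hmem2
end
end

section
/- Let K be a convex body in ℝ^d and let v, v′ ∈ ℝ^d \ K. If v′ belongs to the spike S(K, v) = conv(K ∪ {v}) \ K, then C(K, v′) ⊆ C(K, v) and C̄(K, v′) ⊆ C̄(K, v). -/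
open scoped Classical RealInnerProductSpace

set_option maxHeartbeats 1000000

noncomputable section

/-- A convex combination of two points of a closed convex set and an interior point,
with positive weight on the interior point, lies in the interior. -/
lemma combo3_mem_interior {d : ℕ} {K : Set (EuclideanSpace ℝ (Fin d))}
    (hconv : Convex ℝ K) (hcl : IsClosed K)
    {k x p : EuclideanSpace ℝ (Fin d)} (hk : k ∈ K) (hx : x ∈ interior K) (hp : p ∈ K)
    {a b c : ℝ} (ha : 0 ≤ a) (hb : 0 < b) (hc : 0 ≤ c) (habc : a + b + c = 1) :
    a • k + b • x + c • p ∈ interior K := by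
  rcases eq_or_lt_of_le (show b ≤ 1 by linarith) with hb1 | hb1
  · have ha0 : a = 0 := by linarith
    have hc0 : c = 0 := by linarith
    simpa [ha0, hc0, hb1] using hx
  · have h1b : (0:ℝ) < 1 - b := by linarith
    set y := (a / (1 - b)) • k + (c / (1 - b)) • p with hy
    have hyK : y ∈ K := by
      apply hconv hk hp (div_nonneg ha h1b.le) (div_nonneg hc h1b.le)
      field_simp
      linarith
    have key : b • x + (1 - b) • y ∈ interior K :=
      hconv.combo_interior_closure_mem_interior hx (subset_closure hyK) hb
        h1b.le (by ring)
    have heq : a • k + b • x + c • p = b • x + (1 - b) • y := by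
      rw [hy]
      match_scalars <;> field_simp
    rw [heq]
    exact key

/-- Lemma 6: if `v' ∈ S(K, v) = conv (K ∪ {v}) \\ K`, then `C(K, v') ⊆ C(K, v)`
and `C̄(K, v') ⊆ C̄(K, v)`. -/
theorem cap_subset (d : ℕ) (K : Set (EuclideanSpace ℝ (Fin d)))
    (hKc : IsCompact K) (hKconv : Convex ℝ K) (hKint : (interior K).Nonempty)
    (v v' : EuclideanSpace ℝ (Fin d)) (hv : v ∉ K) (hv' : v' ∉ K)
    (hmem : v' ∈ convexHull ℝ (K ∪ {v}) \ K) :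
    openCap K v' ⊆ openCap K v ∧ closedCap K v' ⊆ closedCap K v := by
  obtain ⟨hv'hull, hv'K⟩ := hmem
  have hKcl : IsClosed K := hKc.isClosed
  have hKne : K.Nonempty := hKint.mono interior_subset
  -- decompose v' = (1-b) • v + b • k with k ∈ K, 0 ≤ b < 1
  have hhull : v' ∈ convexJoin ℝ (convexHull ℝ K) (convexHull ℝ {v}) := by
    rw [← convexHull_union hKne (Set.singleton_nonempty v)]
    exact hv'hull
  rw [convexHull_singleton, hKconv.convexHull_eq, mem_convexJoin] at hhull
  obtain ⟨k, hkK, w, hw, hseg⟩ := hhull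
  rw [Set.mem_singleton_iff] at hw
  rw [hw] at hseg
  obtain ⟨b, a, hb, ha, hab, heq⟩ := hseg
  have hb1 : b < 1 := by
    rcases lt_or_eq_of_le (show b ≤ 1 by linarith) with h | h
    · exact h
    · exfalso
      have ha0 : a = 0 := by linarith
      apply hv'K
      have : v' = k := by rw [← heq, ha0, h]; simp
      rw [this]; exact hkK
  have hv'eq : v' = (1 - b) • v + b • k := by
    rw [← heq]
    have : a = 1 - b := by linarith
    rw [this, add_comm]
  -- first inclusion
  have hopen : openCap K v' ⊆ openCap K v := by
    rintro p ⟨hpf, q, hq, α, ⟨hα0, hα1⟩, hpeq⟩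
    refine ⟨hpf, ?_⟩
    have hγ0 : 0 < (1 - α) * (1 - b) := by nlinarith
    have hγ1 : (1 - α) * (1 - b) < 1 := by nlinarith
    set γ := (1 - α) * (1 - b) with hγ
    have h1γ : (0:ℝ) < 1 - γ := by linarith
    have hne : (1:ℝ) - (1 - α) * (1 - b) ≠ 0 := by rw [← hγ]; exact h1γ.ne'
    refine ⟨(α / (1 - γ)) • q + ((1 - α) * b / (1 - γ)) • k, ?_, 1 - γ,
      ⟨by linarith, by linarith⟩, ?_⟩
    · apply hKconv.combo_interior_closure_mem_interior hq (subset_closure hkK)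
        (div_pos hα0 h1γ) (div_nonneg (by nlinarith) h1γ.le)
      rw [hγ]
      field_simp [hne]
      ring
    · rw [hpeq, hv'eq, hγ]
      match_scalars <;> field_simp [hne] <;> ring
  refine ⟨hopen, ?_⟩
  -- closed caps
  rintro p (hp | ⟨hpf, hray⟩)
  · exact Or.inl (hopen hp)
  · have hpK : p ∈ K := hKcl.frontier_subset hpf
    by_cases hrayv : rayThrough v p ∩ interior K = ∅
    · exact Or.inr ⟨hpf, hrayv⟩
    · obtain ⟨x, ⟨l, hl0, hxeq⟩, hxint⟩ := Set.nonempty_iff_ne_empty.2 hrayv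
      have hl0' : 0 < l := by
        rcases hl0.lt_or_eq with h | h
        · exact h
        · exfalso; apply hv
          have : x = v := by rw [hxeq, ← h]; simp
          exact interior_subset (this ▸ hxint)
      have hlne1 : l ≠ 1 := by
        intro h
        have : x = p := by rw [hxeq, h]; simp
        have hpni : p ∉ interior K := by
          rw [hKcl.frontier_eq] at hpf
          exact hpf.2
        exact hpni (this ▸ hxint)
      rcases lt_or_gt_of_ne hlne1 with hl1 | hl1
      · -- 0 < l < 1 : contradiction with hray
        exfalso
        have h1l : (0:ℝ) < 1 - l := by linarith
        have hlb : (0:ℝ) < 1 - l * b := by nlinarith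
        have hτ1 : l * (1 - b) / (1 - l * b) < 1 := by
          rw [div_lt_one hlb]; nlinarith
        have hτ0 : 0 ≤ l * (1 - b) / (1 - l * b) :=
          div_nonneg (by nlinarith) hlb.le
        set t := (l * (1 - b) / (1 - l * b) + 1) / 2 with ht
        have ht0 : 0 < t := by rw [ht]; linarith
        have ht1 : t < 1 := by rw [ht]; linarith
        have htτ : l * (1 - b) / (1 - l * b) < t := by rw [ht]; linarith
        have htτ' : l * (1 - b) < t * (1 - l * b) := by
          rw [div_lt_iff₀ hlb] at htτ; linarith
        -- the three coefficients
        set ck := (1 - t) * b with hck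
        set cx := (1 - t) * (1 - b) / (1 - l) with hcx
        set cp := t - l * (1 - t) * (1 - b) / (1 - l) with hcp
        have hck0 : 0 ≤ ck := by rw [hck]; nlinarith
        have hcx0 : 0 < cx := by
          rw [hcx]; apply div_pos (by nlinarith) h1l
        have hcp0 : 0 ≤ cp := by
          rw [hcp, sub_nonneg, div_le_iff₀ h1l]
          nlinarith
        have hsum : ck + cx + cp = 1 := by
          rw [hck, hcx, hcp]; field_simp; ring
        have hmem' : ck • k + cx • x + cp • p ∈ interior K :=
          combo3_mem_interior hKconv hKcl hkK hxint hpK hck0 hcx0 hcp0 hsum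
        have hseq : v' + t • (p - v') = ck • k + cx • x + cp • p := by
          rw [hv'eq, hxeq, hck, hcx, hcp]
          match_scalars <;> field_simp <;> ring
        have : v' + t • (p - v') ∈ rayThrough v' p ∩ interior K := by
          refine ⟨⟨t, ht0.le, rfl⟩, ?_⟩
          rw [hseq]; exact hmem'
        rw [hray] at this
        exact this
      · -- l > 1 : p ∈ openCap K v
        left
        refine ⟨hpf, x, hxint, 1 / l, ⟨by positivity, by rw [div_lt_one hl0']; linarith⟩, ?_⟩
        rw [hxeq]
        match_scalars <;> field_simp <;> ring
end
end

section
/- Let K be a convex body in ℝ^d whose boundary is smooth, i.e., K has a unique supporting hyperplane at each of its boundary points, and let v ∈ ℝ^d \ K. If a direction u ∈ S^{d-1} illuminates the point v with respect to the convex body K̂(v) = conv(K ∪ {v}), then u illuminates every point of the closed cap C̄(K, v) with respect to K. -/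
open scoped Classical RealInnerProductSpace

noncomputable section

open scoped Topology
open Filter

section Helpers
variable {d : ℕ}

/-- Interior points are strictly below a supporting level. -/
lemma strict_lt_of_interior {K : Set (EuclideanSpace ℝ (Fin d))}
    {n x : EuclideanSpace ℝ (Fin d)} {c : ℝ} (hn : ‖n‖ = 1)
    (hb : ∀ y ∈ K, ⟪y, n⟫ ≤ c) (hx : x ∈ interior K) : ⟪x, n⟫ < c := by
  obtain ⟨ε, hε, hball⟩ := Metric.isOpen_iff.1 isOpen_interior x hx
  have hy : x + (ε/2) • n ∈ K := by
    apply interior_subset (hball ?_)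
    simp [Metric.mem_ball, dist_eq_norm, norm_smul, hn]
    rw [abs_of_pos hε]; linarith
  have := hb _ hy
  rw [inner_add_left, real_inner_smul_left, real_inner_self_eq_norm_sq, hn] at this
  nlinarith

lemma subset_closure_interior' {K : Set (EuclideanSpace ℝ (Fin d))}
    (hKconv : Convex ℝ K) (hKint : (interior K).Nonempty) :
    K ⊆ closure (interior K) := by
  obtain ⟨a, ha⟩ := hKint
  intro x hx
  have h0 : Filter.Tendsto (fun k : ℕ => (1:ℝ)/(k+1)) Filter.atTop (𝓝 0) :=
    tendsto_one_div_add_atTop_nhds_zero_nat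
  have htend : Filter.Tendsto
      (fun k : ℕ => ((1:ℝ)/(k+1)) • a + (1 - (1:ℝ)/(k+1)) • x) Filter.atTop (𝓝 x) := by
    have h1 : Filter.Tendsto (fun k : ℕ => (1:ℝ) - (1:ℝ)/(k+1)) Filter.atTop (𝓝 (1 - 0)) :=
      Filter.Tendsto.sub tendsto_const_nhds h0
    have := ((h0.smul_const a).add (h1.smul_const x))
    simpa using this
  refine mem_closure_of_tendsto htend (Filter.Eventually.of_forall fun k => ?_)
  exact hKconv.combo_interior_closure_mem_interior ha (subset_closure hx)
    (by positivity) (by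
      have : (1:ℝ)/(k+1) ≤ 1 := by
        rw [div_le_one (by positivity)]; linarith
      linarith) (by ring)

/-- Key lemma: if `n` is the unique unit outer normal at `p ∈ K` and `⟪w, n⟫ < 0`,
then moving from `p` in direction `w` enters the interior of `K`. -/
lemma illum_of_inner_neg {K : Set (EuclideanSpace ℝ (Fin d))}
    (hKconv : Convex ℝ K) (hKint : (interior K).Nonempty)
    {p n w : EuclideanSpace ℝ (Fin d)} (hp : p ∈ K)
    (huniq : ∀ m : EuclideanSpace ℝ (Fin d), ‖m‖ = 1 →
      (∀ x ∈ K, ⟪x, m⟫ ≤ ⟪p, m⟫) → m = n)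
    (hwn : ⟪w, n⟫ < 0) : ∃ s : ℝ, 0 < s ∧ p + s • w ∈ interior K := by
  by_contra hcon
  push_neg at hcon
  have hsep : ∀ k : ℕ, ∃ m : EuclideanSpace ℝ (Fin d), ‖m‖ = 1 ∧
      ∀ x ∈ K, ⟪x, m⟫ ≤ ⟪p, m⟫ + ((1:ℝ)/(k+1)) * ⟪w, m⟫ := by
    intro k
    have hs : (0:ℝ) < 1/(k+1) := by positivity
    have hnot : p + ((1:ℝ)/(k+1)) • w ∉ interior K := fun h => (hcon _ hs h).elim
    obtain ⟨f, hf⟩ := geometric_hahn_banach_open_point hKconv.interior isOpen_interior hnot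
    set y := (InnerProductSpace.toDual ℝ (EuclideanSpace ℝ (Fin d))).symm f with hy
    have hfy : ∀ z, f z = ⟪z, y⟫ := by
      intro z
      rw [real_inner_comm, hy, InnerProductSpace.toDual_symm_apply]
    have hy0 : y ≠ 0 := by
      obtain ⟨a, ha⟩ := hKint
      intro h
      have := hf a ha
      rw [hfy, hfy, h] at this
      simp at this
    have hKle : ∀ x ∈ K, ⟪x, y⟫ ≤ ⟪p + ((1:ℝ)/(k+1)) • w, y⟫ := by
      have hclosed : IsClosed {z : EuclideanSpace ℝ (Fin d) |
          ⟪z, y⟫ ≤ ⟪p + ((1:ℝ)/(k+1)) • w, y⟫} :=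
        isClosed_le (Continuous.inner continuous_id continuous_const) continuous_const
      intro x hx
      have hsub : closure (interior K) ⊆ {z : EuclideanSpace ℝ (Fin d) |
          ⟪z, y⟫ ≤ ⟪p + ((1:ℝ)/(k+1)) • w, y⟫} := by
        apply closure_minimal _ hclosed
        intro a ha
        have := hf a ha
        rw [hfy, hfy] at this
        exact le_of_lt this
      exact hsub (subset_closure_interior' hKconv hKint hx)
    refine ⟨‖y‖⁻¹ • y, ?_, ?_⟩
    · simp [norm_smul, norm_ne_zero_iff.2 hy0]
    · intro x hx
      have h1 := hKle x hx
      rw [inner_add_left, real_inner_smul_left] at h1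
      have hpos : (0:ℝ) < ‖y‖⁻¹ := inv_pos.2 (norm_pos_iff.2 hy0)
      rw [real_inner_smul_right, real_inner_smul_right, real_inner_smul_right]
      have h2 := mul_le_mul_of_nonneg_left h1 hpos.le
      rw [mul_add] at h2
      have h3 : ((1:ℝ)/(k+1)) * (‖y‖⁻¹ * ⟪w, y⟫) = ‖y‖⁻¹ * (((1:ℝ)/(k+1)) * ⟪w, y⟫) := by ring
      rw [h3]
      exact h2
  choose m hm1 hm2 using hsep
  have hmem : ∀ k, m k ∈ Metric.sphere (0 : EuclideanSpace ℝ (Fin d)) 1 := by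
    intro k; simpa [Metric.mem_sphere, dist_eq_norm] using hm1 k
  obtain ⟨W, hWmem, φ, hφ, hWt⟩ :=
    (isCompact_sphere (0 : EuclideanSpace ℝ (Fin d)) 1).tendsto_subseq hmem
  have hWnorm : ‖W‖ = 1 := by simpa [dist_eq_norm] using hWmem
  have hWt' : Filter.Tendsto (fun k => m (φ k)) Filter.atTop (𝓝 W) := hWt
  have h0' : Filter.Tendsto (fun k : ℕ => (1:ℝ)/(φ k + 1)) Filter.atTop (𝓝 0) :=
    tendsto_one_div_add_atTop_nhds_zero_nat.comp hφ.tendsto_atTop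
  have hWw : (0:ℝ) ≤ ⟪w, W⟫ := by
    refine le_of_tendsto_of_tendsto' tendsto_const_nhds
      (Filter.Tendsto.inner tendsto_const_nhds hWt') (fun k => ?_)
    have h1 := hm2 (φ k) p hp
    have hs : (0:ℝ) < 1/(φ k + 1) := by positivity
    have h2 : (0:ℝ) ≤ ((1:ℝ)/(φ k + 1)) * ⟪w, m (φ k)⟫ := by linarith
    have h3 : (0:ℝ) ≤ ⟪w, m (φ k)⟫ := nonneg_of_mul_nonneg_right h2 hs
    exact h3
  have hWsupp : ∀ x ∈ K, ⟪x, W⟫ ≤ ⟪p, W⟫ := by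
    intro x hx
    have hL : Filter.Tendsto (fun k => ⟪x, m (φ k)⟫) Filter.atTop (𝓝 ⟪x, W⟫) :=
      Filter.Tendsto.inner tendsto_const_nhds hWt
    have hR : Filter.Tendsto
        (fun k => ⟪p, m (φ k)⟫ + ((1:ℝ)/(φ k + 1)) * ⟪w, m (φ k)⟫)
        Filter.atTop (𝓝 (⟪p, W⟫ + 0 * ⟪w, W⟫)) :=
      (Filter.Tendsto.inner tendsto_const_nhds hWt').add
        (h0'.mul (Filter.Tendsto.inner tendsto_const_nhds hWt'))
    have := le_of_tendsto_of_tendsto' hL hR (fun k => hm2 (φ k) x hx)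
    simpa using this
  have : W = n := huniq W hWnorm hWsupp
  rw [this] at hWw
  linarith

lemma shrink_interior_step {K : Set (EuclideanSpace ℝ (Fin d))}
    (hKconv : Convex ℝ K) {p w : EuclideanSpace ℝ (Fin d)} (hp : p ∈ K)
    {s s' : ℝ} (hs : 0 < s) (hs'0 : 0 < s') (hs's : s' ≤ s)
    (h : p + s • w ∈ interior K) : p + s' • w ∈ interior K := by
  have hkey : (s'/s) • (p + s • w) + (1 - s'/s) • p = p + s' • w := by
    have hsne : s ≠ 0 := ne_of_gt hs
    rw [smul_add, smul_smul, div_mul_cancel₀ _ hsne]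
    rw [sub_smul, one_smul]
    abel
  rw [← hkey]
  exact hKconv.combo_interior_closure_mem_interior h (subset_closure hp)
    (by positivity) (by
      have : s'/s ≤ 1 := by rw [div_le_one hs]; exact hs's
      linarith) (by ring)

end Helpers

/-- Lemma 7: for a smooth convex body `K` (unique supporting hyperplane at each
boundary point), if `u` illuminates `v` with respect to `K̂(v) = conv (K ∪ {v})`,
then `u` illuminates every point of the closed cap `C̄(K, v)` with respect to `K`. -/
theorem illuminate_closed_cap (d : ℕ) (K : Set (EuclideanSpace ℝ (Fin d)))
    (hKc : IsCompact K) (hKconv : Convex ℝ K) (hKint : (interior K).Nonempty)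
    (hsmooth : ∀ p ∈ frontier K,
      ∃! w : EuclideanSpace ℝ (Fin d), ‖w‖ = 1 ∧ ∀ x ∈ K, ⟪x, w⟫ ≤ ⟪p, w⟫)
    (v : EuclideanSpace ℝ (Fin d)) (hv : v ∉ K)
    (u : EuclideanSpace ℝ (Fin d)) (hu : ‖u‖ = 1)
    (hillum : Illuminates (convexHull ℝ (K ∪ {v})) u v) :
    ∀ p ∈ closedCap K v, Illuminates K u p := by
  intro p hp
  have hpf : p ∈ frontier K := by
    rcases hp with h | h
    · exact h.1
    · exact h.1
  have hpK : p ∈ K := by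
    have : frontier K ⊆ closure K := frontier_subset_closure
    rw [hKc.isClosed.closure_eq] at this
    exact this hpf
  obtain ⟨n, ⟨hn1, hnsupp⟩, hnuniq⟩ := hsmooth p hpf
  have huniq' : ∀ m : EuclideanSpace ℝ (Fin d), ‖m‖ = 1 →
      (∀ x ∈ K, ⟪x, m⟫ ≤ ⟪p, m⟫) → m = n := fun m h1 h2 => hnuniq m ⟨h1, h2⟩
  -- Step A : ⟪p, n⟫ ≤ ⟪v, n⟫
  have hApv : ⟪p, n⟫ ≤ ⟪v, n⟫ := by
    rcases hp with hopen | ⟨_, hray⟩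
    · obtain ⟨_, q, hq, α, hα, hpe⟩ := hopen
      have hqlt : ⟪q, n⟫ < ⟪p, n⟫ := strict_lt_of_interior hn1 hnsupp hq
      have hpe' : ⟪p, n⟫ = α * ⟪q, n⟫ + (1 - α) * ⟪v, n⟫ := by
        rw [hpe, inner_add_left, real_inner_smul_left, real_inner_smul_left]
      nlinarith [hα.1, hα.2]
    · by_contra hlt
      push_neg at hlt
      have hwn : ⟪v - p, n⟫ < 0 := by rw [inner_sub_left]; linarith
      obtain ⟨s, hs, hmem⟩ := illum_of_inner_neg hKconv hKint hpK huniq' hwn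
      have hs' : (0:ℝ) < min s 1 := lt_min hs one_pos
      have hmem' : p + (min s 1) • (v - p) ∈ interior K :=
        shrink_interior_step hKconv hpK hs hs' (min_le_left s 1) hmem
      have hrayp : p + (min s 1) • (v - p) ∈ rayThrough v p := by
        refine ⟨1 - min s 1, by linarith [min_le_right s 1], ?_⟩
        rw [sub_smul, one_smul, smul_sub, smul_sub]
        abel
      have : p + (min s 1) • (v - p) ∈ rayThrough v p ∩ interior K := ⟨hrayp, hmem'⟩
      rw [hray] at this
      exact this
  -- Step B : n supports K̂ at v
  have hBsupp : ∀ x ∈ convexHull ℝ (K ∪ {v}), ⟪x, n⟫ ≤ ⟪v, n⟫ := by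
    have hlin : IsLinearMap ℝ (fun x : EuclideanSpace ℝ (Fin d) => ⟪x, n⟫) :=
      ⟨fun a b => inner_add_left a b n, fun c a => real_inner_smul_left a n c⟩
    have hconvset : Convex ℝ {x : EuclideanSpace ℝ (Fin d) | ⟪x, n⟫ ≤ ⟪v, n⟫} :=
      convex_halfSpace_le hlin _
    intro x hx
    refine convexHull_min ?_ hconvset hx
    rintro y (hy | hy)
    · exact le_trans (hnsupp y hy) hApv
    · rw [Set.mem_singleton_iff] at hy
      subst hy
      simp only [Set.mem_setOf_eq, le_refl]
  -- Step C : ⟪u, n⟫ < 0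
  obtain ⟨l, hl, hlu⟩ := hillum
  have hlt : ⟪v + l • u, n⟫ < ⟪v, n⟫ := strict_lt_of_interior hn1 hBsupp hlu
  have hun : ⟪u, n⟫ < 0 := by
    rw [inner_add_left, real_inner_smul_left] at hlt
    nlinarith
  exact illum_of_inner_neg hKconv hKint hpK huniq' hun
end
end

section
/- Let K be a convex body in ℝ^d and let v ∈ ℝ^d \ K. For every point p belonging to ∂K ∩ ∂K̂(v) ∩ ∂(S(K, v)), the ray emanating from v through p does not intersect the interior of K. -/
open scoped Classical RealInnerProductSpace

noncomputable section

/-- Lemma 9: for every `p ∈ ∂K ∩ ∂K̂(v) ∩ ∂(S(K, v))`, the ray from `v` through `p`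
does not meet the interior of `K`. -/
theorem boundary_of_spike_ray_not_intersect (d : ℕ) (K : Set (EuclideanSpace ℝ (Fin d)))
    (hKc : IsCompact K) (hKconv : Convex ℝ K) (hKint : (interior K).Nonempty)
    (v : EuclideanSpace ℝ (Fin d)) (hv : v ∉ K)
    (p : EuclideanSpace ℝ (Fin d))
    (hp : p ∈ frontier K ∩ frontier (convexHull ℝ (K ∪ {v})) ∩
      frontier (convexHull ℝ (K ∪ {v}) \ K)) :
    rayThrough v p ∩ interior K = ∅ := by
  obtain ⟨⟨hp1, hp2⟩, hp3⟩ := hp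
  rw [Set.eq_empty_iff_forall_notMem]
  rintro x ⟨⟨l, hl0, rfl⟩, hxint⟩
  have hvKh : v ∈ convexHull ℝ (K ∪ {v}) :=
    subset_convexHull ℝ _ (Or.inr rfl)
  have hKsub : K ⊆ convexHull ℝ (K ∪ {v}) :=
    (Set.subset_union_left).trans (subset_convexHull ℝ _)
  have hl0' : 0 < l := by
    rcases hl0.eq_or_lt with h | h
    · exfalso
      rw [← h, zero_smul, add_zero] at hxint
      exact hv (interior_subset hxint)
    · exact h
  rcases lt_trichotomy l 1 with hl | hl | hl
  · -- 0 < l < 1 : contradiction with p ∈ frontier (K̂ \ K)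
    set Kh := convexHull ℝ (K ∪ {v}) with hKhdef
    have hU : IsOpen {z : EuclideanSpace ℝ (Fin d) | (1 - l) • v + l • z ∈ interior K} := by
      have hcont : Continuous fun z : EuclideanSpace ℝ (Fin d) => (1 - l) • v + l • z := by
        exact continuous_const.add (continuous_id.const_smul l)
      exact isOpen_interior.preimage hcont
    have hpU : p ∈ {z : EuclideanSpace ℝ (Fin d) | (1 - l) • v + l • z ∈ interior K} := by
      have : (1 - l) • v + l • p = v + l • (p - v) := by module
      simpa [this] using hxint
    have hpcl : p ∈ closure (Kh \ K) := frontier_subset_closure hp3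
    obtain ⟨z, hzU, hzKh, hzK⟩ := mem_closure_iff.mp hpcl _ hU hpU
    -- z ∈ K̂, so z ∈ segment v k for some k ∈ K
    have hKne : K.Nonempty := hKint.mono interior_subset
    have hins : (K ∪ {v} : Set (EuclideanSpace ℝ (Fin d))) = insert v K := by
      ext w; simp [or_comm]
    rw [hKhdef, hins, convexHull_insert hKne, hKconv.convexHull_eq] at hzKh
    rw [mem_convexJoin] at hzKh
    obtain ⟨v', hv', k, hk, hseg⟩ := hzKh
    rw [Set.mem_singleton_iff] at hv'
    rw [hv'] at hseg
    rw [segment_eq_image] at hseg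
    obtain ⟨b, ⟨hb, hb1⟩, hz⟩ := hseg
    simp only at hz
    -- z' := (1-l)•v + l•z ∈ interior K
    have hz' : (1 - l) • v + l • z ∈ K := interior_subset hzU
    have hden : 0 < 1 - l * b := by nlinarith
    have hdne : 1 - l * b ≠ 0 := hden.ne'
    set s : ℝ := b * (1 - l) / (1 - l * b) with hs
    have hs0 : 0 ≤ s := by
      apply div_nonneg _ hden.le
      nlinarith
    have hs1 : s ≤ 1 := by
      rw [div_le_one hden]; nlinarith
    have hzmem : (1 - s) • ((1 - l) • v + l • z) + s • k ∈ K :=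
      hKconv hz' hk (by linarith) hs0 (by ring)
    apply hzK
    have heq : (1 - s) • ((1 - l) • v + l • z) + s • k = z := by
      rw [← hz, hs]
      have hdne' : 1 - b * l ≠ 0 := by rwa [mul_comm]
      match_scalars <;> field_simp <;> ring
    rwa [heq] at hzmem
  · -- l = 1 : then p ∈ interior K, contradicting p ∈ frontier K
    rw [hl, one_smul] at hxint
    have : p ∈ interior K := by simpa using hxint
    exact hp1.2 this
  · -- l > 1 : p ∈ openSegment x v ⊆ interior K̂, contradicting p ∈ frontier K̂
    have hxKh : v + l • (p - v) ∈ interior (convexHull ℝ (K ∪ {v})) :=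
      interior_mono hKsub hxint
    have hvcl : v ∈ closure (convexHull ℝ (K ∪ {v})) := subset_closure hvKh
    have hpseg : p ∈ openSegment ℝ (v + l • (p - v)) v := by
      refine ⟨1 / l, 1 - 1 / l, by positivity, ?_, by ring, ?_⟩
      · have : 1 / l < 1 := by
          rw [div_lt_one (by linarith)]; exact hl
        linarith
      · have hlne : l ≠ 0 := by positivity
        match_scalars <;> field_simp <;> ring
    have : p ∈ interior (convexHull ℝ (K ∪ {v})) :=
      (convex_convexHull ℝ _).openSegment_interior_closure_subset_interior hxKh hvcl hpseg
    exact hp2.2 this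
end
end

section
/- Let K be a convex body in ℝ^d and let V be a finite subset of ℝ^d \ K such that for any pair of distinct points v₁, v₂ ∈ V, the line segment [v₁, v₂] intersects K. Let p ∈ ∂K ∩ ∂K̂(V) and u ∈ S^{d-1}, and suppose p ∉ ∂(S(K, v)) for all v ∈ V. Then the direction u illuminates p with respect to K if and only if u illuminates p with respect to K̂(V). -/
open scoped Classical RealInnerProductSpace

noncomputable section

/-- Lemma 10: with `V ⊆ ℝ^d \\ K` finite and pairwise segments meeting `K`, if
`p ∈ ∂K ∩ ∂K̂(V)` avoids the boundary of every spike, then `u` illuminates `p`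
with respect to `K` iff it does so with respect to `K̂(V)`. -/
theorem not_on_boundary_of_spike (d : ℕ) (K : Set (EuclideanSpace ℝ (Fin d)))
    (hKc : IsCompact K) (hKconv : Convex ℝ K) (hKint : (interior K).Nonempty)
    (V : Set (EuclideanSpace ℝ (Fin d))) (hVfin : V.Finite)
    (hVK : ∀ v ∈ V, v ∉ K)
    (hseg : ∀ v₁ ∈ V, ∀ v₂ ∈ V, v₁ ≠ v₂ → (segment ℝ v₁ v₂ ∩ K).Nonempty)
    (p : EuclideanSpace ℝ (Fin d))
    (hp : p ∈ frontier K ∩ frontier (⋃ v ∈ V, convexHull ℝ (K ∪ {v})))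
    (hnot : ∀ v ∈ V, p ∉ frontier (convexHull ℝ (K ∪ {v}) \ K))
    (u : EuclideanSpace ℝ (Fin d)) (hu : ‖u‖ = 1) :
    Illuminates K u p ↔ Illuminates (⋃ v ∈ V, convexHull ℝ (K ∪ {v})) u p := by

  rcases V.eq_empty_or_nonempty with hV | ⟨v₀, hv₀⟩
  · subst hV; simp at hp
  set Khat : Set (EuclideanSpace ℝ (Fin d)) := ⋃ v ∈ V, convexHull ℝ (K ∪ {v}) with hKhat
  have hpK : p ∈ K := hKc.isClosed.closure_eq ▸ hp.1.1
  have hKsub : ∀ v ∈ V, K ⊆ convexHull ℝ (K ∪ {v}) := fun v hv =>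
    (Set.subset_union_left).trans (subset_convexHull ℝ _)
  constructor
  · rintro ⟨l, hl, hmem⟩
    have hsub2 : convexHull ℝ (K ∪ {v₀}) ⊆ Khat := fun x hx =>
      Set.mem_biUnion hv₀ hx
    exact ⟨l, hl, interior_mono ((hKsub v₀ hv₀).trans hsub2) hmem⟩
  · rintro ⟨l, hl, hmem⟩
    -- the star-shaped property of Khat with respect to p
    have hstar : ∀ y ∈ Khat, segment ℝ p y ⊆ Khat := by
      intro y hy
      rcases Set.mem_iUnion₂.mp hy with ⟨v, hv, hyv⟩
      have hsub2 : convexHull ℝ (K ∪ {v}) ⊆ Khat := fun x hx =>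
        Set.mem_biUnion hv hx
      exact ((convex_convexHull ℝ _).segment_subset (hKsub v hv hpK) hyv).trans hsub2
    -- the good open neighborhood of p
    set N : Set (EuclideanSpace ℝ (Fin d)) :=
      ⋂ v ∈ V, (closure (convexHull ℝ (K ∪ {v}) \ K))ᶜ with hN
    have hNopen : IsOpen N := by
      refine Set.Finite.isOpen_biInter hVfin fun v hv => isClosed_closure.isOpen_compl
    have hpN : p ∈ N := by
      refine Set.mem_iInter₂.mpr fun v hv hpc => ?_
      have hnotS : p ∉ convexHull ℝ (K ∪ {v}) \ K := fun h => h.2 hpK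
      have hnotInt : p ∉ interior (convexHull ℝ (K ∪ {v}) \ K) :=
        fun h => hnotS (interior_subset h)
      exact hnot v hv ⟨hpc, hnotInt⟩
    have hNK : N ∩ Khat ⊆ K := by
      rintro y ⟨hyN, hyKhat⟩
      rcases Set.mem_iUnion₂.mp hyKhat with ⟨v, hv, hyv⟩
      by_contra hyK
      exact (Set.mem_iInter₂.mp hyN v hv) (subset_closure ⟨hyv, hyK⟩)
    -- small ball around p inside N
    rcases Metric.isOpen_iff.mp hNopen p hpN with ⟨δ, hδ, hball⟩
    -- ε-ball around x := p + l • u inside Khat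
    rcases Metric.isOpen_iff.mp isOpen_interior _ hmem with ⟨ε, hε, hballx⟩
    have hballx' : Metric.ball (p + l • u) ε ⊆ Khat := hballx.trans interior_subset
    set t : ℝ := min (1/2) (δ / (2 * l)) with ht
    have htpos : 0 < t := lt_min (by norm_num) (by positivity)
    have ht1 : t < 1 := lt_of_le_of_lt (min_le_left _ _) (by norm_num)
    set z : EuclideanSpace ℝ (Fin d) := p + (t * l) • u with hz
    have hzN : z ∈ N := by
      apply hball
      have : dist z p = t * l := by
        rw [dist_eq_norm]
        simp only [hz, add_sub_cancel_left, norm_smul, hu, mul_one,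
          Real.norm_eq_abs, abs_of_pos (mul_pos htpos hl)]
      rw [Metric.mem_ball, this]
      calc t * l ≤ (δ / (2 * l)) * l := by
            have := min_le_right (1/2) (δ / (2 * l))
            nlinarith
        _ = δ / 2 := by field_simp
        _ < δ := by linarith
    -- z is in the interior of Khat
    have hzint : z ∈ interior Khat := by
      rw [mem_interior]
      refine ⟨Metric.ball z (t * ε), ?_, Metric.isOpen_ball,
        Metric.mem_ball_self (by positivity)⟩
      intro w hw
      set y : EuclideanSpace ℝ (Fin d) := t⁻¹ • (w - (1 - t) • p) with hy
      have hyball : y ∈ Metric.ball (p + l • u) ε := by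
        rw [Metric.mem_ball, dist_eq_norm]
        have hrw : y - (p + l • u) = t⁻¹ • (w - z) := by
          rw [hy, hz]
          match_scalars <;> field_simp <;> ring
        rw [hrw, norm_smul, Real.norm_eq_abs, abs_of_pos (by positivity)]
        rw [Metric.mem_ball, dist_eq_norm] at hw
        calc t⁻¹ * ‖w - z‖ < t⁻¹ * (t * ε) := by
              exact mul_lt_mul_of_pos_left hw (by positivity)
          _ = ε := by field_simp
      have hwseg : w ∈ segment ℝ p y := by
        refine ⟨1 - t, t, by linarith, htpos.le, by ring, ?_⟩
        rw [hy, smul_smul, mul_inv_cancel₀ htpos.ne', one_smul]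
        abel
      exact hstar y (hballx' hyball) hwseg
    refine ⟨t * l, by positivity, ?_⟩
    have : z ∈ interior K := by
      have hsub : interior Khat ∩ N ⊆ K := fun w ⟨h1, h2⟩ => hNK ⟨h2, interior_subset h1⟩
      exact interior_maximal hsub (isOpen_interior.inter hNopen) ⟨hzint, hzN⟩
    exact this
end
end

section
/- Let K be a convex body in ℝ^d and let V₁, V₂ be finite subsets of ℝ^d \ K such that for each of V₁ and V₂, the segment joining any two distinct points of the set intersects K. Suppose K has a unique supporting hyperplane at each point of ⋃_{v∈V₁} (∂K ∩ ∂K̂(v) ∩ ∂(S(K, v))). If K̂(V₂) ⊆ K̂(V₁) and the cap body K̂(V₁) is m-fold illuminated by a multiset U of directions in S^{d-1}, then K̂(V₂) is also m-fold illuminated by U; consequently I^m(K̂(V₂)) ≤ I^m(K̂(V₁)). -/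
open scoped Classical RealInnerProductSpace

set_option maxHeartbeats 1000000

noncomputable section

section Helpers

variable {d : ℕ}

local notation "E" => EuclideanSpace ℝ (Fin d)

/-- Membership in `conv (K ∪ {v})` as an explicit convex combination. -/
lemma mem_khat_iff {K : Set E} (hKne : K.Nonempty) (hKconv : Convex ℝ K)
    {v x : E} :
    x ∈ convexHull ℝ (K ∪ {v}) ↔
      ∃ a b : ℝ, ∃ k ∈ K, 0 ≤ a ∧ 0 ≤ b ∧ a + b = 1 ∧ a • v + b • k = x := by
  rw [Set.union_singleton, convexHull_insert hKne, mem_convexJoin]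
  constructor
  · rintro ⟨y, hy, z, hz, hxseg⟩
    rw [Set.mem_singleton_iff] at hy
    subst hy
    rw [hKconv.convexHull_eq] at hz
    obtain ⟨a, b, ha, hb, hab, hx⟩ := hxseg
    exact ⟨a, b, z, hz, ha, hb, hab, hx⟩
  · rintro ⟨a, b, k, hk, ha, hb, hab, hx⟩
    exact ⟨v, rfl, k, by rwa [hKconv.convexHull_eq], ⟨a, b, ha, hb, hab, hx⟩⟩

lemma K_subset_khat (K : Set E) (v : E) : K ⊆ convexHull ℝ (K ∪ {v}) :=
  Set.subset_union_left.trans (subset_convexHull ℝ _)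

lemma apex_mem_khat (K : Set E) (v : E) : v ∈ convexHull ℝ (K ∪ {v}) :=
  subset_convexHull ℝ _ (Set.mem_union_right _ rfl)

/-- `conv (K ∪ {v})` is compact. -/
lemma isCompact_khat {K : Set E} (hKne : K.Nonempty) (hKconv : Convex ℝ K)
    (hKc : IsCompact K) (v : E) : IsCompact (convexHull ℝ (K ∪ {v})) := by
  have himg : convexHull ℝ (K ∪ {v}) =
      (fun q : ℝ × E => q.1 • v + (1 - q.1) • q.2) '' (Set.Icc (0:ℝ) 1 ×ˢ K) := by
    ext x
    rw [mem_khat_iff hKne hKconv]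
    constructor
    · rintro ⟨a, b, k, hk, ha, hb, hab, hx⟩
      exact ⟨⟨a, k⟩, ⟨⟨ha, by linarith⟩, hk⟩, by simpa [show 1 - a = b by linarith] using hx⟩
    · rintro ⟨⟨a, k⟩, ⟨⟨ha, ha1⟩, hk⟩, hx⟩
      exact ⟨a, 1 - a, k, hk, ha, by linarith, by ring, hx⟩
  rw [himg]
  exact (isCompact_Icc.prod hKc).image (by fun_prop)

/-- A linear functional bounded on `K` and at `v` is bounded on `conv (K ∪ {v})`. -/
lemma khat_le {K : Set E} {f : E →L[ℝ] ℝ} {c : ℝ} (hK : ∀ x ∈ K, f x ≤ c)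
    {v : E} (hv : f v ≤ c) : ∀ x ∈ convexHull ℝ (K ∪ {v}), f x ≤ c := by
  intro x hx
  have hsub : convexHull ℝ (K ∪ {v}) ⊆ {y | f y ≤ c} := by
    apply convexHull_min
    · rintro y (hy | hy)
      · exact hK y hy
      · rw [Set.mem_singleton_iff] at hy; subst hy; exact hv
    · exact convex_halfSpace_le f.toLinearMap.isLinear c
  exact hsub hx

/-- A point where a nonzero functional attains at least its sup over `L`
cannot be in the interior of `L`. -/
lemma not_mem_interior_of_sup {L : Set E} {f : E →L[ℝ] ℝ} (hf : f ≠ 0) {c : ℝ}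
    (hL : ∀ x ∈ L, f x ≤ c) {x : E} (hx : c ≤ f x) :
    x ∉ interior L := by
  intro hint
  obtain ⟨y, hy⟩ : ∃ y, 0 < f y := by
    by_contra h
    push_neg at h
    apply hf
    ext z
    have h1 := h z
    have h2 := h (-z)
    simp only [map_neg] at h2
    simp only [ContinuousLinearMap.zero_apply]
    linarith
  have hyne : y ≠ 0 := by
    intro h; rw [h, map_zero] at hy; exact lt_irrefl 0 hy
  have hynorm : (0:ℝ) < ‖y‖ := norm_pos_iff.2 hyne
  obtain ⟨r, hr, hball⟩ := Metric.isOpen_iff.1 isOpen_interior x hint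
  have hmem : x + (r / (2 * ‖y‖)) • y ∈ L := by
    apply interior_subset
    apply hball
    have hsm : ‖(r / (2 * ‖y‖)) • y‖ = r / 2 := by
      rw [norm_smul, Real.norm_eq_abs, abs_of_pos (by positivity)]
      field_simp
    rw [Metric.mem_ball, dist_eq_norm, add_sub_cancel_left, hsm]
    linarith
  have hle := hL _ hmem
  rw [map_add, map_smul, smul_eq_mul] at hle
  nlinarith [mul_pos (div_pos hr (by positivity : (0:ℝ) < 2 * ‖y‖)) hy]

/-- Separation of a ray from the interior of `K`: if the ray `q + ℝ≥0 • u` misses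
`interior K`, there is a nonzero functional supporting `K` at `q` with `0 ≤ f u`. -/
lemma ray_sep {K : Set E} (hKconv : Convex ℝ K) (hKint : (interior K).Nonempty)
    {q u : E} (hq : ∀ μ : ℝ, 0 ≤ μ → q + μ • u ∉ interior K) :
    ∃ f : E →L[ℝ] ℝ, f ≠ 0 ∧ (∀ x ∈ K, f x ≤ f q) ∧ 0 ≤ f u := by
  set R : Set E := (fun μ : ℝ => q + μ • u) '' Set.Ici 0 with hR
  have hRconv : Convex ℝ R := by
    rintro x ⟨μ₁, hμ₁, rfl⟩ y ⟨μ₂, hμ₂, rfl⟩ a b ha hb hab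
    refine ⟨a * μ₁ + b * μ₂, ?_, ?_⟩
    · have : (0:ℝ) ≤ a * μ₁ := mul_nonneg ha hμ₁
      have : (0:ℝ) ≤ b * μ₂ := mul_nonneg hb hμ₂
      simp only [Set.mem_Ici]; positivity
    · have hb' : b = 1 - a := by linarith
      subst hb'
      simp only
      module
  have hdisj : Disjoint (interior K) R := by
    rw [Set.disjoint_right]
    rintro x ⟨μ, hμ, rfl⟩
    exact hq μ hμ
  obtain ⟨f, c, hfK, hfR⟩ :=
    geometric_hahn_banach_open (hKconv.interior) isOpen_interior hRconv hdisj
  have hq0 : q ∈ R := ⟨0, Set.self_mem_Ici, by simp⟩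
  have hfq : c ≤ f q := hfR q hq0
  have hfne : f ≠ 0 := by
    rintro rfl
    obtain ⟨z, hz⟩ := hKint
    have h1 := hfK z hz
    have h2 := hfR q hq0
    simp only [ContinuousLinearMap.zero_apply] at h1 h2
    linarith
  have hfu : 0 ≤ f u := by
    by_contra h
    push_neg at h
    have hX : 0 ≤ (f q - c) / (-f u) := div_nonneg (by linarith) (by linarith)
    have hmem : q + ((f q - c) / (-f u) + 1) • u ∈ R := ⟨_, Set.mem_Ici.2 (by linarith), rfl⟩
    have hle := hfR _ hmem
    rw [map_add, map_smul, smul_eq_mul] at hle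
    have hdiv : (f q - c) / (-f u) * (-f u) = f q - c := div_mul_cancel₀ _ (by linarith)
    nlinarith [hle, hdiv]
  have hK_le : ∀ x ∈ K, f x ≤ c := by
    intro x hx
    obtain ⟨z, hz⟩ := hKint
    by_contra h
    push_neg at h
    have hA : (0:ℝ) < 2 * (|f x - f z| + 1) := by positivity
    set t : ℝ := min 1 ((f x - c) / (2 * (|f x - f z| + 1))) with ht
    have htpos : 0 < t := lt_min one_pos (div_pos (by linarith) hA)
    have ht1 : t ≤ 1 := min_le_left _ _
    have htle : t ≤ (f x - c) / (2 * (|f x - f z| + 1)) := min_le_right _ _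
    have htle' : t * (2 * (|f x - f z| + 1)) ≤ f x - c := by
      rw [← le_div_iff₀ hA]
      exact htle
    have hmem : (1 - t) • x + t • z ∈ interior K :=
      hKconv.combo_self_interior_mem_interior hx hz (by linarith) htpos (by ring)
    have hlt := hfK _ hmem
    rw [map_add, map_smul, map_smul, smul_eq_mul, smul_eq_mul] at hlt
    have hb : -|f x - f z| ≤ f z - f x := by
      rw [abs_sub_comm]
      exact neg_abs_le _
    have hprod : t * (-|f x - f z|) ≤ t * (f z - f x) :=
      mul_le_mul_of_nonneg_left hb htpos.le
    nlinarith [hlt, htle', hprod]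
  refine ⟨f, hfne, fun x hx => le_trans (hK_le x hx) hfq, hfu⟩

/-- If the segment from `v₁` to `v'` meets `K`, `v₁ ∉ K`, and `f ≤ f v₁` on `K`,
then `f v' ≤ f v₁`. -/
lemma apex_le_of_seg {K : Set E} {f : E →L[ℝ] ℝ} {v₁ v' : E}
    (hK : ∀ x ∈ K, f x ≤ f v₁) (hv₁ : v₁ ∉ K)
    (hz : (segment ℝ v₁ v' ∩ K).Nonempty) : f v' ≤ f v₁ := by
  obtain ⟨z, ⟨a, b, ha, hb, hab, hzeq⟩, hzK⟩ := hz
  have hfz : f z ≤ f v₁ := hK z hzK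
  have hbpos : 0 < b := by
    rcases lt_or_eq_of_le hb with h | h
    · exact h
    · exfalso
      have : a = 1 := by linarith
      rw [← hzeq, ← h, this] at hzK
      simp at hzK
      exact hv₁ hzK
  have hfz' : a * f v₁ + b * f v' ≤ f v₁ := by
    rw [← hzeq] at hfz
    rw [map_add, map_smul, map_smul, smul_eq_mul, smul_eq_mul] at hfz
    exact hfz
  by_contra hgt
  push_neg at hgt
  have hlt := mul_lt_mul_of_pos_left hgt hbpos
  have he : a * f v₁ + b * f v₁ = f v₁ := by rw [← add_mul, hab, one_mul]
  linarith


/-- If a direction illuminates an apex `v₁` of the cap body, then the ray from `v₁`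
enters the interior of `K`. -/
lemma apex_into_K {K : Set E} (hKconv : Convex ℝ K)
    (hKint : (interior K).Nonempty) {V₁ : Set E} (hV₁K : ∀ v ∈ V₁, v ∉ K)
    (hseg₁ : ∀ v₁ ∈ V₁, ∀ v₂ ∈ V₁, v₁ ≠ v₂ → (segment ℝ v₁ v₂ ∩ K).Nonempty)
    {v₁ : E} (hv₁ : v₁ ∈ V₁) {u : E}
    (hIl : Illuminates (⋃ v ∈ V₁, convexHull ℝ (K ∪ {v})) u v₁) :
    ∃ μ : ℝ, 0 < μ ∧ v₁ + μ • u ∈ interior K := by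
  by_contra hcon
  push_neg at hcon
  have hray : ∀ μ : ℝ, 0 ≤ μ → v₁ + μ • u ∉ interior K := by
    intro μ hμ
    rcases eq_or_lt_of_le hμ with h | h
    · intro hmem
      rw [← h, zero_smul, add_zero] at hmem
      exact hV₁K v₁ hv₁ (interior_subset hmem)
    · exact hcon μ h
  obtain ⟨f, hfne, hfK, hfu⟩ := ray_sep hKconv hKint hray
  have hle : ∀ x ∈ ⋃ v ∈ V₁, convexHull ℝ (K ∪ {v}), f x ≤ f v₁ := by
    intro x hx
    obtain ⟨v', hv', hx'⟩ := Set.mem_iUnion₂.1 hx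
    refine khat_le hfK ?_ x hx'
    rcases eq_or_ne v' v₁ with h | h
    · rw [h]
    · exact apex_le_of_seg hfK (hV₁K v₁ hv₁) (hseg₁ v₁ hv₁ v' hv' (Ne.symm h))
  obtain ⟨l, hl, hmem⟩ := hIl
  have hge : f v₁ ≤ f (v₁ + l • u) := by
    rw [map_add, map_smul, smul_eq_mul]
    nlinarith [mul_nonneg hl.le hfu]
  exact not_mem_interior_of_sup hfne hle hge hmem

/-- A point of the interior of `K` has strictly smaller inner product with an
outer normal at `p` than `p` itself. -/
lemma interior_lt_inner {K : Set E} {p w₀ x : E} (hw : ‖w₀‖ = 1)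
    (hsup : ∀ y ∈ K, ⟪y, w₀⟫ ≤ ⟪p, w₀⟫) (hx : x ∈ interior K) :
    ⟪x, w₀⟫ < ⟪p, w₀⟫ := by
  obtain ⟨r, hr, hball⟩ := Metric.isOpen_iff.1 isOpen_interior x hx
  have hmem : x + (r / 2) • w₀ ∈ K := by
    apply interior_subset
    apply hball
    rw [Metric.mem_ball, dist_eq_norm, add_sub_cancel_left, norm_smul, Real.norm_eq_abs,
      abs_of_pos (by linarith : (0:ℝ) < r / 2), hw, mul_one]
    linarith
  have hle := hsup _ hmem
  rw [inner_add_left, real_inner_smul_left] at hle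
  have hww : ⟪w₀, w₀⟫ = (1:ℝ) := by
    rw [real_inner_self_eq_norm_mul_norm, hw]; norm_num
  rw [hww, mul_one] at hle
  linarith

/-- At a smooth boundary point, any direction with negative inner product with
the unique outer unit normal enters the interior of `K`. -/
lemma smooth_illum {K : Set E} (hKconv : Convex ℝ K) (hKint : (interior K).Nonempty)
    {p w₀ : E} (hpK : p ∈ K) (hpint : p ∉ interior K)
    (huniq : ∀ w : E, (‖w‖ = 1 ∧ ∀ x ∈ K, ⟪x, w⟫ ≤ ⟪p, w⟫) → w = w₀)
    {u : E} (hu : ⟪u, w₀⟫ < 0) : ∃ μ : ℝ, 0 < μ ∧ p + μ • u ∈ interior K := by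
  by_contra hcon
  push_neg at hcon
  have hray : ∀ μ : ℝ, 0 ≤ μ → p + μ • u ∉ interior K := by
    intro μ hμ
    rcases eq_or_lt_of_le hμ with h | h
    · rw [← h, zero_smul, add_zero]; exact hpint
    · exact hcon μ h
  obtain ⟨f, hfne, hfK, hfu⟩ := ray_sep hKconv hKint hray
  set w : E := (InnerProductSpace.toDual ℝ (EuclideanSpace ℝ (Fin d))).symm f with hwdef
  have hinner : ∀ x : E, ⟪w, x⟫ = f x := fun x => InnerProductSpace.toDual_symm_apply
  have hwne : w ≠ 0 := by
    intro h
    apply hfne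
    ext x
    have h2 := hinner x
    rw [h, inner_zero_left] at h2
    rw [ContinuousLinearMap.zero_apply, ← h2]
  have hnw : (0:ℝ) < ‖w‖ := norm_pos_iff.2 hwne
  have hprops : ‖(‖w‖⁻¹ • w)‖ = 1 ∧ ∀ x ∈ K, ⟪x, ‖w‖⁻¹ • w⟫ ≤ ⟪p, ‖w‖⁻¹ • w⟫ := by
    constructor
    · rw [norm_smul, norm_inv, norm_norm]
      exact inv_mul_cancel₀ (ne_of_gt hnw)
    · intro x hx
      rw [real_inner_smul_right, real_inner_smul_right]
      apply mul_le_mul_of_nonneg_left _ (by positivity)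
      have hxw : (inner ℝ x w : ℝ) = f x := by rw [real_inner_comm]; exact hinner x
      have hpw : (inner ℝ p w : ℝ) = f p := by rw [real_inner_comm]; exact hinner p
      rw [hxw, hpw]
      exact hfK x hx
  have hweq := huniq _ hprops
  have huw : (inner ℝ u w : ℝ) = f u := by rw [real_inner_comm]; exact hinner u
  have hcalc : ⟪u, w₀⟫ = ‖w‖⁻¹ * f u := by
    rw [← hweq, real_inner_smul_right, huw]
  have : (0:ℝ) ≤ ‖w‖⁻¹ * f u := mul_nonneg (inv_nonneg.2 hnw.le) hfu
  linarith [hcalc ▸ hu]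

/-- Rim inequality: if `p` is a smooth boundary point of `K` lying in the closure of the
spike of `v₁`, then the apex `v₁` lies on or above the tangent hyperplane at `p`. -/
lemma rim_ineq {K : Set E} (hKne : K.Nonempty) (hKconv : Convex ℝ K)
    (hKint : (interior K).Nonempty)
    {p w₀ v₁ : E} (hpK : p ∈ K) (hpint : p ∉ interior K)
    (hw : ‖w₀‖ = 1) (hsup : ∀ x ∈ K, ⟪x, w₀⟫ ≤ ⟪p, w₀⟫)
    (huniq : ∀ w : E, (‖w‖ = 1 ∧ ∀ x ∈ K, ⟪x, w⟫ ≤ ⟪p, w⟫) → w = w₀)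
    (hv₁ : v₁ ∉ K) (hcl : p ∈ closure (convexHull ℝ (K ∪ {v₁}) \ K)) :
    ⟪p, w₀⟫ ≤ ⟪v₁, w₀⟫ := by
  by_contra hlt
  push_neg at hlt
  set δ : ℝ := ⟪p, w₀⟫ - ⟪v₁, w₀⟫ with hδ
  have hδpos : 0 < δ := by rw [hδ]; linarith
  have hudir : ⟪v₁ - p, w₀⟫ < 0 := by rw [inner_sub_left]; linarith
  obtain ⟨ε', hε', hz'⟩ := smooth_illum hKconv hKint hpK hpint huniq hudir
  set ε₀ : ℝ := min ε' (1/2 : ℝ) with hε₀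
  have hε₀pos : 0 < ε₀ := lt_min hε' (by norm_num)
  have hε₀half : ε₀ ≤ 1/2 := min_le_right _ _
  have hε₀le : ε₀ ≤ ε' := min_le_left _ _
  have hz : p + ε₀ • (v₁ - p) ∈ interior K := by
    have heq : p + ε₀ • (v₁ - p) =
        (1 - ε₀ / ε') • p + (ε₀ / ε') • (p + ε' • (v₁ - p)) := by
      rw [smul_add, smul_smul, div_mul_cancel₀ _ (ne_of_gt hε')]
      module
    rw [heq]
    exact hKconv.combo_self_interior_mem_interior hpK hz'
      (by rw [sub_nonneg]; exact (div_le_one hε').2 hε₀le) (by positivity) (by ring)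
  set z : E := p + ε₀ • (v₁ - p) with hzdef
  obtain ⟨ρ, hρ, hball⟩ := Metric.isOpen_iff.1 isOpen_interior z hz
  set M : ℝ := ‖p - v₁‖ with hM
  have hMnn : 0 ≤ M := norm_nonneg _
  set η : ℝ := min (δ * ε₀ / 2) (ρ * δ / (4 * (δ + M))) with hη
  have hηpos : 0 < η := lt_min (by positivity) (by positivity)
  obtain ⟨s, hsS, hsd⟩ := Metric.mem_closure_iff.1 hcl η hηpos
  obtain ⟨hsK₂, hsnK⟩ := hsS
  obtain ⟨a, b, k, hk, ha, hb, hab, hseq⟩ := (mem_khat_iff hKne hKconv).1 hsK₂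
  have hapos : 0 < a := by
    rcases lt_or_eq_of_le ha with h | h
    · exact h
    · exfalso
      apply hsnK
      rw [← hseq, ← h, zero_smul, zero_add, show b = 1 by linarith, one_smul]
      exact hk
  have hsp : ‖p - s‖ < η := by rw [← dist_eq_norm]; exact hsd
  have hinner_s : ⟪p, w₀⟫ - η < ⟪s, w₀⟫ := by
    have h1 : ⟪p - s, w₀⟫ ≤ ‖p - s‖ := by
      calc ⟪p - s, w₀⟫ ≤ ‖p - s‖ * ‖w₀‖ := real_inner_le_norm _ _
        _ = ‖p - s‖ := by rw [hw, mul_one]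
    rw [inner_sub_left] at h1
    linarith
  have hsub_s : ⟪s, w₀⟫ ≤ ⟪p, w₀⟫ - a * δ := by
    rw [← hseq, inner_add_left, real_inner_smul_left, real_inner_smul_left]
    have hkb := hsup k hk
    have h2 : b * ⟪k, w₀⟫ ≤ b * ⟪p, w₀⟫ := mul_le_mul_of_nonneg_left hkb hb
    have h3 : a * δ = a * ⟪p, w₀⟫ - a * ⟪v₁, w₀⟫ := by rw [hδ]; ring
    have h4 : a * ⟪p, w₀⟫ + b * ⟪p, w₀⟫ = ⟪p, w₀⟫ := by rw [← add_mul, hab, one_mul]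
    linarith
  have haδ : a * δ < η := by linarith
  have hη1 : η ≤ δ * ε₀ / 2 := min_le_left _ _
  have haε : a < ε₀ := by
    have h5 : a * δ < ε₀ * δ := by nlinarith
    exact lt_of_mul_lt_mul_right h5 hδpos.le
  have ha1 : a < 1 := by linarith
  have hbpos : 0 < b := by linarith
  -- bound ‖k - p‖ < ρ
  have h1 : b • (k - p) = (s - p) + a • (p - v₁) := by
    rw [← hseq]
    have hba : b = 1 - a := by linarith
    rw [hba]
    module
  have hnorm1 : b * ‖k - p‖ < η + a * M := by
    have h2 := congrArg norm h1
    rw [norm_smul, Real.norm_eq_abs, abs_of_pos hbpos] at h2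
    calc b * ‖k - p‖ = ‖(s - p) + a • (p - v₁)‖ := h2
      _ ≤ ‖s - p‖ + ‖a • (p - v₁)‖ := norm_add_le _ _
      _ = ‖s - p‖ + a * M := by
          rw [norm_smul, Real.norm_eq_abs, abs_of_nonneg ha, hM]
      _ < η + a * M := by
          have : ‖s - p‖ < η := by rw [norm_sub_rev]; exact hsp
          linarith
  have hd : 0 < δ + M := by linarith
  have hηb : η ≤ ρ * δ / (4 * (δ + M)) := min_le_right _ _
  have e0 : ρ * δ / (4 * (δ + M)) * (δ + M) = ρ * δ / 4 := by
    field_simp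
  have e1 : η * (δ + M) ≤ ρ * δ / 4 :=
    le_trans (mul_le_mul_of_nonneg_right hηb hd.le) (le_of_eq e0)
  have haM : a * M ≤ (η / δ) * M := by
    apply mul_le_mul_of_nonneg_right _ hMnn
    rw [le_div_iff₀ hδpos]
    linarith
  have e2 : η + (η / δ) * M = η * (δ + M) / δ := by field_simp
  have e3 : η * (δ + M) / δ ≤ ρ * δ / 4 / δ := by
    gcongr
  have e4 : ρ * δ / 4 / δ = ρ / 4 := by field_simp
  have hkρ4 : b * ‖k - p‖ < ρ / 4 := by
    calc b * ‖k - p‖ < η + a * M := hnorm1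
      _ ≤ η + (η / δ) * M := by linarith
      _ = η * (δ + M) / δ := e2
      _ ≤ ρ * δ / 4 / δ := e3
      _ = ρ / 4 := e4
  have hb2 : (1:ℝ)/2 ≤ b := by linarith
  have hkp : ‖k - p‖ < ρ := by
    nlinarith [norm_nonneg (k - p), mul_nonneg (by linarith : (0:ℝ) ≤ b - 1/2) (norm_nonneg (k - p))]
  -- the contradiction: s ∈ K
  set σ : ℝ := a / ε₀ with hσ
  have hσpos : 0 < σ := div_pos hapos hε₀pos
  have hσ1 : σ < 1 := (div_lt_one hε₀pos).2 haε
  have haσ : a = σ * ε₀ := by rw [hσ, div_mul_cancel₀ _ (ne_of_gt hε₀pos)]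
  set w : E := (1 - σ) • k + σ • z with hwdef
  have hsweq : s - w = (σ * (1 - ε₀)) • (k - p) := by
    rw [hwdef, hzdef, ← hseq]
    have hba : b = 1 - a := by linarith
    rw [hba, haσ]
    module
  have hone : (0:ℝ) < 1 - ε₀ := by linarith
  have hsw : ‖s - w‖ < σ * ρ := by
    rw [hsweq, norm_smul, Real.norm_eq_abs, abs_of_pos (by positivity)]
    have h6 : (1 - ε₀) * ‖k - p‖ < ρ := by
      nlinarith [norm_nonneg (k - p)]
    calc σ * (1 - ε₀) * ‖k - p‖ = σ * ((1 - ε₀) * ‖k - p‖) := by ring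
      _ < σ * ρ := by exact mul_lt_mul_of_pos_left h6 hσpos
  set q' : E := z + σ⁻¹ • (s - w) with hq'
  have hq'ball : q' ∈ Metric.ball z ρ := by
    rw [Metric.mem_ball, dist_eq_norm, hq', add_sub_cancel_left, norm_smul, Real.norm_eq_abs,
      abs_of_pos (inv_pos.2 hσpos)]
    have h7 : σ⁻¹ * ‖s - w‖ < σ⁻¹ * (σ * ρ) := mul_lt_mul_of_pos_left hsw (inv_pos.2 hσpos)
    rw [← mul_assoc, inv_mul_cancel₀ (ne_of_gt hσpos), one_mul] at h7
    exact h7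
  have hq'K : q' ∈ K := interior_subset (hball hq'ball)
  apply hsnK
  have heqs : s = (1 - σ) • k + σ • q' := by
    rw [hq', smul_add, smul_smul, mul_inv_cancel₀ (ne_of_gt hσpos), one_smul, hwdef]
    module
  rw [heqs]
  exact hKconv hk hq'K (by linarith) hσpos.le (by ring)

/-- Each apex of the cap body lies on its boundary. -/
lemma apex_frontier {K : Set E} (hKne : K.Nonempty) (hKconv : Convex ℝ K) (hKc : IsCompact K)
    {V₁ : Set E} (hV₁K : ∀ v ∈ V₁, v ∉ K)
    (hseg₁ : ∀ v₁ ∈ V₁, ∀ v₂ ∈ V₁, v₁ ≠ v₂ → (segment ℝ v₁ v₂ ∩ K).Nonempty)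
    {v₁ : E} (hv₁ : v₁ ∈ V₁) :
    v₁ ∈ frontier (⋃ v ∈ V₁, convexHull ℝ (K ∪ {v})) := by
  obtain ⟨f, c, hfK, hfv⟩ := geometric_hahn_banach_closed_point hKconv hKc.isClosed (hV₁K v₁ hv₁)
  have hfne : f ≠ 0 := by
    rintro rfl
    obtain ⟨z, hz⟩ := hKne
    have h1 := hfK z hz
    simp only [ContinuousLinearMap.zero_apply] at h1 hfv
    linarith
  have hKle : ∀ x ∈ K, f x ≤ f v₁ := fun x hx => le_of_lt (lt_trans (hfK x hx) hfv)
  have hle : ∀ x ∈ ⋃ v ∈ V₁, convexHull ℝ (K ∪ {v}), f x ≤ f v₁ := by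
    intro x hx
    obtain ⟨v', hv', hx'⟩ := Set.mem_iUnion₂.1 hx
    refine khat_le hKle ?_ x hx'
    rcases eq_or_ne v' v₁ with h | h
    · rw [h]
    · exact apex_le_of_seg hKle (hV₁K v₁ hv₁) (hseg₁ v₁ hv₁ v' hv' (Ne.symm h))
  exact ⟨subset_closure (Set.mem_biUnion hv₁ (apex_mem_khat K v₁)),
    not_mem_interior_of_sup hfne hle (le_refl (f v₁))⟩

/-- A point in the interior of `conv (K ∪ {v})` has a representation with positive
weight on the apex `v`. -/
lemma rep_of_mem_interior_khat {K : Set E} (hKne : K.Nonempty) (hKconv : Convex ℝ K)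
    {v p : E} (hp : p ∈ interior (convexHull ℝ (K ∪ {v}))) :
    ∃ a : ℝ, ∃ k ∈ K, 0 < a ∧ a ≤ 1 ∧ p = a • v + (1 - a) • k := by
  rcases eq_or_ne p v with h | h
  · obtain ⟨k, hk⟩ := hKne
    exact ⟨1, k, hk, one_pos, le_refl 1, by rw [h]; simp⟩
  obtain ⟨r, hr, hball⟩ := Metric.isOpen_iff.1 isOpen_interior p hp
  have hpv : (0:ℝ) < ‖p - v‖ := by
    rw [norm_pos_iff, sub_ne_zero]
    exact h
  set dlt : ℝ := r / (2 * ‖p - v‖) with hdlt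
  have hdpos : 0 < dlt := by positivity
  have hqmem : p + dlt • (p - v) ∈ convexHull ℝ (K ∪ {v}) := by
    apply interior_subset
    apply hball
    have hcalc : dlt * ‖p - v‖ = r / 2 := by
      rw [hdlt]; field_simp
    rw [Metric.mem_ball, dist_eq_norm, add_sub_cancel_left, norm_smul, Real.norm_eq_abs,
      abs_of_pos hdpos, hcalc]
    linarith
  obtain ⟨a', b', k, hk, ha', hb', hab', hqeq⟩ := (mem_khat_iff hKne hKconv).1 hqmem
  refine ⟨(a' + dlt) / (1 + dlt), k, hk, by positivity, ?_, ?_⟩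
  · rw [div_le_one (by positivity)]
    linarith
  · have h1 : (1 + dlt) • p = (a' + dlt) • v + b' • k := by
      rw [← sub_eq_zero,
        show (1 + dlt) • p - ((a' + dlt) • v + b' • k) =
          -(a' • v + b' • k - (p + dlt • (p - v))) from by module, hqeq, sub_self, neg_zero]
    have h2 : p = ((1:ℝ) + dlt)⁻¹ • ((a' + dlt) • v + b' • k) := by
      rw [← h1, smul_smul, inv_mul_cancel₀ (by positivity), one_smul]
    rw [h2, smul_add, smul_smul, smul_smul]
    have e5 : (1 - (a' + dlt) / (1 + dlt)) = b' / (1 + dlt) := by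
      field_simp
      linarith
    rw [e5]
    rw [div_eq_inv_mul, div_eq_inv_mul]

/-- Transfer illumination from an apex into the interior of `K` along a combination. -/
lemma into_K_of_apex_combo {K : Set E} (hKconv : Convex ℝ K)
    {v₁ k p u : E} {a : ℝ} (ha : 0 < a) (ha1 : a ≤ 1) (hk : k ∈ K)
    (hp : p = a • v₁ + (1 - a) • k) {μ : ℝ} (hμ : 0 < μ)
    (hint : v₁ + μ • u ∈ interior K) :
    ∃ l : ℝ, 0 < l ∧ p + l • u ∈ interior K := by
  refine ⟨a * μ, by positivity, ?_⟩
  have heq : p + (a * μ) • u = a • (v₁ + μ • u) + (1 - a) • k := by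
    rw [hp]; module
  rw [heq]
  exact hKconv.combo_interior_closure_mem_interior hint (subset_closure hk) ha
    (by linarith) (by ring)

end Helpers

/-- Lemma 11: if `K` has a unique supporting hyperplane at every point of
`⋃_{v ∈ V₁} (∂K ∩ ∂K̂(v) ∩ ∂(S(K, v)))`, `K̂(V₂) ⊆ K̂(V₁)`, and `K̂(V₁)` is `m`-fold
illuminated by `U`, then `K̂(V₂)` is `m`-fold illuminated by `U`; consequently
`I^m(K̂(V₂)) ≤ I^m(K̂(V₁))`. -/
theorem sub_cap_body_must_be_illuminated (d m : ℕ) (hm : 1 ≤ m)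
    (K : Set (EuclideanSpace ℝ (Fin d)))
    (hKc : IsCompact K) (hKconv : Convex ℝ K) (hKint : (interior K).Nonempty)
    (V₁ V₂ : Set (EuclideanSpace ℝ (Fin d))) (hV₁fin : V₁.Finite) (hV₂fin : V₂.Finite)
    (hV₁K : ∀ v ∈ V₁, v ∉ K) (hV₂K : ∀ v ∈ V₂, v ∉ K)
    (hseg₁ : ∀ v₁ ∈ V₁, ∀ v₂ ∈ V₁, v₁ ≠ v₂ → (segment ℝ v₁ v₂ ∩ K).Nonempty)
    (hseg₂ : ∀ v₁ ∈ V₂, ∀ v₂ ∈ V₂, v₁ ≠ v₂ → (segment ℝ v₁ v₂ ∩ K).Nonempty)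
    (hsmooth : ∀ v ∈ V₁,
      ∀ p ∈ frontier K ∩ frontier (convexHull ℝ (K ∪ {v})) ∩
        frontier (convexHull ℝ (K ∪ {v}) \ K),
      ∃! w : EuclideanSpace ℝ (Fin d), ‖w‖ = 1 ∧ ∀ x ∈ K, ⟪x, w⟫ ≤ ⟪p, w⟫)
    (hsub : (⋃ v ∈ V₂, convexHull ℝ (K ∪ {v})) ⊆ ⋃ v ∈ V₁, convexHull ℝ (K ∪ {v}))
    (U : Multiset (EuclideanSpace ℝ (Fin d)))
    (hU : MFoldIlluminates m (⋃ v ∈ V₁, convexHull ℝ (K ∪ {v})) U) :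
    MFoldIlluminates m (⋃ v ∈ V₂, convexHull ℝ (K ∪ {v})) U ∧
      illumNum m (⋃ v ∈ V₂, convexHull ℝ (K ∪ {v})) ≤
        illumNum m (⋃ v ∈ V₁, convexHull ℝ (K ∪ {v})) := by
  classical
  obtain ⟨x₀, hx₀⟩ := hKint
  have hKne : K.Nonempty := ⟨x₀, interior_subset hx₀⟩
  have hKint' : (interior K).Nonempty := ⟨x₀, hx₀⟩
  have hL₂c : IsCompact (⋃ v ∈ V₂, convexHull ℝ (K ∪ {v})) :=
    hV₂fin.isCompact_biUnion (fun v _ => isCompact_khat hKne hKconv hKc v)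
  have main : ∀ U' : Multiset (EuclideanSpace ℝ (Fin d)),
      MFoldIlluminates m (⋃ v ∈ V₁, convexHull ℝ (K ∪ {v})) U' →
      MFoldIlluminates m (⋃ v ∈ V₂, convexHull ℝ (K ∪ {v})) U' := by
    intro U' hU'
    refine ⟨hU'.1, ?_⟩
    intro p hp
    rw [hL₂c.isClosed.frontier_eq, Set.mem_diff] at hp
    obtain ⟨hpL₂, hpnint₂⟩ := hp
    have hpL₁ : p ∈ ⋃ v ∈ V₁, convexHull ℝ (K ∪ {v}) := hsub hpL₂
    obtain ⟨v₂0, hv₂0, hpv₂0⟩ := Set.mem_iUnion₂.1 hpL₂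
    have hKL₂ : K ⊆ ⋃ v ∈ V₂, convexHull ℝ (K ∪ {v}) :=
      fun x hx => Set.mem_biUnion hv₂0 (K_subset_khat K v₂0 hx)
    have hintK₂ : interior K ⊆ interior (⋃ v ∈ V₂, convexHull ℝ (K ∪ {v})) :=
      interior_mono hKL₂
    suffices hsuff : ∃ q ∈ frontier (⋃ v ∈ V₁, convexHull ℝ (K ∪ {v})),
        ∀ u, Illuminates (⋃ v ∈ V₁, convexHull ℝ (K ∪ {v})) u q →
          Illuminates (⋃ v ∈ V₂, convexHull ℝ (K ∪ {v})) u p by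
      obtain ⟨q, hq, htrans⟩ := hsuff
      refine le_trans (hU'.2 q hq) ?_
      rw [Multiset.countP_eq_card_filter, Multiset.countP_eq_card_filter]
      exact Multiset.card_le_card (Multiset.monotone_filter_right _ (fun u hu => htrans u hu))
    have apexcase : ∀ v₁ ∈ V₁,
        (∃ a : ℝ, ∃ k ∈ K, 0 < a ∧ a ≤ 1 ∧ p = a • v₁ + (1 - a) • k) →
        ∃ q ∈ frontier (⋃ v ∈ V₁, convexHull ℝ (K ∪ {v})),
          ∀ u, Illuminates (⋃ v ∈ V₁, convexHull ℝ (K ∪ {v})) u q →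
            Illuminates (⋃ v ∈ V₂, convexHull ℝ (K ∪ {v})) u p := by
      rintro v₁ hv₁ ⟨a, k, hk, ha, ha1, hrep⟩
      refine ⟨v₁, apex_frontier hKne hKconv hKc hV₁K hseg₁ hv₁, fun u hIl => ?_⟩
      obtain ⟨μ, hμ, hint⟩ := apex_into_K hKconv hKint' hV₁K hseg₁ hv₁ hIl
      obtain ⟨l, hl, hmem⟩ := into_K_of_apex_combo hKconv ha ha1 hk hrep hμ hint
      exact ⟨l, hl, hintK₂ hmem⟩
    by_cases hpK : p ∈ K
    · have hpnintK : p ∉ interior K := fun h => hpnint₂ (hintK₂ h)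
      by_cases hBi : ∃ v₁ ∈ V₁, p ∈ interior (convexHull ℝ (K ∪ {v₁}))
      · obtain ⟨v₁, hv₁, hpint⟩ := hBi
        obtain ⟨a, k, hk, ha, ha1, hrep⟩ := rep_of_mem_interior_khat hKne hKconv hpint
        exact apexcase v₁ hv₁ ⟨a, k, hk, ha, ha1, hrep⟩
      · push_neg at hBi
        by_cases hB2a : ∃ v₁ ∈ V₁, p ∈ closure (convexHull ℝ (K ∪ {v₁}) \ K)
        · obtain ⟨v₁, hv₁, hpcl⟩ := hB2a
          have hpfrK : p ∈ frontier K := by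
            rw [hKc.isClosed.frontier_eq]; exact ⟨hpK, hpnintK⟩
          have hpf1 : p ∈ frontier (convexHull ℝ (K ∪ {v₁})) := by
            rw [(isCompact_khat hKne hKconv hKc v₁).isClosed.frontier_eq]
            exact ⟨K_subset_khat K v₁ hpK, hBi v₁ hv₁⟩
          have hpf2 : p ∈ frontier (convexHull ℝ (K ∪ {v₁}) \ K) :=
            ⟨hpcl, fun hc => (interior_subset hc).2 hpK⟩
          obtain ⟨w₀, hw₀, huniq⟩ := hsmooth v₁ hv₁ p ⟨⟨hpfrK, hpf1⟩, hpf2⟩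
          have huniq' : ∀ w : EuclideanSpace ℝ (Fin d),
              (‖w‖ = 1 ∧ ∀ x ∈ K, ⟪x, w⟫ ≤ ⟪p, w⟫) → w = w₀ := huniq
          have hineq := rim_ineq hKne hKconv hKint' hpK hpnintK hw₀.1 hw₀.2 huniq'
            (hV₁K v₁ hv₁) hpcl
          refine ⟨v₁, apex_frontier hKne hKconv hKc hV₁K hseg₁ hv₁, fun u hIl => ?_⟩
          obtain ⟨μ, hμ, hxint⟩ := apex_into_K hKconv hKint' hV₁K hseg₁ hv₁ hIl
          have hxlt : ⟪v₁ + μ • u, w₀⟫ < ⟪p, w₀⟫ := interior_lt_inner hw₀.1 hw₀.2 hxint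
          have huw : ⟪u, w₀⟫ < 0 := by
            rw [inner_add_left, real_inner_smul_left] at hxlt
            by_contra hge
            push_neg at hge
            nlinarith [mul_nonneg hμ.le hge]
          obtain ⟨l, hl, hmem⟩ := smooth_illum hKconv hKint' hpK hpnintK huniq' huw
          exact ⟨l, hl, hintK₂ hmem⟩
        · push_neg at hB2a
          refine ⟨p, ?_, fun u hIl => ?_⟩
          · have hnint : p ∉ interior (⋃ v ∈ V₁, convexHull ℝ (K ∪ {v})) := by
              intro hcont
              have hAclosed : IsClosed (⋃ v ∈ V₁, closure (convexHull ℝ (K ∪ {v}) \ K)) :=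
                hV₁fin.isClosed_biUnion (fun v _ => isClosed_closure)
              have hpA : p ∉ ⋃ v ∈ V₁, closure (convexHull ℝ (K ∪ {v}) \ K) := by
                rw [Set.mem_iUnion₂]
                rintro ⟨v, hv, hvc⟩
                exact hB2a v hv hvc
              obtain ⟨r₁, hr₁, hball₁⟩ := Metric.isOpen_iff.1 hAclosed.isOpen_compl p hpA
              obtain ⟨r₂, hr₂, hball₂⟩ := Metric.isOpen_iff.1 isOpen_interior p hcont
              have hsubK : Metric.ball p (min r₁ r₂) ⊆ K := by
                intro x hx
                have hx1 : x ∈ Metric.ball p r₁ := Metric.ball_subset_ball (min_le_left _ _) hx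
                have hx2 : x ∈ Metric.ball p r₂ := Metric.ball_subset_ball (min_le_right _ _) hx
                have hxL₁ : x ∈ ⋃ v ∈ V₁, convexHull ℝ (K ∪ {v}) :=
                  interior_subset (hball₂ hx2)
                obtain ⟨v, hv, hxv⟩ := Set.mem_iUnion₂.1 hxL₁
                by_contra hxK
                have hmem2 : x ∈ closure (convexHull ℝ (K ∪ {v}) \ K) :=
                  subset_closure ⟨hxv, hxK⟩
                exact (hball₁ hx1) (Set.mem_biUnion hv hmem2)
              exact hpnintK (mem_interior.2 ⟨Metric.ball p (min r₁ r₂), hsubK,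
                Metric.isOpen_ball, Metric.mem_ball_self (lt_min hr₁ hr₂)⟩)
            exact ⟨subset_closure hpL₁, hnint⟩
          · by_contra hnIl
            have hray : ∀ μ : ℝ, 0 ≤ μ → p + μ • u ∉ interior K := by
              intro μ hμ hmem
              rcases eq_or_lt_of_le hμ with h | h
              · rw [← h, zero_smul, add_zero] at hmem
                exact hpnintK hmem
              · exact hnIl ⟨μ, h, hintK₂ hmem⟩
            obtain ⟨f, hfne, hfK, hfu⟩ := ray_sep hKconv hKint' hray
            have hVle : ∀ v ∈ V₁, f v ≤ f p := by
              intro v hv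
              by_contra hgt
              push_neg at hgt
              apply hB2a v hv
              rw [Metric.mem_closure_iff]
              intro ε hε
              set t : ℝ := min 1 (ε / (2 * (‖v - p‖ + 1))) with htdef
              have htpos : 0 < t := lt_min one_pos (by positivity)
              have ht1 : t ≤ 1 := min_le_left _ _
              refine ⟨(1 - t) • p + t • v, ⟨?_, ?_⟩, ?_⟩
              · exact (convex_convexHull ℝ (K ∪ {v})) (K_subset_khat K v hpK)
                  (apex_mem_khat K v) (by linarith) htpos.le (by ring)
              · intro hmem
                have hle2 := hfK _ hmem
                rw [map_add, map_smul, map_smul, smul_eq_mul, smul_eq_mul] at hle2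
                nlinarith [mul_lt_mul_of_pos_left hgt htpos]
              · rw [dist_eq_norm]
                have heq3 : p - ((1 - t) • p + t • v) = t • (p - v) := by module
                rw [heq3, norm_smul, Real.norm_eq_abs, abs_of_pos htpos]
                have hb3 : t * ‖p - v‖ ≤ t * (‖v - p‖ + 1) := by
                  apply mul_le_mul_of_nonneg_left _ htpos.le
                  rw [norm_sub_rev]
                  linarith
                have hc3 : t * (‖v - p‖ + 1) ≤ ε / 2 := by
                  have hmin := min_le_right (1:ℝ) (ε / (2 * (‖v - p‖ + 1)))
                  calc t * (‖v - p‖ + 1) ≤ (ε / (2 * (‖v - p‖ + 1))) * (‖v - p‖ + 1) :=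
                        mul_le_mul_of_nonneg_right (htdef ▸ hmin) (by positivity)
                    _ = ε / 2 := by field_simp
                linarith
            have hle : ∀ x ∈ ⋃ v ∈ V₁, convexHull ℝ (K ∪ {v}), f x ≤ f p := by
              intro x hx
              obtain ⟨v', hv', hx'⟩ := Set.mem_iUnion₂.1 hx
              exact khat_le hfK (hVle v' hv') x hx'
            obtain ⟨l, hl, hmem⟩ := hIl
            have hge : f p ≤ f (p + l • u) := by
              rw [map_add, map_smul, smul_eq_mul]
              nlinarith [mul_nonneg hl.le hfu]
            exact not_mem_interior_of_sup hfne hle hge hmem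
    · obtain ⟨a, b, k, hk, ha, hb, hab, hpeq⟩ := (mem_khat_iff hKne hKconv).1 hpv₂0
      have hapos : 0 < a := by
        rcases lt_or_eq_of_le ha with h | h
        · exact h
        · exfalso
          apply hpK
          rw [← hpeq, ← h, zero_smul, zero_add, show b = 1 by linarith, one_smul]
          exact hk
      have hv₂L₁ : v₂0 ∈ ⋃ v ∈ V₁, convexHull ℝ (K ∪ {v}) :=
        hsub (Set.mem_biUnion hv₂0 (apex_mem_khat K v₂0))
      obtain ⟨v₁, hv₁, hv₂v₁⟩ := Set.mem_iUnion₂.1 hv₂L₁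
      obtain ⟨a', b', y, hy, ha', hb', hab', hveq⟩ := (mem_khat_iff hKne hKconv).1 hv₂v₁
      have ha'pos : 0 < a' := by
        rcases lt_or_eq_of_le ha' with h | h
        · exact h
        · exfalso
          apply hV₂K v₂0 hv₂0
          rw [← hveq, ← h, zero_smul, zero_add, show b' = 1 by linarith, one_smul]
          exact hy
      have ha1 : a ≤ 1 := by linarith
      have ha'1 : a' ≤ 1 := by linarith
      rcases eq_or_lt_of_le (show a * a' ≤ 1 by nlinarith) with hc1 | hc1
      · have haa : a = 1 := by nlinarith
        have haa' : a' = 1 := by nlinarith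
        apply apexcase v₁ hv₁
        obtain ⟨k0, hk0⟩ := hKne
        refine ⟨1, k0, hk0, one_pos, le_refl 1, ?_⟩
        have hb0 : b = 0 := by linarith
        have hb'0 : b' = 0 := by linarith
        have hp2 : p = v₂0 := by rw [← hpeq, haa, hb0]; simp
        have hv2 : v₂0 = v₁ := by rw [← hveq, haa', hb'0]; simp
        rw [hp2, hv2]
        simp
      · set c : ℝ := a * a' with hc
        have hcpos : 0 < c := mul_pos hapos ha'pos
        have h1c : (0:ℝ) < 1 - c := by linarith
        set k' : EuclideanSpace ℝ (Fin d) :=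
          ((a * b') / (1 - c)) • y + (b / (1 - c)) • k with hk'
        have haby : a * b' = a * (1 - a') := by rw [show b' = 1 - a' by linarith]
        have hk'K : k' ∈ K := by
          apply hKconv hy hk (by positivity) (by positivity)
          field_simp
          rw [hc]
          nlinarith [haby]
        apply apexcase v₁ hv₁
        refine ⟨c, k', hk'K, hcpos, by linarith, ?_⟩
        have e1 : (1 - c) * ((a * b') / (1 - c)) = a * b' := by field_simp
        have e2 : (1 - c) * (b / (1 - c)) = b := by field_simp
        have h2 : (1 - c) • k' = (a * b') • y + b • k := by
          rw [hk', smul_add, smul_smul, smul_smul, e1, e2]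
        rw [show c • v₁ + (1 - c) • k' = c • v₁ + ((a * b') • y + b • k) from by rw [h2]]
        rw [← hpeq, ← hveq, hc]
        module
  refine ⟨main U hU, ?_⟩
  unfold illumNum
  have hS₁ne : {n | ∃ U' : Multiset (EuclideanSpace ℝ (Fin d)),
      MFoldIlluminates m (⋃ v ∈ V₁, convexHull ℝ (K ∪ {v})) U' ∧ Multiset.card U' = n}.Nonempty :=
    ⟨Multiset.card U, U, hU, rfl⟩
  obtain ⟨U', hU', hcard⟩ := Nat.sInf_mem hS₁ne
  exact Nat.sInf_le ⟨U', main U' hU', hcard⟩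
end
end

section
/- For every positive integer m, the m-fold illumination number of the closed Euclidean unit ball B³ in ℝ³ satisfies I^m(B³) ≤ 2m + 1 + ⌈m/2⌉. -/
open scoped Classical RealInnerProductSpace

noncomputable section

namespace MFoldAux

abbrev E3 := EuclideanSpace ℝ (Fin 3)

def v3 (a b c : ℝ) : E3 := (WithLp.equiv 2 (Fin 3 → ℝ)).symm ![a, b, c]

lemma inner_v3 (a b c : ℝ) (p : E3) :
    ⟪v3 a b c, p⟫ = a * p 0 + b * p 1 + c * p 2 := by
  simp [v3, PiLp.inner_apply, RCLike.inner_apply, Fin.sum_univ_three,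
    WithLp.equiv_symm_apply]
  ring

lemma v3_ne_zero {a b c : ℝ} (h : c ≠ 0) : v3 a b c ≠ 0 := by
  intro hh
  apply h
  have h2 : v3 a b c 2 = (0 : E3) 2 := by rw [hh]
  simpa [v3, WithLp.equiv_symm_apply] using h2

lemma eq_zero_of_coords {p : E3} (h0 : p 0 = 0) (h1 : p 1 = 0) (h2 : p 2 = 0) :
    p = 0 := by
  ext i
  fin_cases i <;> simpa

def nv (w : E3) : E3 := ‖w‖⁻¹ • w

lemma nv_norm {w : E3} (h : w ≠ 0) : ‖nv w‖ = 1 := by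
  rw [nv, norm_smul]
  simp [norm_ne_zero_iff.2 h, inv_mul_cancel₀ (norm_ne_zero_iff.2 h)]

lemma inner_nv_neg {w : E3} (h : w ≠ 0) (p : E3) :
    ⟪nv w, p⟫ < 0 ↔ ⟪w, p⟫ < 0 := by
  have hw : (0:ℝ) < ‖w‖⁻¹ := inv_pos.2 (norm_pos_iff.2 h)
  rw [nv, real_inner_smul_left, mul_neg_iff]
  constructor
  · rintro (⟨-, h2⟩ | ⟨h1, -⟩)
    · exact h2
    · linarith
  · intro h2; exact Or.inl ⟨hw, h2⟩

/-- The illumination predicate in linear form. -/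
def Pneg (p : E3) : E3 → Prop := fun w => ⟪w, p⟫ < 0

instance (p : E3) : DecidablePred (Pneg p) := fun _ => Classical.propDecidable _

lemma Pneg_def (p w : E3) : Pneg p w ↔ ⟪w, p⟫ < 0 := Iff.rfl

/-! ### The cone lemmas for the basic 5-direction gadget -/

lemma coneA (x y u : ℝ) (h2 : ¬ -5*x+2*y+5*u < 0) (h3 : ¬ -3*x-4*y-5*u < 0)
    (h4 : ¬ 3*x-4*y-5*u < 0) (h5 : ¬ 5*x+2*y-5*u < 0) :
    (x = 0 ∧ y = 0 ∧ u = 0) ∨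
    (u < 0 ∧ 2*x - y ≤ 0 ∧ 7/125*(-3*x+4*y) ≤ -u ∧ -u ≤ 1/3*(-3*x+4*y)) := by
  replace h2 := le_of_not_gt h2; replace h3 := le_of_not_gt h3
  replace h4 := le_of_not_gt h4; replace h5 := le_of_not_gt h5
  have hu : u ≤ 0 := by linarith
  rcases hu.lt_or_eq with h0 | h0
  · exact .inr ⟨h0, by linarith, by linarith, by linarith⟩
  · exact .inl ⟨by linarith, by linarith, h0⟩

lemma coneB (x y u : ℝ) (h1 : ¬ y+u < 0) (h3 : ¬ -3*x-4*y-5*u < 0)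
    (h4 : ¬ 3*x-4*y-5*u < 0) (h5 : ¬ 5*x+2*y-5*u < 0) :
    (x = 0 ∧ y = 0 ∧ u = 0) ∨
    (u < 0 ∧ 2*x - y ≤ 0 ∧ 7/125*(-3*x+4*y) ≤ -u ∧ -u ≤ 1/3*(-3*x+4*y)) := by
  replace h1 := le_of_not_gt h1; replace h3 := le_of_not_gt h3
  replace h4 := le_of_not_gt h4; replace h5 := le_of_not_gt h5
  have hu : u ≤ 0 := by linarith
  rcases hu.lt_or_eq with h0 | h0
  · exact .inr ⟨h0, by linarith, by linarith, by linarith⟩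
  · exact .inl ⟨by linarith, by linarith, h0⟩

lemma coneD (x y u : ℝ) (h1 : ¬ y+u < 0) (h2 : ¬ -5*x+2*y+5*u < 0)
    (h3 : ¬ -3*x-4*y-5*u < 0) (h5 : ¬ 5*x+2*y-5*u < 0) :
    (x = 0 ∧ y = 0 ∧ u = 0) ∨
    (u < 0 ∧ 2*x - y ≤ 0 ∧ 7/125*(-3*x+4*y) ≤ -u ∧ -u ≤ 1/3*(-3*x+4*y)) := by
  replace h1 := le_of_not_gt h1; replace h2 := le_of_not_gt h2
  replace h3 := le_of_not_gt h3; replace h5 := le_of_not_gt h5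
  have hu : u ≤ 0 := by linarith
  rcases hu.lt_or_eq with h0 | h0
  · exact .inr ⟨h0, by linarith, by linarith, by linarith⟩
  · exact .inl ⟨by linarith, by linarith, h0⟩

lemma coneC (x y u : ℝ) (h1 : ¬ y+u < 0) (h2 : ¬ -5*x+2*y+5*u < 0)
    (h4 : ¬ 3*x-4*y-5*u < 0) (h5 : ¬ 5*x+2*y-5*u < 0) :
    x = 0 ∧ y = 0 ∧ u = 0 := by
  replace h1 := le_of_not_gt h1; replace h2 := le_of_not_gt h2
  replace h4 := le_of_not_gt h4; replace h5 := le_of_not_gt h5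
  exact ⟨by linarith, by linarith, by linarith⟩

lemma coneE (x y u : ℝ) (h1 : ¬ y+u < 0) (h2 : ¬ -5*x+2*y+5*u < 0)
    (h3 : ¬ -3*x-4*y-5*u < 0) (h4 : ¬ 3*x-4*y-5*u < 0) :
    x = 0 ∧ y = 0 ∧ u = 0 := by
  replace h1 := le_of_not_gt h1; replace h2 := le_of_not_gt h2
  replace h3 := le_of_not_gt h3; replace h4 := le_of_not_gt h4
  exact ⟨by linarith, by linarith, by linarith⟩

lemma real_main (x y u : ℝ) (hne : ¬ (x = 0 ∧ y = 0 ∧ u = 0)) :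
    (2 ≤ (if y+u < 0 then 1 else 0) + ((if -5*x+2*y+5*u < 0 then 1 else 0) +
      ((if -3*x-4*y-5*u < 0 then 1 else 0) + ((if 3*x-4*y-5*u < 0 then 1 else 0) +
      (if 5*x+2*y-5*u < 0 then (1:ℕ) else 0))))) ∨
    ((1 ≤ (if y+u < 0 then 1 else 0) + ((if -5*x+2*y+5*u < 0 then 1 else 0) +
      ((if -3*x-4*y-5*u < 0 then 1 else 0) + ((if 3*x-4*y-5*u < 0 then 1 else 0) +
      (if 5*x+2*y-5*u < 0 then (1:ℕ) else 0))))) ∧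
      (u < 0 ∧ 2*x - y ≤ 0 ∧ 7/125*(-3*x+4*y) ≤ -u ∧ -u ≤ 1/3*(-3*x+4*y))) := by
  by_cases h1 : y+u < 0 <;> by_cases h2 : -5*x+2*y+5*u < 0 <;>
    by_cases h3 : -3*x-4*y-5*u < 0 <;> by_cases h4 : 3*x-4*y-5*u < 0 <;>
    by_cases h5 : 5*x+2*y-5*u < 0 <;>
    simp only [h1, h2, h3, h4, h5, if_true, if_false] <;>
    first
      | (left; norm_num; done)
      | (exact absurd (coneC x y u h1 h2 h4 h5) hne)
      | (exact absurd (coneE x y u h1 h2 h3 h4) hne)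
      | (exact .inr ⟨by norm_num, (coneA x y u h2 h3 h4 h5).resolve_left hne⟩)
      | (exact .inr ⟨by norm_num, (coneB x y u h1 h3 h4 h5).resolve_left hne⟩)
      | (exact .inr ⟨by norm_num, (coneD x y u h1 h2 h3 h5).resolve_left hne⟩)

/-! ### Multiset counting helpers -/

lemma countP_quint {α : Type*} (P : α → Prop) [DecidablePred P] (a b c d e : α) :
    Multiset.countP P {a, b, c, d, e} =
      (if P a then 1 else 0) + ((if P b then 1 else 0) + ((if P c then 1 else 0) +
        ((if P d then 1 else 0) + (if P e then 1 else 0)))) := by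
  simp only [Multiset.insert_eq_cons, ← Multiset.cons_zero, Multiset.countP_cons,
    Multiset.countP_zero]
  ring

lemma countP_quad {α : Type*} (P : α → Prop) [DecidablePred P] (a b c d : α) :
    Multiset.countP P {a, b, c, d} =
      (if P a then 1 else 0) + ((if P b then 1 else 0) + ((if P c then 1 else 0) +
        (if P d then 1 else 0))) := by
  simp only [Multiset.insert_eq_cons, ← Multiset.cons_zero, Multiset.countP_cons,
    Multiset.countP_zero]
  ring

lemma countP_mono {α : Type*} (P Q : α → Prop) [DecidablePred P] [DecidablePred Q]
    (s : Multiset α) (h : ∀ a ∈ s, P a → Q a) :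
    Multiset.countP P s ≤ Multiset.countP Q s := by
  induction s using Multiset.induction with
  | empty => simp
  | cons a s ih =>
    have ih' := ih (fun b hb => h b (Multiset.mem_cons_of_mem hb))
    rw [Multiset.countP_cons, Multiset.countP_cons]
    by_cases hP : P a
    · have hQ := h a (Multiset.mem_cons_self a s) hP
      simp only [hP, hQ, if_true]
      omega
    · simp only [hP, if_false]
      split_ifs <;> omega

lemma countP_finsum {α β : Type*} (P : α → Prop) [DecidablePred P]
    (s : Finset β) (f : β → Multiset α) :
    Multiset.countP P (∑ b ∈ s, f b) = ∑ b ∈ s, Multiset.countP P (f b) := by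
  induction s using Finset.cons_induction with
  | empty => simp
  | cons a s ha ih => rw [Finset.sum_cons, Finset.sum_cons, Multiset.countP_add, ih]

lemma card_finsum {α β : Type*} (s : Finset β) (f : β → Multiset α) :
    Multiset.card (∑ b ∈ s, f b) = ∑ b ∈ s, Multiset.card (f b) := by
  induction s using Finset.cons_induction with
  | empty => simp
  | cons a s ha ih => rw [Finset.sum_cons, Finset.sum_cons, Multiset.card_add, ih]

/-! ### The gadget -/

def Bad (δ : ℝ) (p : E3) : Prop :=
  p 2 < 0 ∧ 2*(p 0) - p 1 ≤ 0 ∧ 7/125*(-3*(p 0)+4*(p 1)) ≤ -(δ*(p 2)) ∧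
    -(δ*(p 2)) ≤ 1/3*(-3*(p 0)+4*(p 1))

def gad (δ : ℝ) : Multiset E3 :=
  {nv (v3 0 1 δ), nv (v3 (-5) 2 (5*δ)), nv (v3 (-3) (-4) (-(5*δ))),
   nv (v3 3 (-4) (-(5*δ))), nv (v3 5 2 (-(5*δ)))}

lemma gad_card (δ : ℝ) : Multiset.card (gad δ) = 5 := by simp [gad]

lemma gad_norm {δ : ℝ} (hδ : 0 < δ) : ∀ w ∈ gad δ, ‖w‖ = 1 := by
  have h1 : δ ≠ 0 := ne_of_gt hδ
  have h2 : (5:ℝ)*δ ≠ 0 := mul_ne_zero (by norm_num) h1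
  have h3 : -((5:ℝ)*δ) ≠ 0 := neg_ne_zero.2 h2
  intro w hw
  simp only [gad, Multiset.insert_eq_cons, Multiset.mem_cons, Multiset.mem_singleton] at hw
  rcases hw with rfl | rfl | rfl | rfl | rfl
  · exact nv_norm (v3_ne_zero h1)
  · exact nv_norm (v3_ne_zero h2)
  · exact nv_norm (v3_ne_zero h3)
  · exact nv_norm (v3_ne_zero h3)
  · exact nv_norm (v3_ne_zero h3)

lemma gad_count (δ : ℝ) (hδ : 0 < δ) (p : E3) (hp : p ≠ 0) :
    2 ≤ (gad δ).countP (Pneg p) ∨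
    (1 ≤ (gad δ).countP (Pneg p) ∧ Bad δ p) := by
  have h1 : δ ≠ 0 := ne_of_gt hδ
  have h2 : (5:ℝ)*δ ≠ 0 := mul_ne_zero (by norm_num) h1
  have h3 : -((5:ℝ)*δ) ≠ 0 := neg_ne_zero.2 h2
  have i1 : (⟪nv (v3 0 1 δ), p⟫ < 0) ↔ (p 1 + δ*(p 2) < 0) := by
    rw [inner_nv_neg (v3_ne_zero h1), inner_v3]
    constructor <;> intro <;> linarith
  have i2 : (⟪nv (v3 (-5) 2 (5*δ)), p⟫ < 0) ↔
      (-5*(p 0)+2*(p 1)+5*(δ*(p 2)) < 0) := by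
    rw [inner_nv_neg (v3_ne_zero h2), inner_v3]
    constructor <;> intro <;> nlinarith [sq_nonneg δ]
  have i3 : (⟪nv (v3 (-3) (-4) (-(5*δ))), p⟫ < 0) ↔
      (-3*(p 0)-4*(p 1)-5*(δ*(p 2)) < 0) := by
    rw [inner_nv_neg (v3_ne_zero h3), inner_v3]
    constructor <;> intro <;> nlinarith [sq_nonneg δ]
  have i4 : (⟪nv (v3 3 (-4) (-(5*δ))), p⟫ < 0) ↔
      (3*(p 0)-4*(p 1)-5*(δ*(p 2)) < 0) := by
    rw [inner_nv_neg (v3_ne_zero h3), inner_v3]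
    constructor <;> intro <;> nlinarith [sq_nonneg δ]
  have i5 : (⟪nv (v3 5 2 (-(5*δ))), p⟫ < 0) ↔
      (5*(p 0)+2*(p 1)-5*(δ*(p 2)) < 0) := by
    rw [inner_nv_neg (v3_ne_zero h3), inner_v3]
    constructor <;> intro <;> nlinarith [sq_nonneg δ]
  have hcnt : (gad δ).countP (Pneg p) =
      (if p 1 + δ*(p 2) < 0 then 1 else 0) +
      ((if -5*(p 0)+2*(p 1)+5*(δ*(p 2)) < 0 then 1 else 0) +
      ((if -3*(p 0)-4*(p 1)-5*(δ*(p 2)) < 0 then 1 else 0) +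
      ((if 3*(p 0)-4*(p 1)-5*(δ*(p 2)) < 0 then 1 else 0) +
      (if 5*(p 0)+2*(p 1)-5*(δ*(p 2)) < 0 then (1:ℕ) else 0)))) := by
    rw [gad, countP_quint]
    simp only [Pneg_def, i1, i2, i3, i4, i5]
  have hne : ¬ ((p 0) = 0 ∧ (p 1) = 0 ∧ δ*(p 2) = 0) := by
    rintro ⟨a, b, c⟩
    refine hp (eq_zero_of_coords a b ?_)
    rcases mul_eq_zero.1 c with h | h
    · exact absurd h h1
    · exact h
  rcases real_main (p 0) (p 1) (δ*(p 2)) hne with H | ⟨H1, H2, H3, H4, H5⟩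
  · left; rw [hcnt]; exact H
  · right
    have hz : p 2 < 0 := by
      by_contra h
      exact absurd (mul_nonneg hδ.le (le_of_not_gt h)) (not_le.2 H2)
    exact ⟨by rw [hcnt]; exact H1, hz, H3, H4, H5⟩

/-! ### The family of gadgets -/

def fam (n : ℕ) : ℝ := (1/8 : ℝ)^n

lemma fam_pos (n : ℕ) : 0 < fam n := by rw [fam]; positivity

lemma fam_lt {n k : ℕ} (h : n < k) : 6 * fam k < fam n := by
  have h1 : fam k ≤ fam (n+1) := by
    apply pow_le_pow_of_le_one (by norm_num) (by norm_num) h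
  have h2 : fam (n+1) = (1/8) * fam n := by rw [fam, fam, pow_succ]; ring
  have h3 := fam_pos n
  nlinarith

lemma bad_unique {p : E3} {n k : ℕ} (hn : Bad (fam n) p) (hk : Bad (fam k) p) :
    n = k := by
  rcases hn with ⟨hz, -, hn1, hn2⟩
  rcases hk with ⟨-, -, hk1, hk2⟩
  by_contra hne
  have hzpos : 0 < -(p 2) := by linarith
  rcases lt_or_gt_of_ne hne with h | h
  · have hlt := fam_lt h
    nlinarith [mul_pos (fam_pos k) hzpos, mul_pos (fam_pos n) hzpos]
  · have hlt := fam_lt h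
    nlinarith [mul_pos (fam_pos k) hzpos, mul_pos (fam_pos n) hzpos]

def rings (t : ℕ) : Multiset E3 := ∑ n ∈ Finset.range t, gad (fam n)

lemma rings_card (t : ℕ) : Multiset.card (rings t) = 5*t := by
  rw [rings, card_finsum]
  simp [gad_card, mul_comm]

lemma rings_norm (t : ℕ) : ∀ w ∈ rings t, ‖w‖ = 1 := by
  intro w hw
  rw [rings] at hw
  obtain ⟨n, -, hn⟩ := Multiset.mem_sum.1 hw
  exact gad_norm (fam_pos n) w hn

lemma rings_count (t : ℕ) (p : E3) (hp : p ≠ 0) :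
    2*t ≤ (rings t).countP (Pneg p) ∨
    (2*t ≤ (rings t).countP (Pneg p) + 1 ∧ p 2 < 0 ∧
      2*(p 0) - p 1 ≤ 0) := by
  rw [rings, countP_finsum]
  by_cases hB : ∃ n ∈ Finset.range t, Bad (fam n) p
  · right
    obtain ⟨n₀, hn₀, hb⟩ := hB
    refine ⟨?_, hb.1, hb.2.1⟩
    have key : ∀ n ∈ (Finset.range t).erase n₀,
        2 ≤ (gad (fam n)).countP (Pneg p) := by
      intro n hn
      rcases gad_count (fam n) (fam_pos n) p hp with h | ⟨-, hbad⟩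
      · exact h
      · exact absurd (bad_unique hbad hb) (Finset.ne_of_mem_erase hn)
    have k0 : 1 ≤ (gad (fam n₀)).countP (Pneg p) := by
      rcases gad_count (fam n₀) (fam_pos n₀) p hp with h | ⟨h, -⟩
      · omega
      · exact h
    rw [← Finset.add_sum_erase _ _ hn₀]
    have hsum : ((Finset.range t).erase n₀).card * 2 ≤
        ∑ n ∈ (Finset.range t).erase n₀, (gad (fam n)).countP (Pneg p) := by
      calc ((Finset.range t).erase n₀).card * 2
          = ((Finset.range t).erase n₀).card • 2 := by rw [smul_eq_mul]
        _ ≤ _ := Finset.card_nsmul_le_sum _ _ _ key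
    have hcard : ((Finset.range t).erase n₀).card = t - 1 := by
      rw [Finset.card_erase_of_mem hn₀, Finset.card_range]
    have ht : 1 ≤ t := by
      have := Finset.mem_range.1 hn₀; omega
    omega
  · left
    push_neg at hB
    have key : ∀ n ∈ Finset.range t,
        2 ≤ (gad (fam n)).countP (Pneg p) := by
      intro n hn
      rcases gad_count (fam n) (fam_pos n) p hp with h | ⟨-, hbad⟩
      · exact h
      · exact absurd hbad (hB n hn)
    calc 2*t = (Finset.range t).card • 2 := by
          rw [smul_eq_mul, Finset.card_range, mul_comm]
      _ ≤ _ := Finset.card_nsmul_le_sum _ _ _ key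

/-! ### The core directions -/

def coreE : Multiset E3 := {nv (v3 0 0 1)}

def coreO : Multiset E3 :=
  {nv (v3 0 0 1), nv (v3 2 (-1) 1), nv (v3 (-1) 2 1), nv (v3 (-1) (-1) (-3))}

lemma coreE_norm : ∀ w ∈ coreE, ‖w‖ = 1 := by
  intro w hw
  simp only [coreE, Multiset.mem_singleton] at hw
  subst hw
  exact nv_norm (v3_ne_zero one_ne_zero)

lemma coreO_norm : ∀ w ∈ coreO, ‖w‖ = 1 := by
  intro w hw
  simp only [coreO, Multiset.insert_eq_cons, Multiset.mem_cons, Multiset.mem_singleton] at hw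
  rcases hw with rfl | rfl | rfl | rfl
  · exact nv_norm (v3_ne_zero one_ne_zero)
  · exact nv_norm (v3_ne_zero one_ne_zero)
  · exact nv_norm (v3_ne_zero one_ne_zero)
  · exact nv_norm (v3_ne_zero (by norm_num))

lemma coreE_count {p : E3} (hz : p 2 < 0) :
    1 ≤ coreE.countP (Pneg p) := by
  have hc : ⟪nv (v3 0 0 1), p⟫ < 0 := by
    rw [inner_nv_neg (v3_ne_zero one_ne_zero), inner_v3]
    linarith
  have : 0 < coreE.countP (Pneg p) :=
    Multiset.countP_pos.2 ⟨nv (v3 0 0 1), by simp [coreE], hc⟩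
  omega

lemma coreO_count1 {p : E3} (hp : p ≠ 0) :
    1 ≤ coreO.countP (Pneg p) := by
  have hsp : (0*(p 0) + 0*(p 1) + 1*(p 2) < 0) ∨ (2*(p 0) + (-1)*(p 1) + 1*(p 2) < 0) ∨
      ((-1)*(p 0) + 2*(p 1) + 1*(p 2) < 0) ∨ ((-1)*(p 0) + (-1)*(p 1) + (-3)*(p 2) < 0) := by
    by_contra hc
    push_neg at hc
    obtain ⟨a, b, c, d⟩ := hc
    exact hp (eq_zero_of_coords (by linarith) (by linarith) (by linarith))
  have hpos : 0 < coreO.countP (Pneg p) := by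
    rcases hsp with h | h | h | h
    · exact Multiset.countP_pos.2 ⟨nv (v3 0 0 1), by simp [coreO],
        (inner_nv_neg (v3_ne_zero one_ne_zero) p).2 (by rw [inner_v3]; linarith)⟩
    · exact Multiset.countP_pos.2 ⟨nv (v3 2 (-1) 1), by simp [coreO],
        (inner_nv_neg (v3_ne_zero one_ne_zero) p).2 (by rw [inner_v3]; linarith)⟩
    · exact Multiset.countP_pos.2 ⟨nv (v3 (-1) 2 1), by simp [coreO],
        (inner_nv_neg (v3_ne_zero one_ne_zero) p).2 (by rw [inner_v3]; linarith)⟩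
    · exact Multiset.countP_pos.2 ⟨nv (v3 (-1) (-1) (-3)), by simp [coreO],
        (inner_nv_neg (v3_ne_zero (by norm_num)) p).2 (by rw [inner_v3]; linarith)⟩
  omega

lemma coreO_count2 {p : E3} (hz : p 2 < 0) (hxy : 2*(p 0) - p 1 ≤ 0) :
    2 ≤ coreO.countP (Pneg p) := by
  have c1 : ⟪nv (v3 0 0 1), p⟫ < 0 := by
    rw [inner_nv_neg (v3_ne_zero one_ne_zero), inner_v3]
    linarith
  have c2 : ⟪nv (v3 2 (-1) 1), p⟫ < 0 := by
    rw [inner_nv_neg (v3_ne_zero one_ne_zero), inner_v3]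
    linarith
  rw [coreO, countP_quad]
  simp only [Pneg_def, c1, c2, if_true]
  split_ifs <;> omega

/-! ### Illumination of the unit ball -/

lemma illum_of_inner_neg {u p : E3} (hu : ‖u‖ = 1) (hp : ‖p‖ = 1)
    (h : ⟪u, p⟫ < 0) : Illuminates (Metric.closedBall (0:E3) 1) u p := by
  refine ⟨-⟪u, p⟫, by linarith, ?_⟩
  rw [interior_closedBall (0:E3) one_ne_zero, Metric.mem_ball, dist_zero_right]
  have hpu : ⟪p, u⟫ = ⟪u, p⟫ := (real_inner_comm p u).symm
  have hexp : ‖p + (-⟪u, p⟫) • u‖^2 = 1 - ⟪u, p⟫^2 := by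
    rw [norm_add_sq_real, real_inner_smul_right, hpu, norm_smul, hp, hu, mul_one,
      Real.norm_eq_abs]
    rw [show |(-⟪u, p⟫)|^2 = ⟪u, p⟫^2 by rw [sq_abs]; ring]
    ring
  nlinarith [hexp, h, norm_nonneg (p + (-⟪u, p⟫) • u)]

lemma ceil_half (m : ℕ) : ⌈(m : ℚ)/2⌉₊ = (m+1)/2 := by
  rcases Nat.even_or_odd m with ⟨t, rfl⟩ | ⟨t, rfl⟩
  · have h1 : ((t+t : ℕ) : ℚ)/2 = (t:ℚ) := by push_cast; ring
    rw [h1, Nat.ceil_natCast]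
    omega
  · have h1 : ⌈((2*t+1 : ℕ) : ℚ)/2⌉₊ = t+1 := by
      rw [Nat.ceil_eq_iff (by omega)]
      constructor
      · push_cast
        linarith
      · push_cast
        linarith
    rw [h1]
    omega

end MFoldAux

open MFoldAux in
/-- Lemma 13: `I^m(B³) ≤ 2m + 1 + ⌈m/2⌉`. -/
theorem mfold_illumination_ball_three_dim (m : ℕ) (hm : 1 ≤ m) :
    illumNum m (Metric.closedBall (0 : EuclideanSpace ℝ (Fin 3)) 1) ≤
      2 * m + 1 + ⌈(m : ℚ) / 2⌉₊ := by
  set U : Multiset E3 :=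
    (if m % 2 = 0 then coreE else coreO) + rings (m/2) with hU
  have hnorm : ∀ u ∈ U, ‖u‖ = 1 := by
    intro u hu
    rw [hU] at hu
    rcases Multiset.mem_add.1 hu with h | h
    · split_ifs at h
      · exact coreE_norm u h
      · exact coreO_norm u h
    · exact rings_norm _ u h
  apply Nat.sInf_le
  refine ⟨U, ⟨hnorm, ?_⟩, ?_⟩
  · intro p hpf
    rw [frontier_closedBall 0 one_ne_zero, mem_sphere_zero_iff_norm] at hpf
    have hp0 : p ≠ 0 := by
      intro h
      rw [h, norm_zero] at hpf
      norm_num at hpf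
    have hcount : m ≤ U.countP (Pneg p) := by
      rw [hU, Multiset.countP_add]
      rcases rings_count (m/2) p hp0 with h | ⟨h, hz, hxy⟩
      · by_cases hpar : m % 2 = 0
        · simp only [if_pos hpar]
          have h2 : m ≤ (rings (m/2)).countP (Pneg p) := by omega
          exact le_trans h2 (Nat.le_add_left _ _)
        · simp only [if_neg hpar]
          have h1 := coreO_count1 hp0
          have h2 : m ≤ 1 + (rings (m/2)).countP (Pneg p) := by omega
          exact le_trans h2 (Nat.add_le_add h1 le_rfl)
      · by_cases hpar : m % 2 = 0
        · simp only [if_pos hpar]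
          have h1 := coreE_count hz
          have h2 : m ≤ 1 + (rings (m/2)).countP (Pneg p) := by omega
          exact le_trans h2 (Nat.add_le_add h1 le_rfl)
        · simp only [if_neg hpar]
          have h1 := coreO_count2 hz hxy
          have h2 : m ≤ 2 + (rings (m/2)).countP (Pneg p) := by omega
          exact le_trans h2 (Nat.add_le_add h1 le_rfl)
    refine le_trans hcount (countP_mono _ _ _ ?_)
    intro w hw hwp
    exact illum_of_inner_neg (hnorm w hw) hpf ((Pneg_def p w).1 hwp)
  · rw [hU, Multiset.card_add, rings_card, ceil_half]
    by_cases hpar : m % 2 = 0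
    · simp only [if_pos hpar]
      have : Multiset.card coreE = 1 := by simp [coreE]
      omega
    · simp only [if_neg hpar]
      have : Multiset.card coreO = 4 := by simp [coreO]
      omega
end
end

section
/- For all positive integers m and d with d ≥ 2, the m-fold illumination numbers of Euclidean unit balls satisfy I^m(B^{d+1}) ≤ m + I^m(B^d). -/
open scoped Classical RealInnerProductSpace

noncomputable section

/- ### Auxiliary lemmas -/

lemma aux_norm_eq_one_of_sq {a : ℝ} (h0 : 0 ≤ a) (h : a ^ 2 = 1) : a = 1 := by
  nlinarith [sq_nonneg (a - 1), sq_nonneg (a + 1)]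

/-- A unit direction illuminates a boundary point of the unit ball iff the
inner product with the point is negative. -/
lemma illum_ball_iff {n : ℕ} {u p : EuclideanSpace ℝ (Fin n)} (hu : ‖u‖ = 1) (hp : ‖p‖ = 1) :
    Illuminates (Metric.closedBall 0 1) u p ↔ ⟪u, p⟫ < 0 := by
  constructor
  · rintro ⟨l, hl, hmem⟩
    rw [interior_closedBall _ one_ne_zero, Metric.mem_ball, dist_zero_right] at hmem
    have h2 : ‖p + l • u‖ ^ 2 < 1 := by nlinarith [norm_nonneg (p + l • u)]
    rw [norm_add_sq_real, real_inner_smul_right, norm_smul, hp, hu] at h2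
    have habs : (‖l‖ * 1) ^ 2 = l ^ 2 := by
      rw [mul_one, Real.norm_eq_abs, sq_abs]
    rw [real_inner_comm]
    nlinarith
  · intro h
    refine ⟨-⟪u, p⟫, by linarith, ?_⟩
    rw [interior_closedBall _ one_ne_zero, Metric.mem_ball, dist_zero_right]
    have h2 : ‖p + (-⟪u, p⟫) • u‖ ^ 2 = 1 - ⟪u, p⟫ ^ 2 := by
      rw [norm_add_sq_real, real_inner_smul_right, norm_smul, hp, hu, real_inner_comm p u,
        mul_one, Real.norm_eq_abs, sq_abs]
      ring
    nlinarith [norm_nonneg (p + (-⟪u, p⟫) • u)]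

/-- Multiset `countP` is monotone under pointwise implication on members. -/
lemma aux_countP_mono {α : Type*} {p q : α → Prop} [DecidablePred p] [DecidablePred q]
    (s : Multiset α) (h : ∀ a ∈ s, p a → q a) : s.countP p ≤ s.countP q := by
  have h1 : (s.filter p).filter q = s.filter p := by
    rw [Multiset.filter_eq_self]
    intro a ha
    rw [Multiset.mem_filter] at ha
    exact h a ha.1 ha.2
  calc s.countP p = Multiset.card (s.filter p) := Multiset.countP_eq_card_filter _ _
    _ = (s.filter p).countP q := by rw [Multiset.countP_eq_card_filter, h1]
    _ ≤ s.countP q := Multiset.countP_le_of_le _ (Multiset.filter_le _ _)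

lemma aux_countP_replicate {α : Type*} {p : α → Prop} [DecidablePred p] {a : α} (m : ℕ)
    (ha : p a) : (Multiset.replicate m a).countP p = m := by
  rw [Multiset.countP_eq_card_filter, Multiset.filter_eq_self.2, Multiset.card_replicate]
  intro b hb
  rwa [Multiset.eq_of_mem_replicate hb]

/-- Appending one coordinate to a Euclidean vector. -/
def liftv {n : ℕ} (x : EuclideanSpace ℝ (Fin n)) (t : ℝ) : EuclideanSpace ℝ (Fin (n + 1)) :=
  WithLp.toLp 2 (Fin.snoc (α := fun _ => ℝ) (WithLp.ofLp x) t)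

lemma inner_liftv {n : ℕ} (x : EuclideanSpace ℝ (Fin n)) (s : ℝ)
    (p : EuclideanSpace ℝ (Fin (n + 1))) :
    ⟪liftv x s, p⟫ = ⟪x, (WithLp.toLp 2 (fun i : Fin n => p i.castSucc) : EuclideanSpace ℝ (Fin n))⟫
      + s * p (Fin.last n) := by
  simp [liftv, PiLp.inner_apply, RCLike.inner_apply, Fin.sum_univ_castSucc, Fin.snoc_castSucc,
    Fin.snoc_last]
  ring

lemma norm_liftv_sq {n : ℕ} (x : EuclideanSpace ℝ (Fin n)) (s : ℝ) :
    ‖liftv x s‖ ^ 2 = ‖x‖ ^ 2 + s ^ 2 := by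
  rw [← real_inner_self_eq_norm_sq, ← real_inner_self_eq_norm_sq, inner_liftv]
  simp [liftv, Fin.snoc_castSucc, Fin.snoc_last]
  ring

lemma liftv_init {n : ℕ} (p : EuclideanSpace ℝ (Fin (n + 1))) :
    liftv (WithLp.toLp 2 (fun i : Fin n => p i.castSucc) : EuclideanSpace ℝ (Fin n)) (p (Fin.last n)) = p := by
  ext i
  refine Fin.lastCases ?_ (fun j => ?_) i <;> simp [liftv]

/-- The unit ball in dimension `n ≥ 1` admits *some* `m`-fold illuminating multiset. -/
lemma exists_mfold (m : ℕ) {n : ℕ} (hn : 1 ≤ n) :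
    ∃ U : Multiset (EuclideanSpace ℝ (Fin n)),
      MFoldIlluminates m (Metric.closedBall 0 1) U := by
  classical
  set e : Fin n → EuclideanSpace ℝ (Fin n) := fun i => EuclideanSpace.single i (1 : ℝ) with he
  refine ⟨∑ i : Fin n, (Multiset.replicate m (e i) + Multiset.replicate m (-(e i))), ?_, ?_⟩
  · intro u hu
    rw [Multiset.mem_sum] at hu
    obtain ⟨i, -, hu⟩ := hu
    rw [Multiset.mem_add] at hu
    rcases hu with hu | hu <;> rw [Multiset.eq_of_mem_replicate hu] <;>
      simp [he, EuclideanSpace.norm_single]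
  · intro p hp
    rw [frontier_closedBall _ one_ne_zero, mem_sphere_zero_iff_norm] at hp
    have hp0 : p ≠ 0 := by
      intro h
      rw [h] at hp
      simp at hp
    obtain ⟨i, hi⟩ : ∃ i, p i ≠ 0 := by
      by_contra h
      push_neg at h
      exact hp0 (by ext i; simpa using h i)
    set v : EuclideanSpace ℝ (Fin n) := if 0 < p i then -(e i) else e i with hv
    have hip : ⟪e i, p⟫ = p i := by
      simp [he, EuclideanSpace.inner_single_left]
    have hvnorm : ‖v‖ = 1 := by
      rw [hv]
      split <;> simp [he, EuclideanSpace.norm_single]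
    have hvinner : ⟪v, p⟫ < 0 := by
      rw [hv]
      split
      · rw [inner_neg_left, hip]
        linarith
      · rw [hip]
        rcases lt_or_eq_of_le (not_lt.1 (by assumption)) with h | h
        · exact h
        · exact absurd h hi
    have hIll : Illuminates (Metric.closedBall 0 1) v p := (illum_ball_iff hvnorm hp).2 hvinner
    have hle1 : Multiset.replicate m v ≤
        Multiset.replicate m (e i) + Multiset.replicate m (-(e i)) := by
      rw [hv]
      split
      · exact Multiset.le_add_left _ _
      · exact Multiset.le_add_right _ _
    have hle2 : Multiset.replicate m (e i) + Multiset.replicate m (-(e i)) ≤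
        ∑ j : Fin n, (Multiset.replicate m (e j) + Multiset.replicate m (-(e j))) :=
      Finset.single_le_sum (f := fun j => Multiset.replicate m (e j)
        + Multiset.replicate m (-(e j))) (fun j _ => zero_le) (Finset.mem_univ i)
    have h1 : Multiset.countP (fun u => Illuminates (Metric.closedBall 0 1) u p)
        (Multiset.replicate m v) = m :=
      aux_countP_replicate (p := fun u => Illuminates (Metric.closedBall 0 1) u p) m hIll
    exact le_trans (le_of_eq h1.symm) (Multiset.countP_le_of_le _ (le_trans hle1 hle2))

/-- Remark: the recursive bound `I^m(B^{d+1}) ≤ m + I^m(B^d)`. -/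
theorem mfold_illumination_ball_succ (m d : ℕ) (hm : 1 ≤ m) (hd : 2 ≤ d) :
    illumNum m (Metric.closedBall (0 : EuclideanSpace ℝ (Fin (d + 1))) 1) ≤
      m + illumNum m (Metric.closedBall (0 : EuclideanSpace ℝ (Fin d)) 1) := by
  classical
  set Kd : Set (EuclideanSpace ℝ (Fin d)) := Metric.closedBall 0 1 with hKd
  set Kd1 : Set (EuclideanSpace ℝ (Fin (d + 1))) := Metric.closedBall 0 1 with hKd1
  have hS : {n | ∃ U : Multiset (EuclideanSpace ℝ (Fin d)),
      MFoldIlluminates m Kd U ∧ Multiset.card U = n}.Nonempty := by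
    obtain ⟨U, hU⟩ := exists_mfold m (by omega : 1 ≤ d)
    exact ⟨Multiset.card U, U, hU, rfl⟩
  have hmem : illumNum m Kd ∈ {n | ∃ U : Multiset (EuclideanSpace ℝ (Fin d)),
      MFoldIlluminates m Kd U ∧ Multiset.card U = n} := Nat.sInf_mem hS
  obtain ⟨U, hU, hcard⟩ := hmem
  -- lifted directions
  set w : EuclideanSpace ℝ (Fin d) → EuclideanSpace ℝ (Fin (d + 1)) :=
    fun u => liftv ((3 / 5 : ℝ) • u) (4 / 5) with hw
  set ev : EuclideanSpace ℝ (Fin (d + 1)) := liftv (0 : EuclideanSpace ℝ (Fin d)) (-1) with hev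
  have hevnorm : ‖ev‖ = 1 := by
    apply aux_norm_eq_one_of_sq (norm_nonneg _)
    rw [hev, norm_liftv_sq]
    norm_num
  have hwnorm : ∀ u : EuclideanSpace ℝ (Fin d), ‖u‖ = 1 → ‖w u‖ = 1 := by
    intro u hu
    apply aux_norm_eq_one_of_sq (norm_nonneg _)
    rw [hw, norm_liftv_sq, norm_smul, hu, Real.norm_eq_abs]
    norm_num
  set V : Multiset (EuclideanSpace ℝ (Fin (d + 1))) :=
    Multiset.replicate m ev + U.map w with hV
  apply Nat.sInf_le
  refine ⟨V, ⟨?_, ?_⟩, ?_⟩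
  · intro v hv
    rw [hV, Multiset.mem_add] at hv
    rcases hv with hv | hv
    · rwa [Multiset.eq_of_mem_replicate hv]
    · rw [Multiset.mem_map] at hv
      obtain ⟨u, hu, rfl⟩ := hv
      exact hwnorm u (hU.1 u hu)
  · intro p hp
    rw [hKd1, frontier_closedBall _ one_ne_zero, mem_sphere_zero_iff_norm] at hp
    set t : ℝ := p (Fin.last d) with htdef
    set q : EuclideanSpace ℝ (Fin d) := (WithLp.toLp 2 (fun i : Fin d => p i.castSucc)) with hqdef
    have hqt : ‖q‖ ^ 2 + t ^ 2 = 1 := by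
      have := norm_liftv_sq q t
      rw [liftv_init p, hp] at this
      linarith [this]
    have hinner_ev : ⟪ev, p⟫ = -t := by
      rw [hev, inner_liftv, inner_zero_left]
      ring
    have hinner_w : ∀ u : EuclideanSpace ℝ (Fin d),
        ⟪w u, p⟫ = (3 / 5) * ⟪u, q⟫ + (4 / 5) * t := by
      intro u
      rw [hw, inner_liftv, real_inner_smul_left]
    by_cases ht : 0 < t
    · -- the `m` copies of `ev` illuminate
      have hIll : Illuminates Kd1 ev p := by
        rw [hKd1, illum_ball_iff hevnorm hp, hinner_ev]
        linarith
      have h1 : Multiset.countP (fun u => Illuminates Kd1 u p) (Multiset.replicate m ev) = m :=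
        aux_countP_replicate (p := fun u => Illuminates Kd1 u p) m hIll
      exact le_trans (le_of_eq h1.symm)
        (Multiset.countP_le_of_le _ (by rw [hV]; exact Multiset.le_add_right _ _))
    · push_neg at ht
      by_cases hq : q = 0
      · -- south pole: every lifted direction illuminates
        have htneg : t < 0 := by
          rcases lt_or_eq_of_le ht with h | h
          · exact h
          · exfalso
            rw [hq, norm_zero, h] at hqt
            norm_num at hqt
        have hall : ∀ v ∈ U.map w, Illuminates Kd1 v p := by
          intro v hv
          rw [Multiset.mem_map] at hv
          obtain ⟨u, hu, rfl⟩ := hv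
          rw [hKd1, illum_ball_iff (hwnorm u (hU.1 u hu)) hp, hinner_w, hq,
            inner_zero_right]
          linarith
        have hmU : m ≤ Multiset.card U := by
          have h0d : (0 : ℕ) < d := by omega
          set p0 : EuclideanSpace ℝ (Fin d) := EuclideanSpace.single ⟨0, h0d⟩ (1 : ℝ) with hp0
          have hp0f : p0 ∈ frontier Kd := by
            rw [hKd, frontier_closedBall _ one_ne_zero, mem_sphere_zero_iff_norm, hp0,
              EuclideanSpace.norm_single]
            norm_num
          calc m ≤ U.countP (fun u => Illuminates Kd u p0) := hU.2 p0 hp0f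
            _ ≤ Multiset.card U := Multiset.countP_le_card _ _
        have hcount : (U.map w).countP (fun v => Illuminates Kd1 v p) =
            Multiset.card (U.map w) := by
          rw [Multiset.countP_eq_card_filter, Multiset.filter_eq_self.2 hall]
        calc m ≤ Multiset.card U := hmU
          _ = (U.map w).countP (fun v => Illuminates Kd1 v p) := by
              rw [hcount, Multiset.card_map]
          _ ≤ V.countP (fun u => Illuminates Kd1 u p) :=
            Multiset.countP_le_of_le _ (by rw [hV]; exact Multiset.le_add_left _ _)
      · -- generic point: use the inductive illuminating set
        set q1 : EuclideanSpace ℝ (Fin d) := (‖q‖⁻¹ : ℝ) • q with hq1def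
        have hq1 : ‖q1‖ = 1 := norm_smul_inv_norm hq
        have hfr : q1 ∈ frontier Kd := by
          rw [hKd, frontier_closedBall _ one_ne_zero]
          exact mem_sphere_zero_iff_norm.2 hq1
        have hcount := hU.2 q1 hfr
        have hmono : U.countP (fun u => Illuminates Kd u q1) ≤
            U.countP (fun u => Illuminates Kd1 (w u) p) := by
          apply aux_countP_mono
          intro u hu hIll
          have hun : ‖u‖ = 1 := hU.1 u hu
          rw [hKd, illum_ball_iff hun hq1] at hIll
          have hq1inner : ⟪u, q1⟫ = ‖q‖⁻¹ * ⟪u, q⟫ := by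
            rw [hq1def, real_inner_smul_right]
          have hqn : 0 < ‖q‖ := norm_pos_iff.2 hq
          have huq : ⟪u, q⟫ < 0 := by
            rw [hq1inner] at hIll
            nlinarith [inv_pos.2 hqn]
          rw [hKd1, illum_ball_iff (hwnorm u hun) hp, hinner_w]
          nlinarith
        have hmap : (U.map w).countP (fun v => Illuminates Kd1 v p) =
            U.countP (fun u => Illuminates Kd1 (w u) p) := by
          rw [Multiset.countP_map, Multiset.countP_eq_card_filter]
        calc m ≤ U.countP (fun u => Illuminates Kd u q1) := hcount
          _ ≤ (U.map w).countP (fun v => Illuminates Kd1 v p) := by rw [hmap]; exact hmono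
          _ ≤ V.countP (fun u => Illuminates Kd1 u p) :=
            Multiset.countP_le_of_le _ (by rw [hV]; exact Multiset.le_add_left _ _)
  · rw [hV, Multiset.card_add, Multiset.card_replicate, Multiset.card_map, hcard]
end
end
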